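/- arXiv:1012.3738 — 4 statements merged into one kernel-verified Lean document; each statement's English description precedes it below -/
import Mathlib

section
/- The nonabelian tensor square of the quaternion group Q8 is isomorphic to C2 × C2 × C4 × C4. -/
/-- Relator set for the nonabelian tensor square of `G`. -/
def tensorRels (G : Type*) [Group G] : Set (FreeGroup (G × G)) :=
  {x | (∃ g g' h : G, x = FreeGroup.of (g * g', h) *
        (FreeGroup.of (g * g' * g⁻¹, g * h * g⁻¹) * FreeGroup.of (g, h))⁻¹) ∨
       (∃ g h h' : G, x = FreeGroup.of (g, h * h') *
        (FreeGroup.of (g, h) * FreeGroup.of (h * g * h⁻¹, h * h' * h⁻¹))⁻¹)}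

/-- The nonabelian tensor square `G ⊗ G`. -/
abbrev TensorSquare (G : Type*) [Group G] :=
  FreeGroup (G × G) ⧸ Subgroup.normalClosure (tensorRels G)

/-- The generator `g ⊗ h` of the nonabelian tensor square. -/
def tElem {G : Type*} [Group G] (g h : G) : TensorSquare G :=
  QuotientGroup.mk (FreeGroup.of (g, h))

namespace TSQ8

variable {G : Type*} [Group G]

lemma mk_rel {x : FreeGroup (G × G)} (hx : x ∈ tensorRels G) :
    (QuotientGroup.mk x : TensorSquare G) = 1 :=
  (QuotientGroup.eq_one_iff x).mpr (Subgroup.subset_normalClosure hx)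

lemma rel1 (g g' h : G) :
    tElem (g * g') h = tElem (g * g' * g⁻¹) (g * h * g⁻¹) * tElem g h := by
  have h1 := mk_rel (G := G) (Or.inl ⟨g, g', h, rfl⟩)
  rw [QuotientGroup.mk_mul, QuotientGroup.mk_inv, QuotientGroup.mk_mul,
    mul_inv_eq_one] at h1
  exact h1

lemma rel2 (g h h' : G) :
    tElem g (h * h') = tElem g h * tElem (h * g * h⁻¹) (h * h' * h⁻¹) := by
  have h1 := mk_rel (G := G) (Or.inr ⟨g, h, h', rfl⟩)
  rw [QuotientGroup.mk_mul, QuotientGroup.mk_inv, QuotientGroup.mk_mul,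
    mul_inv_eq_one] at h1
  exact h1

lemma rel1' {g g' h p q r : G} (hp : p = g * g') (hq : q = g * g' * g⁻¹)
    (hr : r = g * h * g⁻¹) : tElem p h = tElem q r * tElem g h := by
  subst hp hq hr; exact rel1 g g' h

lemma rel2' {g h h' p q r : G} (hp : p = h * h') (hq : q = h * g * h⁻¹)
    (hr : r = h * h' * h⁻¹) : tElem g p = tElem g h * tElem q r := by
  subst hp hq hr; exact rel2 g h h'

lemma aux (g h u v : G) :
    tElem g h * tElem (h*g*u*g⁻¹*h⁻¹) (h*g*v*g⁻¹*h⁻¹) =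
      tElem (g*h*u*h⁻¹*g⁻¹) (g*h*v*h⁻¹*g⁻¹) * tElem g h := by
  have E1 : tElem (g*u) (h*v) = tElem (g*u) h * tElem (h*g*u*h⁻¹) (h*v*h⁻¹) :=
    rel2' rfl (by group) rfl
  have E2 : tElem (g*u) h = tElem (g*u*g⁻¹) (g*h*g⁻¹) * tElem g h := rel1' rfl rfl rfl
  have E3 : tElem (g*u) (h*v) = tElem (g*u*g⁻¹) (g*h*v*g⁻¹) * tElem g (h*v) :=
    rel1' rfl rfl (by group)
  have E4 : tElem g (h*v) = tElem g h * tElem (h*g*h⁻¹) (h*v*h⁻¹) := rel2' rfl rfl rfl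
  have E5 : tElem (h*g*u*h⁻¹) (h*v*h⁻¹) =
      tElem (h*g*u*g⁻¹*h⁻¹) (h*g*v*g⁻¹*h⁻¹) * tElem (h*g*h⁻¹) (h*v*h⁻¹) :=
    rel1' (g := h*g*h⁻¹) (g' := h*u*h⁻¹) (by group) (by group) (by group)
  have E6 : tElem (g*u*g⁻¹) (g*h*v*g⁻¹) =
      tElem (g*u*g⁻¹) (g*h*g⁻¹) * tElem (g*h*u*h⁻¹*g⁻¹) (g*h*v*h⁻¹*g⁻¹) :=
    rel2' (h := g*h*g⁻¹) (h' := g*v*g⁻¹) (by group) (by group) (by group)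
  rw [E2, E5] at E1
  rw [E4, E6] at E3
  have h12 := E1.symm.trans E3
  simp only [mul_assoc] at h12
  have h2 := mul_left_cancel h12
  have h3 : (tElem g h * tElem (h*g*u*g⁻¹*h⁻¹) (h*g*v*g⁻¹*h⁻¹)) * tElem (h*g*h⁻¹) (h*v*h⁻¹) =
      (tElem (g*h*u*h⁻¹*g⁻¹) (g*h*v*h⁻¹*g⁻¹) * tElem g h) * tElem (h*g*h⁻¹) (h*v*h⁻¹) := by
    simp only [mul_assoc]; exact h2
  exact mul_right_cancel h3

end TSQ8

namespace TSQ8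

abbrev G8 := QuaternionGroup 2

set_option maxRecDepth 10000

lemma q8aux : ∀ g h u : G8, u = g*h*(g⁻¹*h⁻¹*u*h*g)*h⁻¹*g⁻¹ := by decide

lemma comm_gen (g h u v : G8) : tElem g h * tElem u v = tElem u v * tElem g h := by
  have H := aux g h (g⁻¹*h⁻¹*u*h*g) (g⁻¹*h⁻¹*v*h*g)
  rw [show h*g*(g⁻¹*h⁻¹*u*h*g)*g⁻¹*h⁻¹ = u from by group,
      show h*g*(g⁻¹*h⁻¹*v*h*g)*g⁻¹*h⁻¹ = v from by group,
      ← q8aux g h u, ← q8aux g h v] at H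
  exact H

lemma comm_all (x y : TensorSquare G8) : x * y = y * x := by
  have inner : ∀ (p : G8 × G8) (v : FreeGroup (G8 × G8)),
      Commute (tElem p.1 p.2) (QuotientGroup.mk v : TensorSquare G8) := by
    intro p v
    induction v using FreeGroup.induction_on with
    | C1 => exact Commute.one_right _
    | of q => exact comm_gen p.1 p.2 q.1 q.2
    | inv_of q hq =>
        rw [QuotientGroup.mk_inv]
        exact hq.inv_right
    | mul v1 v2 h1 h2 =>
        rw [QuotientGroup.mk_mul]
        exact h1.mul_right h2
  have main : ∀ w v : FreeGroup (G8 × G8),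
      Commute (QuotientGroup.mk w : TensorSquare G8) (QuotientGroup.mk v) := by
    intro w v
    induction w using FreeGroup.induction_on with
    | C1 => exact Commute.one_left _
    | of q => exact inner q v
    | inv_of q hq =>
        rw [QuotientGroup.mk_inv]
        exact hq.inv_left
    | mul w1 w2 h1 h2 =>
        rw [QuotientGroup.mk_mul]
        exact h1.mul_left h2
  obtain ⟨w, rfl⟩ := QuotientGroup.mk_surjective x
  obtain ⟨v, rfl⟩ := QuotientGroup.mk_surjective y
  exact main w v

instance : CommGroup (TensorSquare G8) :=
  { (inferInstance : Group (TensorSquare G8)) with mul_comm := comm_all }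


open QuaternionGroup

abbrev AA := Additive (TensorSquare G8)

def E (g h : G8) : AA := Additive.ofMul (tElem g h)

lemma rel1E {g g' h p q r : G8} (hp : p = g * g') (hq : q = g * g' * g⁻¹)
    (hr : r = g * h * g⁻¹) : E p h = E q r + E g h :=
  congrArg Additive.ofMul (rel1' hp hq hr)

lemma rel2E {g h h' p q r : G8} (hp : p = h * h') (hq : q = h * g * h⁻¹)
    (hr : r = h * h' * h⁻¹) : E g p = E g h + E q r :=
  congrArg Additive.ofMul (rel2' hp hq hr)

lemma E_one (h : G8) : E (a 0) h = 0 := by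
  have h0 := rel1E (g := a 0) (g' := a 0) (h := h) (p := a 0) (q := a 0) (r := h)
    (by decide) (by decide) (by rw [← QuaternionGroup.one_def]; group)
  exact (right_eq_add.mp h0)

lemma E_one' (g : G8) : E g (a 0) = 0 := by
  have h0 := rel2E (g := g) (h := a 0) (h' := a 0) (p := a 0) (q := g) (r := a 0)
    (by decide) (by rw [← QuaternionGroup.one_def]; group) (by decide)
  exact (left_eq_add.mp h0)

-- smoke test of abel + a generated-style lemma
example : E (a 0) (xa 2) = (0 : ℤ) • E (a 1) (xa 1) + (0 : ℤ) • E (a 1) (a 1) +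
    (0 : ℤ) • E (xa 1) (xa 0) + (0 : ℤ) • E (xa 1) (xa 1) := by
  rw [E_one]; abel

lemma ee_x3_a0 : E (xa 3) (a 0) = (0 : ℤ) • E (a 1) (xa 1) + (0 : ℤ) • E (a 1) (a 1) + (0 : ℤ) • E (xa 1) (xa 0) + (0 : ℤ) • E (xa 1) (xa 1) := by
  rw [E_one']; abel

lemma ee_a0_a0 : E (a 0) (a 0) = (0 : ℤ) • E (a 1) (xa 1) + (0 : ℤ) • E (a 1) (a 1) + (0 : ℤ) • E (xa 1) (xa 0) + (0 : ℤ) • E (xa 1) (xa 1) := by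
  rw [E_one]; abel

lemma ee_a0_x1 : E (a 0) (xa 1) = (0 : ℤ) • E (a 1) (xa 1) + (0 : ℤ) • E (a 1) (a 1) + (0 : ℤ) • E (xa 1) (xa 0) + (0 : ℤ) • E (xa 1) (xa 1) := by
  rw [E_one]; abel

lemma ee_a0_a2 : E (a 0) (a 2) = (0 : ℤ) • E (a 1) (xa 1) + (0 : ℤ) • E (a 1) (a 1) + (0 : ℤ) • E (xa 1) (xa 0) + (0 : ℤ) • E (xa 1) (xa 1) := by
  rw [E_one]; abel

lemma ee_a0_x3 : E (a 0) (xa 3) = (0 : ℤ) • E (a 1) (xa 1) + (0 : ℤ) • E (a 1) (a 1) + (0 : ℤ) • E (xa 1) (xa 0) + (0 : ℤ) • E (xa 1) (xa 1) := by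
  rw [E_one]; abel

lemma ee_x0_a0 : E (xa 0) (a 0) = (0 : ℤ) • E (a 1) (xa 1) + (0 : ℤ) • E (a 1) (a 1) + (0 : ℤ) • E (xa 1) (xa 0) + (0 : ℤ) • E (xa 1) (xa 1) := by
  rw [E_one']; abel

lemma ee_a1_a0 : E (a 1) (a 0) = (0 : ℤ) • E (a 1) (xa 1) + (0 : ℤ) • E (a 1) (a 1) + (0 : ℤ) • E (xa 1) (xa 0) + (0 : ℤ) • E (xa 1) (xa 1) := by
  rw [E_one']; abel

lemma ee_a2_a0 : E (a 2) (a 0) = (0 : ℤ) • E (a 1) (xa 1) + (0 : ℤ) • E (a 1) (a 1) + (0 : ℤ) • E (xa 1) (xa 0) + (0 : ℤ) • E (xa 1) (xa 1) := by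
  rw [E_one']; abel

lemma ee_x1_a0 : E (xa 1) (a 0) = (0 : ℤ) • E (a 1) (xa 1) + (0 : ℤ) • E (a 1) (a 1) + (0 : ℤ) • E (xa 1) (xa 0) + (0 : ℤ) • E (xa 1) (xa 1) := by
  rw [E_one']; abel

lemma ee_a0_x2 : E (a 0) (xa 2) = (0 : ℤ) • E (a 1) (xa 1) + (0 : ℤ) • E (a 1) (a 1) + (0 : ℤ) • E (xa 1) (xa 0) + (0 : ℤ) • E (xa 1) (xa 1) := by
  rw [E_one]; abel

lemma ee_a0_a3 : E (a 0) (a 3) = (0 : ℤ) • E (a 1) (xa 1) + (0 : ℤ) • E (a 1) (a 1) + (0 : ℤ) • E (xa 1) (xa 0) + (0 : ℤ) • E (xa 1) (xa 1) := by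
  rw [E_one]; abel

lemma ee_a0_x0 : E (a 0) (xa 0) = (0 : ℤ) • E (a 1) (xa 1) + (0 : ℤ) • E (a 1) (a 1) + (0 : ℤ) • E (xa 1) (xa 0) + (0 : ℤ) • E (xa 1) (xa 1) := by
  rw [E_one]; abel

lemma ee_x2_a0 : E (xa 2) (a 0) = (0 : ℤ) • E (a 1) (xa 1) + (0 : ℤ) • E (a 1) (a 1) + (0 : ℤ) • E (xa 1) (xa 0) + (0 : ℤ) • E (xa 1) (xa 1) := by
  rw [E_one']; abel

lemma ee_a3_a0 : E (a 3) (a 0) = (0 : ℤ) • E (a 1) (xa 1) + (0 : ℤ) • E (a 1) (a 1) + (0 : ℤ) • E (xa 1) (xa 0) + (0 : ℤ) • E (xa 1) (xa 1) := by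
  rw [E_one']; abel

lemma ee_a0_a1 : E (a 0) (a 1) = (0 : ℤ) • E (a 1) (xa 1) + (0 : ℤ) • E (a 1) (a 1) + (0 : ℤ) • E (xa 1) (xa 0) + (0 : ℤ) • E (xa 1) (xa 1) := by
  rw [E_one]; abel

lemma ee_a1_x1 : E (a 1) (xa 1) = (1 : ℤ) • E (a 1) (xa 1) + (0 : ℤ) • E (a 1) (a 1) + (0 : ℤ) • E (xa 1) (xa 0) + (0 : ℤ) • E (xa 1) (xa 1) := by
  abel

lemma ee_a1_a1 : E (a 1) (a 1) = (0 : ℤ) • E (a 1) (xa 1) + (1 : ℤ) • E (a 1) (a 1) + (0 : ℤ) • E (xa 1) (xa 0) + (0 : ℤ) • E (xa 1) (xa 1) := by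
  abel

lemma ee_x1_x0 : E (xa 1) (xa 0) = (0 : ℤ) • E (a 1) (xa 1) + (0 : ℤ) • E (a 1) (a 1) + (1 : ℤ) • E (xa 1) (xa 0) + (0 : ℤ) • E (xa 1) (xa 1) := by
  abel

lemma ee_x1_x1 : E (xa 1) (xa 1) = (0 : ℤ) • E (a 1) (xa 1) + (0 : ℤ) • E (a 1) (a 1) + (0 : ℤ) • E (xa 1) (xa 0) + (1 : ℤ) • E (xa 1) (xa 1) := by
  abel

lemma ee_a2_a1 : E (a 2) (a 1) = (0 : ℤ) • E (a 1) (xa 1) + (2 : ℤ) • E (a 1) (a 1) + (0 : ℤ) • E (xa 1) (xa 0) + (0 : ℤ) • E (xa 1) (xa 1) := by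
  have i : E (a 2) (a 1) = E (a 1) (a 1) + E (a 1) (a 1) :=
    rel1E (g := (a 1)) (g' := (a 1)) (h := (a 1)) (p := (a 2)) (q := (a 1)) (r := (a 1)) (by decide) (by decide) (by decide)
  rw [ee_a1_a1] at i
  rw [i]; abel

lemma ee_a3_a1 : E (a 3) (a 1) = (0 : ℤ) • E (a 1) (xa 1) + (3 : ℤ) • E (a 1) (a 1) + (0 : ℤ) • E (xa 1) (xa 0) + (0 : ℤ) • E (xa 1) (xa 1) := by
  have i : E (a 3) (a 1) = E (a 2) (a 1) + E (a 1) (a 1) :=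
    rel1E (g := (a 1)) (g' := (a 2)) (h := (a 1)) (p := (a 3)) (q := (a 2)) (r := (a 1)) (by decide) (by decide) (by decide)
  rw [ee_a2_a1, ee_a1_a1] at i
  rw [i]; abel

lemma ee_a3_x3 : E (a 3) (xa 3) = (-1 : ℤ) • E (a 1) (xa 1) + (0 : ℤ) • E (a 1) (a 1) + (0 : ℤ) • E (xa 1) (xa 0) + (0 : ℤ) • E (xa 1) (xa 1) := by
  have i : E (a 0) (xa 1) = E (a 3) (xa 3) + E (a 1) (xa 1) :=
    rel1E (g := (a 1)) (g' := (a 3)) (h := (xa 1)) (p := (a 0)) (q := (a 3)) (r := (xa 3)) (by decide) (by decide) (by decide)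
  rw [ee_a0_x1, ee_a1_x1] at i
  rw [eq_sub_of_add_eq i.symm]; abel

lemma ee_x0_x3 : E (xa 0) (xa 3) = (-1 : ℤ) • E (a 1) (xa 1) + (0 : ℤ) • E (a 1) (a 1) + (0 : ℤ) • E (xa 1) (xa 0) + (1 : ℤ) • E (xa 1) (xa 1) := by
  have i : E (xa 1) (xa 1) = E (xa 0) (xa 3) + E (a 1) (xa 1) :=
    rel1E (g := (a 1)) (g' := (xa 2)) (h := (xa 1)) (p := (xa 1)) (q := (xa 0)) (r := (xa 3)) (by decide) (by decide) (by decide)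
  rw [ee_x1_x1, ee_a1_x1] at i
  rw [eq_sub_of_add_eq i.symm]; abel

lemma ee_x0_x1 : E (xa 0) (xa 1) = (1 : ℤ) • E (a 1) (xa 1) + (0 : ℤ) • E (a 1) (a 1) + (0 : ℤ) • E (xa 1) (xa 0) + (1 : ℤ) • E (xa 1) (xa 1) := by
  have i : E (xa 1) (xa 1) = E (a 3) (xa 3) + E (xa 0) (xa 1) :=
    rel1E (g := (xa 0)) (g' := (a 1)) (h := (xa 1)) (p := (xa 1)) (q := (a 3)) (r := (xa 3)) (by decide) (by decide) (by decide)
  rw [ee_x1_x1, ee_a3_x3] at i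
  rw [eq_sub_of_add_eq' i.symm]; abel

lemma ee_x3_x3 : E (xa 3) (xa 3) = (0 : ℤ) • E (a 1) (xa 1) + (0 : ℤ) • E (a 1) (a 1) + (0 : ℤ) • E (xa 1) (xa 0) + (1 : ℤ) • E (xa 1) (xa 1) := by
  have i : E (xa 3) (xa 3) = E (a 1) (xa 1) + E (xa 0) (xa 3) :=
    rel1E (g := (xa 0)) (g' := (a 3)) (h := (xa 3)) (p := (xa 3)) (q := (a 1)) (r := (xa 1)) (by decide) (by decide) (by decide)
  rw [ee_a1_x1, ee_x0_x3] at i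
  rw [i]; abel

lemma ee_a2_x1 : E (a 2) (xa 1) = (0 : ℤ) • E (a 1) (xa 1) + (0 : ℤ) • E (a 1) (a 1) + (0 : ℤ) • E (xa 1) (xa 0) + (2 : ℤ) • E (xa 1) (xa 1) := by
  have i : E (a 2) (xa 1) = E (xa 0) (xa 3) + E (xa 0) (xa 1) :=
    rel1E (g := (xa 0)) (g' := (xa 0)) (h := (xa 1)) (p := (a 2)) (q := (xa 0)) (r := (xa 3)) (by decide) (by decide) (by decide)
  rw [ee_x0_x3, ee_x0_x1] at i
  rw [i]; abel

lemma ee_a2_x3 : E (a 2) (xa 3) = (0 : ℤ) • E (a 1) (xa 1) + (0 : ℤ) • E (a 1) (a 1) + (0 : ℤ) • E (xa 1) (xa 0) + (2 : ℤ) • E (xa 1) (xa 1) := by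
  have i : E (a 2) (xa 3) = E (xa 0) (xa 1) + E (xa 0) (xa 3) :=
    rel1E (g := (xa 0)) (g' := (xa 0)) (h := (xa 3)) (p := (a 2)) (q := (xa 0)) (r := (xa 1)) (by decide) (by decide) (by decide)
  rw [ee_x0_x1, ee_x0_x3] at i
  rw [i]; abel

lemma ee_a3_x1 : E (a 3) (xa 1) = (1 : ℤ) • E (a 1) (xa 1) + (0 : ℤ) • E (a 1) (a 1) + (0 : ℤ) • E (xa 1) (xa 0) + (2 : ℤ) • E (xa 1) (xa 1) := by
  have i : E (a 3) (xa 1) = E (xa 3) (xa 3) + E (xa 0) (xa 1) :=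
    rel1E (g := (xa 0)) (g' := (xa 1)) (h := (xa 1)) (p := (a 3)) (q := (xa 3)) (r := (xa 3)) (by decide) (by decide) (by decide)
  rw [ee_x3_x3, ee_x0_x1] at i
  rw [i]; abel

lemma ee_x3_x1 : E (xa 3) (xa 1) = (0 : ℤ) • E (a 1) (xa 1) + (0 : ℤ) • E (a 1) (a 1) + (0 : ℤ) • E (xa 1) (xa 0) + (-1 : ℤ) • E (xa 1) (xa 1) := by
  have i : E (a 3) (xa 3) = E (xa 3) (xa 1) + E (xa 0) (xa 3) :=
    rel1E (g := (xa 0)) (g' := (xa 1)) (h := (xa 3)) (p := (a 3)) (q := (xa 3)) (r := (xa 1)) (by decide) (by decide) (by decide)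
  rw [ee_a3_x3, ee_x0_x3] at i
  rw [eq_sub_of_add_eq i.symm]; abel

lemma ee_x2_x3 : E (xa 2) (xa 3) = (-1 : ℤ) • E (a 1) (xa 1) + (0 : ℤ) • E (a 1) (a 1) + (0 : ℤ) • E (xa 1) (xa 0) + (-1 : ℤ) • E (xa 1) (xa 1) := by
  have i : E (a 0) (xa 1) = E (xa 2) (xa 3) + E (xa 0) (xa 1) :=
    rel1E (g := (xa 0)) (g' := (xa 2)) (h := (xa 1)) (p := (a 0)) (q := (xa 2)) (r := (xa 3)) (by decide) (by decide) (by decide)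
  rw [ee_a0_x1, ee_x0_x1] at i
  rw [eq_sub_of_add_eq i.symm]; abel

lemma ee_x2_x1 : E (xa 2) (xa 1) = (1 : ℤ) • E (a 1) (xa 1) + (0 : ℤ) • E (a 1) (a 1) + (0 : ℤ) • E (xa 1) (xa 0) + (-1 : ℤ) • E (xa 1) (xa 1) := by
  have i : E (a 0) (xa 3) = E (xa 2) (xa 1) + E (xa 0) (xa 3) :=
    rel1E (g := (xa 0)) (g' := (xa 2)) (h := (xa 3)) (p := (a 0)) (q := (xa 2)) (r := (xa 1)) (by decide) (by decide) (by decide)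
  rw [ee_a0_x3, ee_x0_x3] at i
  rw [eq_sub_of_add_eq i.symm]; abel

lemma ee_x1_x3 : E (xa 1) (xa 3) = (0 : ℤ) • E (a 1) (xa 1) + (0 : ℤ) • E (a 1) (a 1) + (0 : ℤ) • E (xa 1) (xa 0) + (-1 : ℤ) • E (xa 1) (xa 1) := by
  have i : E (a 1) (xa 1) = E (xa 1) (xa 3) + E (xa 0) (xa 1) :=
    rel1E (g := (xa 0)) (g' := (xa 3)) (h := (xa 1)) (p := (a 1)) (q := (xa 1)) (r := (xa 3)) (by decide) (by decide) (by decide)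
  rw [ee_a1_x1, ee_x0_x1] at i
  rw [eq_sub_of_add_eq i.symm]; abel

lemma ee_a1_x3 : E (a 1) (xa 3) = (-1 : ℤ) • E (a 1) (xa 1) + (0 : ℤ) • E (a 1) (a 1) + (0 : ℤ) • E (xa 1) (xa 0) + (2 : ℤ) • E (xa 1) (xa 1) := by
  have i : E (a 1) (xa 3) = E (xa 1) (xa 1) + E (xa 0) (xa 3) :=
    rel1E (g := (xa 0)) (g' := (xa 3)) (h := (xa 3)) (p := (a 1)) (q := (xa 1)) (r := (xa 1)) (by decide) (by decide) (by decide)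
  rw [ee_x1_x1, ee_x0_x3] at i
  rw [i]; abel

lemma ee_x3_x2 : E (xa 3) (xa 2) = (0 : ℤ) • E (a 1) (xa 1) + (0 : ℤ) • E (a 1) (a 1) + (-1 : ℤ) • E (xa 1) (xa 0) + (0 : ℤ) • E (xa 1) (xa 1) := by
  have i : E (a 0) (xa 0) = E (xa 3) (xa 2) + E (xa 1) (xa 0) :=
    rel1E (g := (xa 1)) (g' := (xa 3)) (h := (xa 0)) (p := (a 0)) (q := (xa 3)) (r := (xa 2)) (by decide) (by decide) (by decide)
  rw [ee_a0_x0, ee_x1_x0] at i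
  rw [eq_sub_of_add_eq i.symm]; abel

lemma ee_a1_a2 : E (a 1) (a 2) = (0 : ℤ) • E (a 1) (xa 1) + (2 : ℤ) • E (a 1) (a 1) + (0 : ℤ) • E (xa 1) (xa 0) + (0 : ℤ) • E (xa 1) (xa 1) := by
  have i : E (a 1) (a 2) = E (a 1) (a 1) + E (a 1) (a 1) :=
    rel2E (g := (a 1)) (h := (a 1)) (h' := (a 1)) (p := (a 2)) (q := (a 1)) (r := (a 1)) (by decide) (by decide) (by decide)
  rw [ee_a1_a1] at i
  rw [i]; abel

lemma ee_a1_a3 : E (a 1) (a 3) = (0 : ℤ) • E (a 1) (xa 1) + (3 : ℤ) • E (a 1) (a 1) + (0 : ℤ) • E (xa 1) (xa 0) + (0 : ℤ) • E (xa 1) (xa 1) := by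
  have i : E (a 1) (a 3) = E (a 1) (a 1) + E (a 1) (a 2) :=
    rel2E (g := (a 1)) (h := (a 1)) (h' := (a 2)) (p := (a 3)) (q := (a 1)) (r := (a 2)) (by decide) (by decide) (by decide)
  rw [ee_a1_a1, ee_a1_a2] at i
  rw [i]; abel

lemma ee_a1_x2 : E (a 1) (xa 2) = (-1 : ℤ) • E (a 1) (xa 1) + (-1 : ℤ) • E (a 1) (a 1) + (0 : ℤ) • E (xa 1) (xa 0) + (2 : ℤ) • E (xa 1) (xa 1) := by
  have i : E (a 1) (xa 3) = E (a 1) (a 1) + E (a 1) (xa 2) :=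
    rel2E (g := (a 1)) (h := (a 1)) (h' := (xa 0)) (p := (xa 3)) (q := (a 1)) (r := (xa 2)) (by decide) (by decide) (by decide)
  rw [ee_a1_x3, ee_a1_a1] at i
  rw [eq_sub_of_add_eq' i.symm]; abel

lemma ee_a1_x0 : E (a 1) (xa 0) = (-1 : ℤ) • E (a 1) (xa 1) + (1 : ℤ) • E (a 1) (a 1) + (0 : ℤ) • E (xa 1) (xa 0) + (2 : ℤ) • E (xa 1) (xa 1) := by
  have i : E (a 1) (xa 0) = E (a 1) (a 1) + E (a 1) (xa 3) :=
    rel2E (g := (a 1)) (h := (a 1)) (h' := (xa 1)) (p := (xa 0)) (q := (a 1)) (r := (xa 3)) (by decide) (by decide) (by decide)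
  rw [ee_a1_a1, ee_a1_x3] at i
  rw [i]; abel

lemma ee_a3_a3 : E (a 3) (a 3) = (2 : ℤ) • E (a 1) (xa 1) + (-1 : ℤ) • E (a 1) (a 1) + (0 : ℤ) • E (xa 1) (xa 0) + (-2 : ℤ) • E (xa 1) (xa 1) := by
  have i : E (a 1) (xa 1) = E (a 1) (xa 0) + E (a 3) (a 3) :=
    rel2E (g := (a 1)) (h := (xa 0)) (h' := (a 1)) (p := (xa 1)) (q := (a 3)) (r := (a 3)) (by decide) (by decide) (by decide)
  rw [ee_a1_x1, ee_a1_x0] at i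
  rw [eq_sub_of_add_eq' i.symm]; abel

lemma ee_a3_a2 : E (a 3) (a 2) = (0 : ℤ) • E (a 1) (xa 1) + (-2 : ℤ) • E (a 1) (a 1) + (0 : ℤ) • E (xa 1) (xa 0) + (0 : ℤ) • E (xa 1) (xa 1) := by
  have i : E (a 1) (xa 2) = E (a 1) (xa 0) + E (a 3) (a 2) :=
    rel2E (g := (a 1)) (h := (xa 0)) (h' := (a 2)) (p := (xa 2)) (q := (a 3)) (r := (a 2)) (by decide) (by decide) (by decide)
  rw [ee_a1_x2, ee_a1_x0] at i
  rw [eq_sub_of_add_eq' i.symm]; abel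

lemma ee_a3_x0 : E (a 3) (xa 0) = (1 : ℤ) • E (a 1) (xa 1) + (1 : ℤ) • E (a 1) (a 1) + (0 : ℤ) • E (xa 1) (xa 0) + (-2 : ℤ) • E (xa 1) (xa 1) := by
  have i : E (a 1) (a 2) = E (a 1) (xa 0) + E (a 3) (xa 0) :=
    rel2E (g := (a 1)) (h := (xa 0)) (h' := (xa 0)) (p := (a 2)) (q := (a 3)) (r := (xa 0)) (by decide) (by decide) (by decide)
  rw [ee_a1_a2, ee_a1_x0] at i
  rw [eq_sub_of_add_eq' i.symm]; abel

lemma ee_a3_x2 : E (a 3) (xa 2) = (1 : ℤ) • E (a 1) (xa 1) + (-1 : ℤ) • E (a 1) (a 1) + (0 : ℤ) • E (xa 1) (xa 0) + (-2 : ℤ) • E (xa 1) (xa 1) := by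
  have i : E (a 1) (a 0) = E (a 1) (xa 0) + E (a 3) (xa 2) :=
    rel2E (g := (a 1)) (h := (xa 0)) (h' := (xa 2)) (p := (a 0)) (q := (a 3)) (r := (xa 2)) (by decide) (by decide) (by decide)
  rw [ee_a1_a0, ee_a1_x0] at i
  rw [eq_sub_of_add_eq' i.symm]; abel

lemma ee_a2_a2 : E (a 2) (a 2) = (0 : ℤ) • E (a 1) (xa 1) + (4 : ℤ) • E (a 1) (a 1) + (0 : ℤ) • E (xa 1) (xa 0) + (0 : ℤ) • E (xa 1) (xa 1) := by
  have i : E (a 2) (a 2) = E (a 2) (a 1) + E (a 2) (a 1) :=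
    rel2E (g := (a 2)) (h := (a 1)) (h' := (a 1)) (p := (a 2)) (q := (a 2)) (r := (a 1)) (by decide) (by decide) (by decide)
  rw [ee_a2_a1] at i
  rw [i]; abel

lemma ee_a2_a3 : E (a 2) (a 3) = (0 : ℤ) • E (a 1) (xa 1) + (6 : ℤ) • E (a 1) (a 1) + (0 : ℤ) • E (xa 1) (xa 0) + (0 : ℤ) • E (xa 1) (xa 1) := by
  have i : E (a 2) (a 3) = E (a 2) (a 1) + E (a 2) (a 2) :=
    rel2E (g := (a 2)) (h := (a 1)) (h' := (a 2)) (p := (a 3)) (q := (a 2)) (r := (a 2)) (by decide) (by decide) (by decide)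
  rw [ee_a2_a1, ee_a2_a2] at i
  rw [i]; abel

lemma ee_a2_x2 : E (a 2) (xa 2) = (0 : ℤ) • E (a 1) (xa 1) + (-2 : ℤ) • E (a 1) (a 1) + (0 : ℤ) • E (xa 1) (xa 0) + (2 : ℤ) • E (xa 1) (xa 1) := by
  have i : E (a 2) (xa 3) = E (a 2) (a 1) + E (a 2) (xa 2) :=
    rel2E (g := (a 2)) (h := (a 1)) (h' := (xa 0)) (p := (xa 3)) (q := (a 2)) (r := (xa 2)) (by decide) (by decide) (by decide)
  rw [ee_a2_x3, ee_a2_a1] at i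
  rw [eq_sub_of_add_eq' i.symm]; abel

lemma ee_a2_x0 : E (a 2) (xa 0) = (0 : ℤ) • E (a 1) (xa 1) + (2 : ℤ) • E (a 1) (a 1) + (0 : ℤ) • E (xa 1) (xa 0) + (2 : ℤ) • E (xa 1) (xa 1) := by
  have i : E (a 2) (xa 0) = E (a 2) (a 1) + E (a 2) (xa 3) :=
    rel2E (g := (a 2)) (h := (a 1)) (h' := (xa 1)) (p := (xa 0)) (q := (a 2)) (r := (xa 3)) (by decide) (by decide) (by decide)
  rw [ee_a2_a1, ee_a2_x3] at i
  rw [i]; abel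

lemma ee_x0_a2 : E (xa 0) (a 2) = (-2 : ℤ) • E (a 1) (xa 1) + (0 : ℤ) • E (a 1) (a 1) + (0 : ℤ) • E (xa 1) (xa 0) + (0 : ℤ) • E (xa 1) (xa 1) := by
  have i : E (xa 0) (xa 3) = E (xa 0) (a 2) + E (xa 0) (xa 1) :=
    rel2E (g := (xa 0)) (h := (a 2)) (h' := (xa 1)) (p := (xa 3)) (q := (xa 0)) (r := (xa 1)) (by decide) (by decide) (by decide)
  rw [ee_x0_x3, ee_x0_x1] at i
  rw [eq_sub_of_add_eq i.symm]; abel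

lemma ee_x2_a2 : E (xa 2) (a 2) = (-2 : ℤ) • E (a 1) (xa 1) + (0 : ℤ) • E (a 1) (a 1) + (0 : ℤ) • E (xa 1) (xa 0) + (0 : ℤ) • E (xa 1) (xa 1) := by
  have i : E (xa 0) (xa 3) = E (xa 0) (xa 1) + E (xa 2) (a 2) :=
    rel2E (g := (xa 0)) (h := (xa 1)) (h' := (a 2)) (p := (xa 3)) (q := (xa 2)) (r := (a 2)) (by decide) (by decide) (by decide)
  rw [ee_x0_x3, ee_x0_x1] at i
  rw [eq_sub_of_add_eq' i.symm]; abel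

lemma ee_x1_a1 : E (xa 1) (a 1) = (0 : ℤ) • E (a 1) (xa 1) + (0 : ℤ) • E (a 1) (a 1) + (1 : ℤ) • E (xa 1) (xa 0) + (-1 : ℤ) • E (xa 1) (xa 1) := by
  have i : E (xa 1) (xa 3) = E (xa 1) (a 1) + E (xa 3) (xa 2) :=
    rel2E (g := (xa 1)) (h := (a 1)) (h' := (xa 0)) (p := (xa 3)) (q := (xa 3)) (r := (xa 2)) (by decide) (by decide) (by decide)
  rw [ee_x1_x3, ee_x3_x2] at i
  rw [eq_sub_of_add_eq i.symm]; abel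

lemma ee_x3_x0 : E (xa 3) (xa 0) = (0 : ℤ) • E (a 1) (xa 1) + (0 : ℤ) • E (a 1) (a 1) + (-1 : ℤ) • E (xa 1) (xa 0) + (2 : ℤ) • E (xa 1) (xa 1) := by
  have i : E (xa 1) (xa 1) = E (xa 1) (a 1) + E (xa 3) (xa 0) :=
    rel2E (g := (xa 1)) (h := (a 1)) (h' := (xa 2)) (p := (xa 1)) (q := (xa 3)) (r := (xa 0)) (by decide) (by decide) (by decide)
  rw [ee_x1_x1, ee_x1_a1] at i
  rw [eq_sub_of_add_eq' i.symm]; abel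

lemma ee_x1_x2 : E (xa 1) (xa 2) = (0 : ℤ) • E (a 1) (xa 1) + (0 : ℤ) • E (a 1) (a 1) + (1 : ℤ) • E (xa 1) (xa 0) + (-2 : ℤ) • E (xa 1) (xa 1) := by
  have i : E (xa 1) (xa 2) = E (xa 1) (a 1) + E (xa 3) (xa 1) :=
    rel2E (g := (xa 1)) (h := (a 1)) (h' := (xa 3)) (p := (xa 2)) (q := (xa 3)) (r := (xa 1)) (by decide) (by decide) (by decide)
  rw [ee_x1_a1, ee_x3_x1] at i
  rw [i]; abel

lemma ee_x1_a2 : E (xa 1) (a 2) = (0 : ℤ) • E (a 1) (xa 1) + (0 : ℤ) • E (a 1) (a 1) + (0 : ℤ) • E (xa 1) (xa 0) + (-2 : ℤ) • E (xa 1) (xa 1) := by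
  have i : E (xa 1) (xa 2) = E (xa 1) (a 2) + E (xa 1) (xa 0) :=
    rel2E (g := (xa 1)) (h := (a 2)) (h' := (xa 0)) (p := (xa 2)) (q := (xa 1)) (r := (xa 0)) (by decide) (by decide) (by decide)
  rw [ee_x1_x2, ee_x1_x0] at i
  rw [eq_sub_of_add_eq i.symm]; abel

lemma ee_x1_a3 : E (xa 1) (a 3) = (0 : ℤ) • E (a 1) (xa 1) + (0 : ℤ) • E (a 1) (a 1) + (1 : ℤ) • E (xa 1) (xa 0) + (1 : ℤ) • E (xa 1) (xa 1) := by
  have i : E (xa 1) (xa 1) = E (xa 1) (a 3) + E (xa 3) (xa 2) :=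
    rel2E (g := (xa 1)) (h := (a 3)) (h' := (xa 0)) (p := (xa 1)) (q := (xa 3)) (r := (xa 2)) (by decide) (by decide) (by decide)
  rw [ee_x1_x1, ee_x3_x2] at i
  rw [eq_sub_of_add_eq i.symm]; abel

lemma ee_x3_a3 : E (xa 3) (a 3) = (0 : ℤ) • E (a 1) (xa 1) + (0 : ℤ) • E (a 1) (a 1) + (-1 : ℤ) • E (xa 1) (xa 0) + (1 : ℤ) • E (xa 1) (xa 1) := by
  have i : E (xa 1) (xa 1) = E (xa 1) (xa 0) + E (xa 3) (a 3) :=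
    rel2E (g := (xa 1)) (h := (xa 0)) (h' := (a 1)) (p := (xa 1)) (q := (xa 3)) (r := (a 3)) (by decide) (by decide) (by decide)
  rw [ee_x1_x1, ee_x1_x0] at i
  rw [eq_sub_of_add_eq' i.symm]; abel

lemma ee_x3_a2 : E (xa 3) (a 2) = (0 : ℤ) • E (a 1) (xa 1) + (0 : ℤ) • E (a 1) (a 1) + (0 : ℤ) • E (xa 1) (xa 0) + (-2 : ℤ) • E (xa 1) (xa 1) := by
  have i : E (xa 1) (xa 2) = E (xa 1) (xa 0) + E (xa 3) (a 2) :=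
    rel2E (g := (xa 1)) (h := (xa 0)) (h' := (a 2)) (p := (xa 2)) (q := (xa 3)) (r := (a 2)) (by decide) (by decide) (by decide)
  rw [ee_x1_x2, ee_x1_x0] at i
  rw [eq_sub_of_add_eq' i.symm]; abel

lemma ee_x3_a1 : E (xa 3) (a 1) = (0 : ℤ) • E (a 1) (xa 1) + (0 : ℤ) • E (a 1) (a 1) + (-1 : ℤ) • E (xa 1) (xa 0) + (-1 : ℤ) • E (xa 1) (xa 1) := by
  have i : E (xa 1) (xa 3) = E (xa 1) (xa 0) + E (xa 3) (a 1) :=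
    rel2E (g := (xa 1)) (h := (xa 0)) (h' := (a 3)) (p := (xa 3)) (q := (xa 3)) (r := (a 1)) (by decide) (by decide) (by decide)
  rw [ee_x1_x3, ee_x1_x0] at i
  rw [eq_sub_of_add_eq' i.symm]; abel

lemma ee_x2_a1 : E (xa 2) (a 1) = (0 : ℤ) • E (a 1) (xa 1) + (-1 : ℤ) • E (a 1) (a 1) + (-1 : ℤ) • E (xa 1) (xa 0) + (-1 : ℤ) • E (xa 1) (xa 1) := by
  have i : E (xa 3) (a 1) = E (xa 2) (a 1) + E (a 1) (a 1) :=
    rel1E (g := (a 1)) (g' := (xa 0)) (h := (a 1)) (p := (xa 3)) (q := (xa 2)) (r := (a 1)) (by decide) (by decide) (by decide)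
  rw [ee_x3_a1, ee_a1_a1] at i
  rw [eq_sub_of_add_eq i.symm]; abel

lemma ee_x2_a3 : E (xa 2) (a 3) = (0 : ℤ) • E (a 1) (xa 1) + (-3 : ℤ) • E (a 1) (a 1) + (-1 : ℤ) • E (xa 1) (xa 0) + (1 : ℤ) • E (xa 1) (xa 1) := by
  have i : E (xa 3) (a 3) = E (xa 2) (a 3) + E (a 1) (a 3) :=
    rel1E (g := (a 1)) (g' := (xa 0)) (h := (a 3)) (p := (xa 3)) (q := (xa 2)) (r := (a 3)) (by decide) (by decide) (by decide)
  rw [ee_x3_a3, ee_a1_a3] at i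
  rw [eq_sub_of_add_eq i.symm]; abel

lemma ee_x2_x2 : E (xa 2) (xa 2) = (1 : ℤ) • E (a 1) (xa 1) + (-1 : ℤ) • E (a 1) (a 1) + (-1 : ℤ) • E (xa 1) (xa 0) + (0 : ℤ) • E (xa 1) (xa 1) := by
  have i : E (xa 3) (xa 0) = E (xa 2) (xa 2) + E (a 1) (xa 0) :=
    rel1E (g := (a 1)) (g' := (xa 0)) (h := (xa 0)) (p := (xa 3)) (q := (xa 2)) (r := (xa 2)) (by decide) (by decide) (by decide)
  rw [ee_x3_x0, ee_a1_x0] at i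
  rw [eq_sub_of_add_eq i.symm]; abel

lemma ee_x2_x0 : E (xa 2) (xa 0) = (1 : ℤ) • E (a 1) (xa 1) + (1 : ℤ) • E (a 1) (a 1) + (-1 : ℤ) • E (xa 1) (xa 0) + (-2 : ℤ) • E (xa 1) (xa 1) := by
  have i : E (xa 3) (xa 2) = E (xa 2) (xa 0) + E (a 1) (xa 2) :=
    rel1E (g := (a 1)) (g' := (xa 0)) (h := (xa 2)) (p := (xa 3)) (q := (xa 2)) (r := (xa 0)) (by decide) (by decide) (by decide)
  rw [ee_x3_x2, ee_a1_x2] at i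
  rw [eq_sub_of_add_eq i.symm]; abel

lemma ee_x0_a1 : E (xa 0) (a 1) = (0 : ℤ) • E (a 1) (xa 1) + (1 : ℤ) • E (a 1) (a 1) + (-1 : ℤ) • E (xa 1) (xa 0) + (-1 : ℤ) • E (xa 1) (xa 1) := by
  have i : E (xa 0) (a 1) = E (xa 3) (a 1) + E (a 1) (a 1) :=
    rel1E (g := (a 1)) (g' := (xa 1)) (h := (a 1)) (p := (xa 0)) (q := (xa 3)) (r := (a 1)) (by decide) (by decide) (by decide)
  rw [ee_x3_a1, ee_a1_a1] at i
  rw [i]; abel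

lemma ee_x0_a3 : E (xa 0) (a 3) = (0 : ℤ) • E (a 1) (xa 1) + (3 : ℤ) • E (a 1) (a 1) + (-1 : ℤ) • E (xa 1) (xa 0) + (1 : ℤ) • E (xa 1) (xa 1) := by
  have i : E (xa 0) (a 3) = E (xa 3) (a 3) + E (a 1) (a 3) :=
    rel1E (g := (a 1)) (g' := (xa 1)) (h := (a 3)) (p := (xa 0)) (q := (xa 3)) (r := (a 3)) (by decide) (by decide) (by decide)
  rw [ee_x3_a3, ee_a1_a3] at i
  rw [i]; abel

lemma ee_x0_x0 : E (xa 0) (xa 0) = (-1 : ℤ) • E (a 1) (xa 1) + (1 : ℤ) • E (a 1) (a 1) + (-1 : ℤ) • E (xa 1) (xa 0) + (2 : ℤ) • E (xa 1) (xa 1) := by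
  have i : E (xa 0) (xa 0) = E (xa 3) (xa 2) + E (a 1) (xa 0) :=
    rel1E (g := (a 1)) (g' := (xa 1)) (h := (xa 0)) (p := (xa 0)) (q := (xa 3)) (r := (xa 2)) (by decide) (by decide) (by decide)
  rw [ee_x3_x2, ee_a1_x0] at i
  rw [i]; abel

lemma ee_x0_x2 : E (xa 0) (xa 2) = (-1 : ℤ) • E (a 1) (xa 1) + (-1 : ℤ) • E (a 1) (a 1) + (-1 : ℤ) • E (xa 1) (xa 0) + (4 : ℤ) • E (xa 1) (xa 1) := by
  have i : E (xa 0) (xa 2) = E (xa 3) (xa 0) + E (a 1) (xa 2) :=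
    rel1E (g := (a 1)) (g' := (xa 1)) (h := (xa 2)) (p := (xa 0)) (q := (xa 3)) (r := (xa 0)) (by decide) (by decide) (by decide)
  rw [ee_x3_x0, ee_a1_x2] at i
  rw [i]; abel
lemma T4 : (4 : ℤ) • E (xa 1) (xa 1) = 0 := by
  have i1 : E (a 3) (xa 3) = E (a 2) (xa 1) + E (a 1) (xa 3) :=
    rel1E (g := (a 1)) (g' := (a 2)) (h := (xa 3)) (p := (a 3)) (q := (a 2)) (r := (xa 1)) (by decide) (by decide) (by decide)
  have s1 : E (a 3) (xa 3) - (E (a 2) (xa 1) + E (a 1) (xa 3)) = 0 := by rw [i1]; abel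
  have z1 : E (a 3) (xa 3) - ((-1 : ℤ) • E (a 1) (xa 1) + (0 : ℤ) • E (a 1) (a 1) + (0 : ℤ) • E (xa 1) (xa 0) + (0 : ℤ) • E (xa 1) (xa 1)) = 0 := by rw [ee_a3_x3]; abel
  have z2 : E (a 2) (xa 1) - ((0 : ℤ) • E (a 1) (xa 1) + (0 : ℤ) • E (a 1) (a 1) + (0 : ℤ) • E (xa 1) (xa 0) + (2 : ℤ) • E (xa 1) (xa 1)) = 0 := by rw [ee_a2_x1]; abel
  have z3 : E (a 1) (xa 3) - ((-1 : ℤ) • E (a 1) (xa 1) + (0 : ℤ) • E (a 1) (a 1) + (0 : ℤ) • E (xa 1) (xa 0) + (2 : ℤ) • E (xa 1) (xa 1)) = 0 := by rw [ee_a1_x3]; abel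
  have key : (4 : ℤ) • E (xa 1) (xa 1) = -(E (a 3) (xa 3) - (E (a 2) (xa 1) + E (a 1) (xa 3))) + (E (a 3) (xa 3) - ((-1 : ℤ) • E (a 1) (xa 1) + (0 : ℤ) • E (a 1) (a 1) + (0 : ℤ) • E (xa 1) (xa 0) + (0 : ℤ) • E (xa 1) (xa 1))) - (E (a 2) (xa 1) - ((0 : ℤ) • E (a 1) (xa 1) + (0 : ℤ) • E (a 1) (a 1) + (0 : ℤ) • E (xa 1) (xa 0) + (2 : ℤ) • E (xa 1) (xa 1))) - (E (a 1) (xa 3) - ((-1 : ℤ) • E (a 1) (xa 1) + (0 : ℤ) • E (a 1) (a 1) + (0 : ℤ) • E (xa 1) (xa 0) + (2 : ℤ) • E (xa 1) (xa 1))) := by abel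
  rw [key, s1, z1, z2, z3]
  simp

lemma T3 : (4 : ℤ) • E (xa 1) (xa 0) = 0 := by
  have i1 : E (a 2) (a 3) = E (xa 0) (a 1) + E (xa 0) (a 3) :=
    rel1E (g := (xa 0)) (g' := (xa 0)) (h := (a 3)) (p := (a 2)) (q := (xa 0)) (r := (a 1)) (by decide) (by decide) (by decide)
  have s1 : E (a 2) (a 3) - (E (xa 0) (a 1) + E (xa 0) (a 3)) = 0 := by rw [i1]; abel
  have i2 : E (xa 3) (xa 2) = E (xa 1) (xa 2) + E (a 2) (xa 2) :=
    rel1E (g := (a 2)) (g' := (xa 1)) (h := (xa 2)) (p := (xa 3)) (q := (xa 1)) (r := (xa 2)) (by decide) (by decide) (by decide)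
  have s2 : E (xa 3) (xa 2) - (E (xa 1) (xa 2) + E (a 2) (xa 2)) = 0 := by rw [i2]; abel
  have z1 : E (a 2) (a 3) - ((0 : ℤ) • E (a 1) (xa 1) + (6 : ℤ) • E (a 1) (a 1) + (0 : ℤ) • E (xa 1) (xa 0) + (0 : ℤ) • E (xa 1) (xa 1)) = 0 := by rw [ee_a2_a3]; abel
  have z2 : E (xa 0) (a 1) - ((0 : ℤ) • E (a 1) (xa 1) + (1 : ℤ) • E (a 1) (a 1) + (-1 : ℤ) • E (xa 1) (xa 0) + (-1 : ℤ) • E (xa 1) (xa 1)) = 0 := by rw [ee_x0_a1]; abel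
  have z3 : E (xa 0) (a 3) - ((0 : ℤ) • E (a 1) (xa 1) + (3 : ℤ) • E (a 1) (a 1) + (-1 : ℤ) • E (xa 1) (xa 0) + (1 : ℤ) • E (xa 1) (xa 1)) = 0 := by rw [ee_x0_a3]; abel
  have z4 : E (xa 3) (xa 2) - ((0 : ℤ) • E (a 1) (xa 1) + (0 : ℤ) • E (a 1) (a 1) + (-1 : ℤ) • E (xa 1) (xa 0) + (0 : ℤ) • E (xa 1) (xa 1)) = 0 := by rw [ee_x3_x2]; abel
  have z5 : E (xa 1) (xa 2) - ((0 : ℤ) • E (a 1) (xa 1) + (0 : ℤ) • E (a 1) (a 1) + (1 : ℤ) • E (xa 1) (xa 0) + (-2 : ℤ) • E (xa 1) (xa 1)) = 0 := by rw [ee_x1_x2]; abel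
  have z6 : E (a 2) (xa 2) - ((0 : ℤ) • E (a 1) (xa 1) + (-2 : ℤ) • E (a 1) (a 1) + (0 : ℤ) • E (xa 1) (xa 0) + (2 : ℤ) • E (xa 1) (xa 1)) = 0 := by rw [ee_a2_x2]; abel
  have key : (4 : ℤ) • E (xa 1) (xa 0) = (E (a 2) (a 3) - (E (xa 0) (a 1) + E (xa 0) (a 3))) - (E (xa 3) (xa 2) - (E (xa 1) (xa 2) + E (a 2) (xa 2))) - (E (a 2) (a 3) - ((0 : ℤ) • E (a 1) (xa 1) + (6 : ℤ) • E (a 1) (a 1) + (0 : ℤ) • E (xa 1) (xa 0) + (0 : ℤ) • E (xa 1) (xa 1))) + (E (xa 0) (a 1) - ((0 : ℤ) • E (a 1) (xa 1) + (1 : ℤ) • E (a 1) (a 1) + (-1 : ℤ) • E (xa 1) (xa 0) + (-1 : ℤ) • E (xa 1) (xa 1))) + (E (xa 0) (a 3) - ((0 : ℤ) • E (a 1) (xa 1) + (3 : ℤ) • E (a 1) (a 1) + (-1 : ℤ) • E (xa 1) (xa 0) + (1 : ℤ) • E (xa 1) (xa 1))) + (E (xa 3) (xa 2) - ((0 : ℤ)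 • E (a 1) (xa 1) + (0 : ℤ) • E (a 1) (a 1) + (-1 : ℤ) • E (xa 1) (xa 0) + (0 : ℤ) • E (xa 1) (xa 1))) - (E (xa 1) (xa 2) - ((0 : ℤ) • E (a 1) (xa 1) + (0 : ℤ) • E (a 1) (a 1) + (1 : ℤ) • E (xa 1) (xa 0) + (-2 : ℤ) • E (xa 1) (xa 1))) - (E (a 2) (xa 2) - ((0 : ℤ) • E (a 1) (xa 1) + (-2 : ℤ) • E (a 1) (a 1) + (0 : ℤ) • E (xa 1) (xa 0) + (2 : ℤ) • E (xa 1) (xa 1))) := by abel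
  rw [key, s1, s2, z1, z2, z3, z4, z5, z6]
  simp

lemma T2 : (2 : ℤ) • (E (a 1) (a 1) - E (xa 1) (xa 0)) = 0 := by
  have i1 : E (xa 3) (xa 2) = E (xa 1) (xa 2) + E (a 2) (xa 2) :=
    rel1E (g := (a 2)) (g' := (xa 1)) (h := (xa 2)) (p := (xa 3)) (q := (xa 1)) (r := (xa 2)) (by decide) (by decide) (by decide)
  have s1 : E (xa 3) (xa 2) - (E (xa 1) (xa 2) + E (a 2) (xa 2)) = 0 := by rw [i1]; abel
  have z1 : E (xa 3) (xa 2) - ((0 : ℤ) • E (a 1) (xa 1) + (0 : ℤ) • E (a 1) (a 1) + (-1 : ℤ) • E (xa 1) (xa 0) + (0 : ℤ) • E (xa 1) (xa 1)) = 0 := by rw [ee_x3_x2]; abel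
  have z2 : E (xa 1) (xa 2) - ((0 : ℤ) • E (a 1) (xa 1) + (0 : ℤ) • E (a 1) (a 1) + (1 : ℤ) • E (xa 1) (xa 0) + (-2 : ℤ) • E (xa 1) (xa 1)) = 0 := by rw [ee_x1_x2]; abel
  have z3 : E (a 2) (xa 2) - ((0 : ℤ) • E (a 1) (xa 1) + (-2 : ℤ) • E (a 1) (a 1) + (0 : ℤ) • E (xa 1) (xa 0) + (2 : ℤ) • E (xa 1) (xa 1)) = 0 := by rw [ee_a2_x2]; abel
  have key : (2 : ℤ) • (E (a 1) (a 1) - E (xa 1) (xa 0)) = (E (xa 3) (xa 2) - (E (xa 1) (xa 2) + E (a 2) (xa 2))) - (E (xa 3) (xa 2) - ((0 : ℤ) • E (a 1) (xa 1) + (0 : ℤ) • E (a 1) (a 1) + (-1 : ℤ) • E (xa 1) (xa 0) + (0 : ℤ) • E (xa 1) (xa 1))) + (E (xa 1) (xa 2) - ((0 : ℤ) • E (a 1) (xa 1) + (0 : ℤ) • E (a 1) (a 1) + (1 : ℤ) • E (xa 1) (xa 0) + (-2 : ℤ) • E (xa 1) (xa 1))) + (E (a 2) (xa 2) - ((0 :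 ℤ) • E (a 1) (xa 1) + (-2 : ℤ) • E (a 1) (a 1) + (0 : ℤ) • E (xa 1) (xa 0) + (2 : ℤ) • E (xa 1) (xa 1))) := by abel
  rw [key, s1, z1, z2, z3]
  simp

lemma T1 : (2 : ℤ) • (E (a 1) (xa 1) - E (xa 1) (xa 0) + E (xa 1) (xa 1)) = 0 := by
  have i1 : E (a 2) (xa 0) = E (xa 0) (xa 0) + E (xa 0) (xa 0) :=
    rel1E (g := (xa 0)) (g' := (xa 0)) (h := (xa 0)) (p := (a 2)) (q := (xa 0)) (r := (xa 0)) (by decide) (by decide) (by decide)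
  have s1 : E (a 2) (xa 0) - (E (xa 0) (xa 0) + E (xa 0) (xa 0)) = 0 := by rw [i1]; abel
  have z1 : E (a 2) (xa 0) - ((0 : ℤ) • E (a 1) (xa 1) + (2 : ℤ) • E (a 1) (a 1) + (0 : ℤ) • E (xa 1) (xa 0) + (2 : ℤ) • E (xa 1) (xa 1)) = 0 := by rw [ee_a2_x0]; abel
  have z2 : E (xa 0) (xa 0) - ((-1 : ℤ) • E (a 1) (xa 1) + (1 : ℤ) • E (a 1) (a 1) + (-1 : ℤ) • E (xa 1) (xa 0) + (2 : ℤ) • E (xa 1) (xa 1)) = 0 := by rw [ee_x0_x0]; abel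
  have key : (2 : ℤ) • (E (a 1) (xa 1) - E (xa 1) (xa 0) + E (xa 1) (xa 1)) = (E (a 2) (xa 0) - (E (xa 0) (xa 0) + E (xa 0) (xa 0))) - ((4 : ℤ) • E (xa 1) (xa 0)) + ((4 : ℤ) • E (xa 1) (xa 1)) - (E (a 2) (xa 0) - ((0 : ℤ) • E (a 1) (xa 1) + (2 : ℤ) • E (a 1) (a 1) + (0 : ℤ) • E (xa 1) (xa 0) + (2 : ℤ) • E (xa 1) (xa 1))) + (2 : ℤ) • (E (xa 0) (xa 0) - ((-1 : ℤ) • E (a 1) (xa 1) + (1 : ℤ) • E (a 1) (a 1) + (-1 : ℤ) • E (xa 1) (xa 0) + (2 : ℤ) • E (xa 1) (xa 1))) := by abel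
  rw [key, s1, T3, T4, z1, z2]
  simp

abbrev VV : Type := ZMod 2 × ZMod 2 × ZMod 4 × ZMod 4

def z4f (i : ZMod 4) : Fin 4 := ⟨i.val, i.val_lt⟩

def FmAA : Fin 4 → Fin 4 → VV := ![![(0, 0, 0, 0), (0, 0, 0, 0), (0, 0, 0, 0), (0, 0, 0, 0)],
  ![(0, 0, 0, 0), (0, 1, 1, 0), (0, 0, 2, 0), (0, 1, 3, 0)],
  ![(0, 0, 0, 0), (0, 0, 2, 0), (0, 0, 0, 0), (0, 0, 2, 0)],
  ![(0, 0, 0, 0), (0, 1, 3, 0), (0, 0, 2, 0), (0, 1, 1, 0)]]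
def FmAX : Fin 4 → Fin 4 → VV := ![![(0, 0, 0, 0), (0, 0, 0, 0), (0, 0, 0, 0), (0, 0, 0, 0)],
  ![(1, 1, 0, 3), (1, 0, 1, 3), (1, 1, 2, 3), (1, 0, 3, 3)],
  ![(0, 0, 2, 2), (0, 0, 0, 2), (0, 0, 2, 2), (0, 0, 0, 2)],
  ![(1, 1, 2, 1), (1, 0, 1, 1), (1, 1, 0, 1), (1, 0, 3, 1)]]
def FmXA : Fin 4 → Fin 4 → VV := ![![(0, 0, 0, 0), (0, 1, 0, 3), (0, 0, 2, 2), (0, 1, 2, 1)],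
  ![(0, 0, 0, 0), (0, 0, 1, 3), (0, 0, 0, 2), (0, 0, 1, 1)],
  ![(0, 0, 0, 0), (0, 1, 2, 3), (0, 0, 2, 2), (0, 1, 0, 1)],
  ![(0, 0, 0, 0), (0, 0, 3, 3), (0, 0, 0, 2), (0, 0, 3, 1)]]
def FmXX : Fin 4 → Fin 4 → VV := ![![(1, 1, 3, 3), (1, 0, 1, 0), (1, 1, 1, 1), (1, 0, 3, 2)],
  ![(0, 0, 1, 0), (0, 0, 0, 1), (0, 0, 1, 2), (0, 0, 0, 3)],
  ![(1, 1, 1, 1), (1, 0, 1, 2), (1, 1, 3, 3), (1, 0, 3, 0)],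
  ![(0, 0, 3, 2), (0, 0, 0, 3), (0, 0, 3, 0), (0, 0, 0, 1)]]

def Fm : G8 → G8 → VV
  | .a i, .a j => FmAA (z4f i) (z4f j)
  | .a i, .xa j => FmAX (z4f i) (z4f j)
  | .xa i, .a j => FmXA (z4f i) (z4f j)
  | .xa i, .xa j => FmXX (z4f i) (z4f j)

lemma FmL1 : ∀ g g' h : G8, Fm (g*g') h = Fm (g*g'*g⁻¹) (g*h*g⁻¹) + Fm g h := by decide

lemma FmL2 : ∀ g h h' : G8, Fm g (h*h') = Fm g h + Fm (h*g*h⁻¹) (h*h'*h⁻¹) := by decide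

def fmHom : FreeGroup (G8 × G8) →* Multiplicative VV :=
  FreeGroup.lift fun p => Multiplicative.ofAdd (Fm p.1 p.2)

lemma fm_rels : tensorRels G8 ⊆ (fmHom.ker : Set (FreeGroup (G8 × G8))) := by
  rintro x (⟨g, g', h, rfl⟩ | ⟨g, h, h', rfl⟩) <;>
    simp only [SetLike.mem_coe, MonoidHom.mem_ker, map_mul, map_inv, fmHom,
      FreeGroup.lift_apply_of, mul_inv_eq_one]
  · rw [← ofAdd_add]
    exact congrArg Multiplicative.ofAdd (FmL1 g g' h)
  · rw [← ofAdd_add]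
    exact congrArg Multiplicative.ofAdd (FmL2 g h h')

def phiM : TensorSquare G8 →* Multiplicative VV :=
  QuotientGroup.lift _ fmHom
    (fun x hx => Subgroup.normalClosure_le_normal fm_rels hx)

lemma phiM_t (g h : G8) : phiM (tElem g h) = Multiplicative.ofAdd (Fm g h) := by
  show phiM (QuotientGroup.mk (FreeGroup.of (g, h))) = _
  rw [phiM, QuotientGroup.lift_mk]
  exact FreeGroup.lift_apply_of

def phiA : AA →+ VV :=
  AddMonoidHom.mk' (fun x => (phiM x.toMul).toAdd)
    (fun x y => by
      show (phiM (x.toMul * y.toMul)).toAdd = _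
      rw [map_mul]; rfl)

lemma phiA_E (g h : G8) : phiA (E g h) = Fm g h := by
  show (phiM (tElem g h)).toAdd = Fm g h
  rw [phiM_t]; rfl

def U1 : AA := E (a 1) (xa 1) - E (xa 1) (xa 0) + E (xa 1) (xa 1)
def U2 : AA := E (a 1) (a 1) - E (xa 1) (xa 0)
def U3 : AA := E (xa 1) (xa 0)
def U4 : AA := E (xa 1) (xa 1)

lemma phiA_U1 : phiA U1 = ((1 : ZMod 2), (0 : ZMod 2), (0 : ZMod 4), (0 : ZMod 4)) := by
  rw [U1, map_add, map_sub, phiA_E, phiA_E, phiA_E]; decide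
lemma phiA_U2 : phiA U2 = ((0 : ZMod 2), (1 : ZMod 2), (0 : ZMod 4), (0 : ZMod 4)) := by
  rw [U2, map_sub, phiA_E, phiA_E]; decide
lemma phiA_U3 : phiA U3 = ((0 : ZMod 2), (0 : ZMod 2), (1 : ZMod 4), (0 : ZMod 4)) := by
  rw [U3, phiA_E]; decide
lemma phiA_U4 : phiA U4 = ((0 : ZMod 2), (0 : ZMod 2), (0 : ZMod 4), (1 : ZMod 4)) := by
  rw [U4, phiA_E]; decide

def l1 : ZMod 2 →+ AA := ZMod.lift 2 ⟨zmultiplesHom AA U1, by rw [zmultiplesHom_apply, show ((2:ℕ):ℤ) = (2:ℤ) from by norm_num]; exact T1⟩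
def l2 : ZMod 2 →+ AA := ZMod.lift 2 ⟨zmultiplesHom AA U2, by rw [zmultiplesHom_apply, show ((2:ℕ):ℤ) = (2:ℤ) from by norm_num]; exact T2⟩
def l3 : ZMod 4 →+ AA := ZMod.lift 4 ⟨zmultiplesHom AA U3, by rw [zmultiplesHom_apply, show ((4:ℕ):ℤ) = (4:ℤ) from by norm_num]; exact T3⟩
def l4 : ZMod 4 →+ AA := ZMod.lift 4 ⟨zmultiplesHom AA U4, by rw [zmultiplesHom_apply, show ((4:ℕ):ℤ) = (4:ℤ) from by norm_num]; exact T4⟩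

def psi : VV →+ AA :=
  l1.comp (AddMonoidHom.fst _ _) +
  (l2.comp (AddMonoidHom.fst _ _)).comp (AddMonoidHom.snd _ _) +
  ((l3.comp (AddMonoidHom.fst _ _)).comp (AddMonoidHom.snd _ _)).comp (AddMonoidHom.snd _ _) +
  ((l4.comp (AddMonoidHom.snd _ _)).comp (AddMonoidHom.snd _ _)).comp (AddMonoidHom.snd _ _)

lemma psi_apply (v : VV) : psi v = l1 v.1 + l2 v.2.1 + l3 v.2.2.1 + l4 v.2.2.2 := rfl

lemma cast2 : ∀ w : ZMod 2, ((w.val : ℤ) : ZMod 2) = w := by decide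
lemma cast4 : ∀ w : ZMod 4, ((w.val : ℤ) : ZMod 4) = w := by decide

lemma l1_apply (w : ZMod 2) : l1 w = (w.val : ℤ) • U1 := by
  rw [← cast2 w, l1, ZMod.lift_coe]; simp [cast2 w]
lemma l2_apply (w : ZMod 2) : l2 w = (w.val : ℤ) • U2 := by
  rw [← cast2 w, l2, ZMod.lift_coe]; simp [cast2 w]
lemma l3_apply (w : ZMod 4) : l3 w = (w.val : ℤ) • U3 := by
  rw [← cast4 w, l3, ZMod.lift_coe]; simp [cast4 w]
lemma l4_apply (w : ZMod 4) : l4 w = (w.val : ℤ) • U4 := by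
  rw [← cast4 w, l4, ZMod.lift_coe]; simp [cast4 w]

lemma left_inv : ∀ v : VV, phiA (psi v) = v := by
  intro v
  obtain ⟨v1, v2, v3, v4⟩ := v
  rw [psi_apply]
  simp only [map_add, l1_apply, l2_apply, l3_apply, l4_apply, map_zsmul,
    phiA_U1, phiA_U2, phiA_U3, phiA_U4]
  revert v1 v2 v3 v4
  decide


lemma u1_mem : U1 ∈ psi.range := ⟨((1 : ZMod 2), 0, 0, 0), by
  rw [psi_apply]
  simp only [l1_apply, l2_apply, l3_apply, l4_apply]
  rw [show ((1 : ZMod 2)).val = 1 from rfl, show ((0 : ZMod 2)).val = 0 from rfl,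
    show ((0 : ZMod 4)).val = 0 from rfl]
  simp⟩

lemma u2_mem : U2 ∈ psi.range := ⟨(0, (1 : ZMod 2), 0, 0), by
  rw [psi_apply]
  simp only [l1_apply, l2_apply, l3_apply, l4_apply]
  rw [show ((1 : ZMod 2)).val = 1 from rfl, show ((0 : ZMod 2)).val = 0 from rfl,
    show ((0 : ZMod 4)).val = 0 from rfl]
  simp⟩

lemma u3_mem : U3 ∈ psi.range := ⟨(0, 0, (1 : ZMod 4), 0), by
  rw [psi_apply]
  simp only [l1_apply, l2_apply, l3_apply, l4_apply]
  rw [show ((1 : ZMod 4)).val = 1 from rfl, show ((0 : ZMod 2)).val = 0 from rfl,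
    show ((0 : ZMod 4)).val = 0 from rfl]
  simp⟩

lemma u4_mem : U4 ∈ psi.range := ⟨(0, 0, 0, (1 : ZMod 4)), by
  rw [psi_apply]
  simp only [l1_apply, l2_apply, l3_apply, l4_apply]
  rw [show ((1 : ZMod 4)).val = 1 from rfl, show ((0 : ZMod 2)).val = 0 from rfl,
    show ((0 : ZMod 4)).val = 0 from rfl]
  simp⟩

lemma hf1 : E (a 1) (xa 1) ∈ psi.range := by
  have h : E (a 1) (xa 1) = U1 + U3 - U4 := by rw [U1, U3, U4]; abel
  rw [h]
  exact sub_mem (add_mem u1_mem u3_mem) u4_mem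

lemma hf2 : E (a 1) (a 1) ∈ psi.range := by
  have h : E (a 1) (a 1) = U2 + U3 := by rw [U2, U3]; abel
  rw [h]
  exact add_mem u2_mem u3_mem

lemma hf3 : E (xa 1) (xa 0) ∈ psi.range := u3_mem
lemma hf4 : E (xa 1) (xa 1) ∈ psi.range := u4_mem

lemma combo_mem (c1 c2 c3 c4 : ℤ) :
    c1 • E (a 1) (xa 1) + c2 • E (a 1) (a 1) + c3 • E (xa 1) (xa 0) + c4 • E (xa 1) (xa 1) ∈
      psi.range :=
  add_mem (add_mem (add_mem (zsmul_mem hf1 c1) (zsmul_mem hf2 c2)) (zsmul_mem hf3 c3))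
    (zsmul_mem hf4 c4)

lemma allmem (g h : G8) : E g h ∈ psi.range := by
  have m_a0_a0 : E (a 0) (a 0) ∈ psi.range := by
    rw [ee_a0_a0]; exact combo_mem _ _ _ _
  have m_a0_a1 : E (a 0) (a 1) ∈ psi.range := by
    rw [ee_a0_a1]; exact combo_mem _ _ _ _
  have m_a0_a2 : E (a 0) (a 2) ∈ psi.range := by
    rw [ee_a0_a2]; exact combo_mem _ _ _ _
  have m_a0_a3 : E (a 0) (a 3) ∈ psi.range := by
    rw [ee_a0_a3]; exact combo_mem _ _ _ _
  have m_a0_x0 : E (a 0) (xa 0) ∈ psi.range := by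
    rw [ee_a0_x0]; exact combo_mem _ _ _ _
  have m_a0_x1 : E (a 0) (xa 1) ∈ psi.range := by
    rw [ee_a0_x1]; exact combo_mem _ _ _ _
  have m_a0_x2 : E (a 0) (xa 2) ∈ psi.range := by
    rw [ee_a0_x2]; exact combo_mem _ _ _ _
  have m_a0_x3 : E (a 0) (xa 3) ∈ psi.range := by
    rw [ee_a0_x3]; exact combo_mem _ _ _ _
  have m_a1_a0 : E (a 1) (a 0) ∈ psi.range := by
    rw [ee_a1_a0]; exact combo_mem _ _ _ _
  have m_a1_a1 : E (a 1) (a 1) ∈ psi.range := by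
    rw [ee_a1_a1]; exact combo_mem _ _ _ _
  have m_a1_a2 : E (a 1) (a 2) ∈ psi.range := by
    rw [ee_a1_a2]; exact combo_mem _ _ _ _
  have m_a1_a3 : E (a 1) (a 3) ∈ psi.range := by
    rw [ee_a1_a3]; exact combo_mem _ _ _ _
  have m_a1_x0 : E (a 1) (xa 0) ∈ psi.range := by
    rw [ee_a1_x0]; exact combo_mem _ _ _ _
  have m_a1_x1 : E (a 1) (xa 1) ∈ psi.range := by
    rw [ee_a1_x1]; exact combo_mem _ _ _ _
  have m_a1_x2 : E (a 1) (xa 2) ∈ psi.range := by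
    rw [ee_a1_x2]; exact combo_mem _ _ _ _
  have m_a1_x3 : E (a 1) (xa 3) ∈ psi.range := by
    rw [ee_a1_x3]; exact combo_mem _ _ _ _
  have m_a2_a0 : E (a 2) (a 0) ∈ psi.range := by
    rw [ee_a2_a0]; exact combo_mem _ _ _ _
  have m_a2_a1 : E (a 2) (a 1) ∈ psi.range := by
    rw [ee_a2_a1]; exact combo_mem _ _ _ _
  have m_a2_a2 : E (a 2) (a 2) ∈ psi.range := by
    rw [ee_a2_a2]; exact combo_mem _ _ _ _
  have m_a2_a3 : E (a 2) (a 3) ∈ psi.range := by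
    rw [ee_a2_a3]; exact combo_mem _ _ _ _
  have m_a2_x0 : E (a 2) (xa 0) ∈ psi.range := by
    rw [ee_a2_x0]; exact combo_mem _ _ _ _
  have m_a2_x1 : E (a 2) (xa 1) ∈ psi.range := by
    rw [ee_a2_x1]; exact combo_mem _ _ _ _
  have m_a2_x2 : E (a 2) (xa 2) ∈ psi.range := by
    rw [ee_a2_x2]; exact combo_mem _ _ _ _
  have m_a2_x3 : E (a 2) (xa 3) ∈ psi.range := by
    rw [ee_a2_x3]; exact combo_mem _ _ _ _
  have m_a3_a0 : E (a 3) (a 0) ∈ psi.range := by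
    rw [ee_a3_a0]; exact combo_mem _ _ _ _
  have m_a3_a1 : E (a 3) (a 1) ∈ psi.range := by
    rw [ee_a3_a1]; exact combo_mem _ _ _ _
  have m_a3_a2 : E (a 3) (a 2) ∈ psi.range := by
    rw [ee_a3_a2]; exact combo_mem _ _ _ _
  have m_a3_a3 : E (a 3) (a 3) ∈ psi.range := by
    rw [ee_a3_a3]; exact combo_mem _ _ _ _
  have m_a3_x0 : E (a 3) (xa 0) ∈ psi.range := by
    rw [ee_a3_x0]; exact combo_mem _ _ _ _
  have m_a3_x1 : E (a 3) (xa 1) ∈ psi.range := by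
    rw [ee_a3_x1]; exact combo_mem _ _ _ _
  have m_a3_x2 : E (a 3) (xa 2) ∈ psi.range := by
    rw [ee_a3_x2]; exact combo_mem _ _ _ _
  have m_a3_x3 : E (a 3) (xa 3) ∈ psi.range := by
    rw [ee_a3_x3]; exact combo_mem _ _ _ _
  have m_x0_a0 : E (xa 0) (a 0) ∈ psi.range := by
    rw [ee_x0_a0]; exact combo_mem _ _ _ _
  have m_x0_a1 : E (xa 0) (a 1) ∈ psi.range := by
    rw [ee_x0_a1]; exact combo_mem _ _ _ _
  have m_x0_a2 : E (xa 0) (a 2) ∈ psi.range := by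
    rw [ee_x0_a2]; exact combo_mem _ _ _ _
  have m_x0_a3 : E (xa 0) (a 3) ∈ psi.range := by
    rw [ee_x0_a3]; exact combo_mem _ _ _ _
  have m_x0_x0 : E (xa 0) (xa 0) ∈ psi.range := by
    rw [ee_x0_x0]; exact combo_mem _ _ _ _
  have m_x0_x1 : E (xa 0) (xa 1) ∈ psi.range := by
    rw [ee_x0_x1]; exact combo_mem _ _ _ _
  have m_x0_x2 : E (xa 0) (xa 2) ∈ psi.range := by
    rw [ee_x0_x2]; exact combo_mem _ _ _ _
  have m_x0_x3 : E (xa 0) (xa 3) ∈ psi.range := by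
    rw [ee_x0_x3]; exact combo_mem _ _ _ _
  have m_x1_a0 : E (xa 1) (a 0) ∈ psi.range := by
    rw [ee_x1_a0]; exact combo_mem _ _ _ _
  have m_x1_a1 : E (xa 1) (a 1) ∈ psi.range := by
    rw [ee_x1_a1]; exact combo_mem _ _ _ _
  have m_x1_a2 : E (xa 1) (a 2) ∈ psi.range := by
    rw [ee_x1_a2]; exact combo_mem _ _ _ _
  have m_x1_a3 : E (xa 1) (a 3) ∈ psi.range := by
    rw [ee_x1_a3]; exact combo_mem _ _ _ _
  have m_x1_x0 : E (xa 1) (xa 0) ∈ psi.range := by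
    rw [ee_x1_x0]; exact combo_mem _ _ _ _
  have m_x1_x1 : E (xa 1) (xa 1) ∈ psi.range := by
    rw [ee_x1_x1]; exact combo_mem _ _ _ _
  have m_x1_x2 : E (xa 1) (xa 2) ∈ psi.range := by
    rw [ee_x1_x2]; exact combo_mem _ _ _ _
  have m_x1_x3 : E (xa 1) (xa 3) ∈ psi.range := by
    rw [ee_x1_x3]; exact combo_mem _ _ _ _
  have m_x2_a0 : E (xa 2) (a 0) ∈ psi.range := by
    rw [ee_x2_a0]; exact combo_mem _ _ _ _
  have m_x2_a1 : E (xa 2) (a 1) ∈ psi.range := by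
    rw [ee_x2_a1]; exact combo_mem _ _ _ _
  have m_x2_a2 : E (xa 2) (a 2) ∈ psi.range := by
    rw [ee_x2_a2]; exact combo_mem _ _ _ _
  have m_x2_a3 : E (xa 2) (a 3) ∈ psi.range := by
    rw [ee_x2_a3]; exact combo_mem _ _ _ _
  have m_x2_x0 : E (xa 2) (xa 0) ∈ psi.range := by
    rw [ee_x2_x0]; exact combo_mem _ _ _ _
  have m_x2_x1 : E (xa 2) (xa 1) ∈ psi.range := by
    rw [ee_x2_x1]; exact combo_mem _ _ _ _
  have m_x2_x2 : E (xa 2) (xa 2) ∈ psi.range := by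
    rw [ee_x2_x2]; exact combo_mem _ _ _ _
  have m_x2_x3 : E (xa 2) (xa 3) ∈ psi.range := by
    rw [ee_x2_x3]; exact combo_mem _ _ _ _
  have m_x3_a0 : E (xa 3) (a 0) ∈ psi.range := by
    rw [ee_x3_a0]; exact combo_mem _ _ _ _
  have m_x3_a1 : E (xa 3) (a 1) ∈ psi.range := by
    rw [ee_x3_a1]; exact combo_mem _ _ _ _
  have m_x3_a2 : E (xa 3) (a 2) ∈ psi.range := by
    rw [ee_x3_a2]; exact combo_mem _ _ _ _
  have m_x3_a3 : E (xa 3) (a 3) ∈ psi.range := by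
    rw [ee_x3_a3]; exact combo_mem _ _ _ _
  have m_x3_x0 : E (xa 3) (xa 0) ∈ psi.range := by
    rw [ee_x3_x0]; exact combo_mem _ _ _ _
  have m_x3_x1 : E (xa 3) (xa 1) ∈ psi.range := by
    rw [ee_x3_x1]; exact combo_mem _ _ _ _
  have m_x3_x2 : E (xa 3) (xa 2) ∈ psi.range := by
    rw [ee_x3_x2]; exact combo_mem _ _ _ _
  have m_x3_x3 : E (xa 3) (xa 3) ∈ psi.range := by
    rw [ee_x3_x3]; exact combo_mem _ _ _ _
  rcases g with i | i <;> rcases h with j | j <;> fin_cases i <;> fin_cases j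
  exacts [m_a0_a0, m_a0_a1, m_a0_a2, m_a0_a3, m_a1_a0, m_a1_a1, m_a1_a2, m_a1_a3, m_a2_a0, m_a2_a1, m_a2_a2, m_a2_a3, m_a3_a0, m_a3_a1, m_a3_a2, m_a3_a3, m_a0_x0, m_a0_x1, m_a0_x2, m_a0_x3, m_a1_x0, m_a1_x1, m_a1_x2, m_a1_x3, m_a2_x0, m_a2_x1, m_a2_x2, m_a2_x3, m_a3_x0, m_a3_x1, m_a3_x2, m_a3_x3, m_x0_a0, m_x0_a1, m_x0_a2, m_x0_a3, m_x1_a0, m_x1_a1, m_x1_a2, m_x1_a3, m_x2_a0, m_x2_a1, m_x2_a2, m_x2_a3, m_x3_a0, m_x3_a1, m_x3_a2, m_x3_a3, m_x0_x0, m_x0_x1, m_x0_x2, m_x0_x3, m_x1_x0, m_x1_x1, m_x1_x2, m_x1_x3, m_x2_x0, m_x2_x1, m_x2_x2, m_x2_x3, m_x3_x0, m_x3_x1, m_x3_x2, m_x3_x3]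

lemma psi_surj : Function.Surjective psi := by
  have key : ∀ w : FreeGroup (G8 × G8),
      Additive.ofMul (QuotientGroup.mk w : TensorSquare G8) ∈ psi.range := by
    intro w
    induction w using FreeGroup.induction_on with
    | C1 =>
        have : Additive.ofMul (QuotientGroup.mk (1 : FreeGroup (G8 × G8)) :
            TensorSquare G8) = (0 : AA) := rfl
        rw [this]; exact zero_mem _
    | of p => exact allmem p.1 p.2
    | inv_of p hp =>
        have : Additive.ofMul (QuotientGroup.mk ((FreeGroup.of p : FreeGroup (G8 × G8))⁻¹) : TensorSquare G8) =
            -(Additive.ofMul (QuotientGroup.mk (FreeGroup.of p : FreeGroup (G8 × G8)) : TensorSquare G8)) := rfl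
        rw [this]; exact neg_mem hp
    | mul w1 w2 h1 h2 =>
        have : Additive.ofMul (QuotientGroup.mk (w1 * w2) : TensorSquare G8) =
            Additive.ofMul (QuotientGroup.mk w1 : TensorSquare G8) +
            Additive.ofMul (QuotientGroup.mk w2 : TensorSquare G8) := rfl
        rw [this]; exact add_mem h1 h2
  intro x
  obtain ⟨w, hw⟩ := QuotientGroup.mk_surjective (Additive.toMul x)
  have := key w
  rw [hw] at this
  exact this

noncomputable def eqv : VV ≃+ AA :=
  AddEquiv.ofBijective psi ⟨Function.LeftInverse.injective left_inv, psi_surj⟩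

end TSQ8

/-- The nonabelian tensor square of the quaternion group of order 8 is
isomorphic to `C2 × C2 × C4 × C4`. -/
theorem tensorSquare_Q8 :
    Nonempty (TensorSquare (QuaternionGroup 2) ≃*
      (Multiplicative (ZMod 2) × Multiplicative (ZMod 2) ×
        Multiplicative (ZMod 4) × Multiplicative (ZMod 4))) := by
  refine ⟨?_⟩
  exact ((MulEquiv.multiplicativeAdditive (TensorSquare (QuaternionGroup 2))).symm.trans
    (AddEquiv.toMultiplicative TSQ8.eqv.symm)).trans
    ((MulEquiv.prodMultiplicative _ _).trans
      (MulEquiv.prodCongr (MulEquiv.refl _)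
        ((MulEquiv.prodMultiplicative _ _).trans
          (MulEquiv.prodCongr (MulEquiv.refl _) (MulEquiv.prodMultiplicative _ _)))))
end

section
/- Given a central extension 1 → Z → H → G → 1 of groups, there is an exact sequence (Z ⊗ H) × (H ⊗ Z) → H ⊗ H → G ⊗ G → 1, where the image of the first map is central in H ⊗ H. (Here Z ⊗ H and H ⊗ Z denote nonabelian tensor products with respect to the conjugation actions.) -/
section CentralTensor

variable {H : Type*} [Group H] {Z : Subgroup H}

lemma conj_mem (hZ : Z ≤ Subgroup.center H) (z : Z) (h : H) :
    h * (z : H) * h⁻¹ ∈ Z := by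
  have hc := Subgroup.mem_center_iff.mp (hZ z.2) h
  simp [hc, mul_assoc]

/-- Relators for the nonabelian tensor product `Z ⊗ H` (conjugation actions),
for `Z` a central subgroup of `H`. -/
def relsZH (hZ : Z ≤ Subgroup.center H) : Set (FreeGroup (Z × H)) :=
  {x | (∃ (z z' : Z) (h : H), x = FreeGroup.of (z * z', h) *
          (FreeGroup.of (z * z' * z⁻¹, (z : H) * h * (z : H)⁻¹) * FreeGroup.of (z, h))⁻¹) ∨
       (∃ (z : Z) (h h' : H), x = FreeGroup.of (z, h * h') *
          (FreeGroup.of (z, h) *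
            FreeGroup.of (⟨h * (z : H) * h⁻¹, conj_mem hZ z h⟩, h * h' * h⁻¹))⁻¹)}

/-- The nonabelian tensor product `Z ⊗ H` for a central subgroup `Z ≤ H`. -/
abbrev TensorZH (hZ : Z ≤ Subgroup.center H) :=
  FreeGroup (Z × H) ⧸ Subgroup.normalClosure (relsZH hZ)

def tElemZH (hZ : Z ≤ Subgroup.center H) (z : Z) (h : H) : TensorZH hZ :=
  QuotientGroup.mk (FreeGroup.of (z, h))

/-- Relators for the nonabelian tensor product `H ⊗ Z` (conjugation actions),
for `Z` a central subgroup of `H`. -/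
def relsHZ (hZ : Z ≤ Subgroup.center H) : Set (FreeGroup (H × Z)) :=
  {x | (∃ (h h' : H) (z : Z), x = FreeGroup.of (h * h', z) *
          (FreeGroup.of (h * h' * h⁻¹, ⟨h * (z : H) * h⁻¹, conj_mem hZ z h⟩) *
            FreeGroup.of (h, z))⁻¹) ∨
       (∃ (h : H) (z z' : Z), x = FreeGroup.of (h, z * z') *
          (FreeGroup.of (h, z) *
            FreeGroup.of ((z : H) * h * (z : H)⁻¹, z * z' * z⁻¹))⁻¹)}

/-- The nonabelian tensor product `H ⊗ Z` for a central subgroup `Z ≤ H`. -/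
abbrev TensorHZ (hZ : Z ≤ Subgroup.center H) :=
  FreeGroup (H × Z) ⧸ Subgroup.normalClosure (relsHZ hZ)

def tElemHZ (hZ : Z ≤ Subgroup.center H) (h : H) (z : Z) : TensorHZ hZ :=
  QuotientGroup.mk (FreeGroup.of (h, z))

end CentralTensor

section Helpers

variable {α : Type*} {T : Type*} [Group T]

/-- Lift a map on generators to a hom out of a quotient of a free group. -/
def liftQ (S : Set (FreeGroup α)) (f : α → T)
    (h : ∀ r ∈ S, FreeGroup.lift f r = 1) :
    (FreeGroup α ⧸ Subgroup.normalClosure S) →* T :=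
  QuotientGroup.lift _ (FreeGroup.lift f)
    (fun _ hx => Subgroup.normalClosure_le_normal
      (fun r hr => show r ∈ (FreeGroup.lift f).ker from h r hr) hx)

@[simp] lemma liftQ_of (S : Set (FreeGroup α)) (f : α → T) (h) (a : α) :
    liftQ S f h (QuotientGroup.mk (FreeGroup.of a)) = f a := by
  simp [liftQ]

lemma quot_closure_eq_top (S : Set (FreeGroup α)) :
    Subgroup.closure (Set.range fun a : α =>
      (QuotientGroup.mk (FreeGroup.of a) : FreeGroup α ⧸ Subgroup.normalClosure S)) = ⊤ := by
  have h1 : (Subgroup.closure (Set.range (FreeGroup.of : α → FreeGroup α))).map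
      (QuotientGroup.mk' (Subgroup.normalClosure S)) = ⊤ := by
    rw [FreeGroup.closure_range_of]
    exact Subgroup.map_top_of_surjective _ (QuotientGroup.mk'_surjective _)
  rw [MonoidHom.map_closure] at h1
  rw [← h1]
  congr 1
  rw [← Set.range_comp]
  rfl

end Helpers

section Gen

variable {G : Type*} [Group G]

lemma tElem_rel1 (g g' h : G) :
    tElem (g * g') h = tElem (g * g' * g⁻¹) (g * h * g⁻¹) * tElem g h := by
  have hr : (FreeGroup.of (g * g', h) *
      (FreeGroup.of (g * g' * g⁻¹, g * h * g⁻¹) * FreeGroup.of (g, h))⁻¹) ∈ tensorRels G :=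
    Or.inl ⟨g, g', h, rfl⟩
  have h1 : (QuotientGroup.mk (FreeGroup.of (g * g', h) *
      (FreeGroup.of (g * g' * g⁻¹, g * h * g⁻¹) * FreeGroup.of (g, h))⁻¹) :
      TensorSquare G) = 1 :=
    (QuotientGroup.eq_one_iff _).mpr (Subgroup.subset_normalClosure hr)
  rw [QuotientGroup.mk_mul, QuotientGroup.mk_inv, QuotientGroup.mk_mul, mul_inv_eq_one] at h1
  exact h1

lemma tElem_rel2 (g h h' : G) :
    tElem g (h * h') = tElem g h * tElem (h * g * h⁻¹) (h * h' * h⁻¹) := by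
  have hr : (FreeGroup.of (g, h * h') *
      (FreeGroup.of (g, h) * FreeGroup.of (h * g * h⁻¹, h * h' * h⁻¹))⁻¹) ∈ tensorRels G :=
    Or.inr ⟨g, h, h', rfl⟩
  have h1 : (QuotientGroup.mk (FreeGroup.of (g, h * h') *
      (FreeGroup.of (g, h) * FreeGroup.of (h * g * h⁻¹, h * h' * h⁻¹))⁻¹) :
      TensorSquare G) = 1 :=
    (QuotientGroup.eq_one_iff _).mpr (Subgroup.subset_normalClosure hr)
  rw [QuotientGroup.mk_mul, QuotientGroup.mk_inv, QuotientGroup.mk_mul, mul_inv_eq_one] at h1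
  exact h1

lemma tElem_congr {a b a' b' : G} (h1 : a = a') (h2 : b = b') :
    tElem a b = tElem a' b' := by rw [h1, h2]

lemma tElem_one_left (h : G) : tElem 1 h = 1 := by
  have := tElem_rel1 (1 : G) 1 h
  simp only [mul_one, one_mul, inv_one] at this
  exact (mul_eq_left.mp this.symm)

lemma tElem_one_right (g : G) : tElem g 1 = 1 := by
  have := tElem_rel2 g (1 : G) 1
  simp only [mul_one, one_mul, inv_one] at this
  exact (mul_eq_left.mp this.symm)

end Gen

section Conj

variable {G : Type*} [Group G]

lemma tElem_conj (m n p q : G) :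
    tElem (m*n*p*n⁻¹*m⁻¹) (m*n*q*n⁻¹*m⁻¹) * tElem m n
      = tElem m n * tElem (n*m*p*m⁻¹*n⁻¹) (n*m*q*m⁻¹*n⁻¹) := by
  have eq1 : tElem (m*p) (n*q)
      = tElem (m*p*m⁻¹) (m*n*m⁻¹) *
        (tElem (m*n*p*n⁻¹*m⁻¹) (m*n*q*n⁻¹*m⁻¹) *
          (tElem m n * tElem (n*m*n⁻¹) (n*q*n⁻¹))) := by
    calc tElem (m*p) (n*q)
        = tElem (m*p*m⁻¹) (m*(n*q)*m⁻¹) * tElem m (n*q) := tElem_rel1 m p (n*q)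
      _ = tElem (m*p*m⁻¹) ((m*n*m⁻¹)*((m*n*m⁻¹)⁻¹*(m*(n*q)*m⁻¹))) *
            (tElem m n * tElem (n*m*n⁻¹) (n*q*n⁻¹)) := by
          rw [tElem_rel2 m n q]
          rw [tElem_congr (rfl : m*p*m⁻¹ = m*p*m⁻¹)
            (show m*(n*q)*m⁻¹ = (m*n*m⁻¹)*((m*n*m⁻¹)⁻¹*(m*(n*q)*m⁻¹)) by group)]
      _ = (tElem (m*p*m⁻¹) (m*n*m⁻¹) *
            tElem ((m*n*m⁻¹)*(m*p*m⁻¹)*(m*n*m⁻¹)⁻¹)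
              ((m*n*m⁻¹)*((m*n*m⁻¹)⁻¹*(m*(n*q)*m⁻¹))*(m*n*m⁻¹)⁻¹)) *
            (tElem m n * tElem (n*m*n⁻¹) (n*q*n⁻¹)) := by
          rw [tElem_rel2 (m*p*m⁻¹) (m*n*m⁻¹) ((m*n*m⁻¹)⁻¹*(m*(n*q)*m⁻¹))]
      _ = tElem (m*p*m⁻¹) (m*n*m⁻¹) *
            (tElem (m*n*p*n⁻¹*m⁻¹) (m*n*q*n⁻¹*m⁻¹) *
              (tElem m n * tElem (n*m*n⁻¹) (n*q*n⁻¹))) := by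
          rw [tElem_congr
            (show (m*n*m⁻¹)*(m*p*m⁻¹)*(m*n*m⁻¹)⁻¹ = m*n*p*n⁻¹*m⁻¹ by group)
            (show (m*n*m⁻¹)*((m*n*m⁻¹)⁻¹*(m*(n*q)*m⁻¹))*(m*n*m⁻¹)⁻¹ = m*n*q*n⁻¹*m⁻¹ by group),
            mul_assoc]
  have eq2 : tElem (m*p) (n*q)
      = tElem (m*p*m⁻¹) (m*n*m⁻¹) *
        (tElem m n *
          (tElem (n*m*p*m⁻¹*n⁻¹) (n*m*q*m⁻¹*n⁻¹) * tElem (n*m*n⁻¹) (n*q*n⁻¹))) := by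
    calc tElem (m*p) (n*q)
        = tElem (m*p) n * tElem (n*(m*p)*n⁻¹) (n*q*n⁻¹) := tElem_rel2 (m*p) n q
      _ = (tElem (m*p*m⁻¹) (m*n*m⁻¹) * tElem m n) *
            tElem ((n*m*n⁻¹)*((n*m*n⁻¹)⁻¹*(n*(m*p)*n⁻¹))) (n*q*n⁻¹) := by
          rw [tElem_rel1 m p n,
            tElem_congr (show n*(m*p)*n⁻¹ = (n*m*n⁻¹)*((n*m*n⁻¹)⁻¹*(n*(m*p)*n⁻¹)) by group)
              (rfl : n*q*n⁻¹ = n*q*n⁻¹)]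
      _ = (tElem (m*p*m⁻¹) (m*n*m⁻¹) * tElem m n) *
            (tElem ((n*m*n⁻¹)*((n*m*n⁻¹)⁻¹*(n*(m*p)*n⁻¹))*(n*m*n⁻¹)⁻¹)
                ((n*m*n⁻¹)*(n*q*n⁻¹)*(n*m*n⁻¹)⁻¹) *
              tElem (n*m*n⁻¹) (n*q*n⁻¹)) := by
          rw [tElem_rel1 (n*m*n⁻¹) ((n*m*n⁻¹)⁻¹*(n*(m*p)*n⁻¹)) (n*q*n⁻¹)]
      _ = tElem (m*p*m⁻¹) (m*n*m⁻¹) *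
            (tElem m n *
              (tElem (n*m*p*m⁻¹*n⁻¹) (n*m*q*m⁻¹*n⁻¹) * tElem (n*m*n⁻¹) (n*q*n⁻¹))) := by
          rw [tElem_congr
            (show (n*m*n⁻¹)*((n*m*n⁻¹)⁻¹*(n*(m*p)*n⁻¹))*(n*m*n⁻¹)⁻¹ = n*m*p*m⁻¹*n⁻¹ by group)
            (show (n*m*n⁻¹)*(n*q*n⁻¹)*(n*m*n⁻¹)⁻¹ = n*m*q*m⁻¹*n⁻¹ by group),
            mul_assoc]
  have e := mul_left_cancel (eq1.symm.trans eq2)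
  exact mul_right_cancel ((mul_assoc _ _ _).trans (e.trans (mul_assoc _ _ _).symm))

lemma tElem_mem_center {m n : G} (hc : m * n = n * m) :
    tElem m n ∈ Subgroup.center (TensorSquare G) := by
  rw [Subgroup.mem_center_iff]
  intro g
  have hg : g ∈ Subgroup.closure (Set.range fun a : G × G =>
      (QuotientGroup.mk (FreeGroup.of a) : TensorSquare G)) := by
    rw [quot_closure_eq_top]; trivial
  induction hg using Subgroup.closure_induction with
  | mem x hx =>
      obtain ⟨⟨p, q⟩, rfl⟩ := hx
      show tElem p q * tElem m n = tElem m n * tElem p q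
      have hc' : n⁻¹ * m⁻¹ = m⁻¹ * n⁻¹ := by
        rw [← mul_inv_rev, ← mul_inv_rev, hc]
      have key := tElem_conj m n (n⁻¹*m⁻¹*p*m*n) (n⁻¹*m⁻¹*q*m*n)
      rw [tElem_congr (show m*n*(n⁻¹*m⁻¹*p*m*n)*n⁻¹*m⁻¹ = p by group)
            (show m*n*(n⁻¹*m⁻¹*q*m*n)*n⁻¹*m⁻¹ = q by group)] at key
      rw [tElem_congr
            (show n*m*(n⁻¹*m⁻¹*p*m*n)*m⁻¹*n⁻¹ = (n*m)*(n⁻¹*m⁻¹*p*m*n)*(m⁻¹*n⁻¹) by group)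
            (show n*m*(n⁻¹*m⁻¹*q*m*n)*m⁻¹*n⁻¹ = (n*m)*(n⁻¹*m⁻¹*q*m*n)*(m⁻¹*n⁻¹) by group),
          ← hc, ← hc',
          tElem_congr
            (show (m*n)*(n⁻¹*m⁻¹*p*m*n)*(n⁻¹*m⁻¹) = p by group)
            (show (m*n)*(n⁻¹*m⁻¹*q*m*n)*(n⁻¹*m⁻¹) = q by group)] at key
      exact key
  | one => rw [one_mul, mul_one]
  | mul x y _ _ ihx ihy => rw [mul_assoc, ihy, ← mul_assoc, ihx, mul_assoc]
  | inv x _ ih =>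
      exact (Commute.inv_left (a := x) (b := tElem m n) ih)

end Conj

section Helpers2

variable {α : Type*} {T : Type*} [Group T]

lemma quot_mem_of_gen {S : Set (FreeGroup α)}
    {K : Subgroup (FreeGroup α ⧸ Subgroup.normalClosure S)}
    (h : ∀ a, (QuotientGroup.mk (FreeGroup.of a) : FreeGroup α ⧸ Subgroup.normalClosure S) ∈ K)
    (y : FreeGroup α ⧸ Subgroup.normalClosure S) : y ∈ K := by
  have hy : y ∈ Subgroup.closure (Set.range fun a : α =>
      (QuotientGroup.mk (FreeGroup.of a) : FreeGroup α ⧸ Subgroup.normalClosure S)) := by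
    rw [quot_closure_eq_top]; trivial
  induction hy using Subgroup.closure_induction with
  | mem x hx => obtain ⟨a, rfl⟩ := hx; exact h a
  | one => exact K.one_mem
  | mul x y _ _ ihx ihy => exact K.mul_mem ihx ihy
  | inv x _ ih => exact K.inv_mem ih

end Helpers2

section Maps

variable {H : Type*} [Group H] {Z : Subgroup H}

/-- The projection `H ⊗ H → G ⊗ G`. -/
def piT (Z : Subgroup H) [Z.Normal] : TensorSquare H →* TensorSquare (H ⧸ Z) :=
  liftQ (tensorRels H)
    (fun p => tElem (QuotientGroup.mk p.1 : H ⧸ Z) (QuotientGroup.mk p.2))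
    (by
      rintro r (⟨g, g', h, rfl⟩ | ⟨g, h, h', rfl⟩) <;>
        simp only [map_mul, map_inv, FreeGroup.lift_apply_of, mul_inv_eq_one, QuotientGroup.mk_mul,
          QuotientGroup.mk_inv]
      · exact tElem_rel1 _ _ _
      · exact tElem_rel2 _ _ _)

@[simp] lemma piT_tElem [Z.Normal] (a b : H) :
    piT Z (tElem a b) = tElem (QuotientGroup.mk a : H ⧸ Z) (QuotientGroup.mk b) :=
  liftQ_of _ _ _ (a, b)

/-- The map `Z ⊗ H → H ⊗ H`. -/
def lZH (hZ : Z ≤ Subgroup.center H) : TensorZH hZ →* TensorSquare H :=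
  liftQ (relsZH hZ) (fun p => tElem (p.1 : H) p.2)
    (by
      rintro r (⟨z, z', h, rfl⟩ | ⟨z, h, h', rfl⟩) <;>
        simp only [map_mul, map_inv, FreeGroup.lift_apply_of, mul_inv_eq_one, Subgroup.coe_mul,
          InvMemClass.coe_inv]
      · exact tElem_rel1 _ _ _
      · exact tElem_rel2 _ _ _)

@[simp] lemma lZH_tElem (hZ : Z ≤ Subgroup.center H) (z : Z) (h : H) :
    lZH hZ (tElemZH hZ z h) = tElem (z : H) h :=
  liftQ_of _ _ _ (z, h)

/-- The map `H ⊗ Z → H ⊗ H`. -/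
def lHZ (hZ : Z ≤ Subgroup.center H) : TensorHZ hZ →* TensorSquare H :=
  liftQ (relsHZ hZ) (fun p => tElem p.1 (p.2 : H))
    (by
      rintro r (⟨h, h', z, rfl⟩ | ⟨h, z, z', rfl⟩) <;>
        simp only [map_mul, map_inv, FreeGroup.lift_apply_of, mul_inv_eq_one, Subgroup.coe_mul,
          InvMemClass.coe_inv]
      · exact tElem_rel1 _ _ _
      · exact tElem_rel2 _ _ _)

@[simp] lemma lHZ_tElem (hZ : Z ≤ Subgroup.center H) (h : H) (z : Z) :
    lHZ hZ (tElemHZ hZ h z) = tElem h (z : H) :=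
  liftQ_of _ _ _ (h, z)

lemma lZH_range_center (hZ : Z ≤ Subgroup.center H) :
    (lZH hZ).range ≤ Subgroup.center (TensorSquare H) := by
  rintro _ ⟨y, rfl⟩
  refine quot_mem_of_gen (K := (Subgroup.center (TensorSquare H)).comap (lZH hZ)) ?_ y
  rintro ⟨z, h⟩
  simp only [Subgroup.mem_comap]
  have : lZH hZ (QuotientGroup.mk (FreeGroup.of (z, h))) = tElem (z : H) h :=
    liftQ_of _ _ _ (z, h)
  rw [this]
  exact tElem_mem_center ((Subgroup.mem_center_iff.mp (hZ z.2) h).symm)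

lemma lHZ_range_center (hZ : Z ≤ Subgroup.center H) :
    (lHZ hZ).range ≤ Subgroup.center (TensorSquare H) := by
  rintro _ ⟨y, rfl⟩
  refine quot_mem_of_gen (K := (Subgroup.center (TensorSquare H)).comap (lHZ hZ)) ?_ y
  rintro ⟨h, z⟩
  simp only [Subgroup.mem_comap]
  have : lHZ hZ (QuotientGroup.mk (FreeGroup.of (h, z))) = tElem h (z : H) :=
    liftQ_of _ _ _ (h, z)
  rw [this]
  exact tElem_mem_center (Subgroup.mem_center_iff.mp (hZ z.2) h)

end Maps


section Splitting

variable {H : Type*} [Group H] {Z : Subgroup H} [Z.Normal]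

lemma step1 (hZ : Z ≤ Subgroup.center H) (K : Subgroup (TensorSquare H)) [K.Normal]
    (hzl : ∀ (w : Z) (c : H), tElem (w : H) c ∈ K) (a c : H) (w : Z) :
    QuotientGroup.mk' K (tElem (a * (w : H)) c) = QuotientGroup.mk' K (tElem a c) := by
  have hmem : tElem (a * (w : H) * a⁻¹) (a * c * a⁻¹) ∈ K :=
    hzl ⟨a * (w : H) * a⁻¹, conj_mem hZ w a⟩ (a * c * a⁻¹)
  have h1 : QuotientGroup.mk' K (tElem (a * (w : H) * a⁻¹) (a * c * a⁻¹)) = 1 :=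
    (QuotientGroup.eq_one_iff _).mpr hmem
  rw [tElem_rel1 a (w : H) c, map_mul, h1, one_mul]

lemma step2 (hZ : Z ≤ Subgroup.center H) (K : Subgroup (TensorSquare H)) [K.Normal]
    (hzr : ∀ (c : H) (w : Z), tElem c (w : H) ∈ K) (a c : H) (w : Z) :
    QuotientGroup.mk' K (tElem a (c * (w : H))) = QuotientGroup.mk' K (tElem a c) := by
  have hmem : tElem (c * a * c⁻¹) (c * (w : H) * c⁻¹) ∈ K :=
    hzr (c * a * c⁻¹) ⟨c * (w : H) * c⁻¹, conj_mem hZ w c⟩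
  have h1 : QuotientGroup.mk' K (tElem (c * a * c⁻¹) (c * (w : H) * c⁻¹)) = 1 :=
    (QuotientGroup.eq_one_iff _).mpr hmem
  rw [tElem_rel2 a c (w : H), map_mul, h1, mul_one]

/-- The descended generator map `G × G → (H ⊗ H) ⧸ K`. -/
def fG (hZ : Z ≤ Subgroup.center H) (K : Subgroup (TensorSquare H)) [K.Normal]
    (hzl : ∀ (w : Z) (c : H), tElem (w : H) c ∈ K)
    (hzr : ∀ (c : H) (w : Z), tElem c (w : H) ∈ K) :
    H ⧸ Z → H ⧸ Z → TensorSquare H ⧸ K := fun x y =>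
  Quotient.liftOn₂' x y (fun a b => QuotientGroup.mk' K (tElem a b))
    (fun a₁ a₂ b₁ b₂ h1 h2 => by
      have hz1 : a₁⁻¹ * b₁ ∈ Z := QuotientGroup.leftRel_apply.mp h1
      have hz2 : a₂⁻¹ * b₂ ∈ Z := QuotientGroup.leftRel_apply.mp h2
      have e1 : b₁ = a₁ * ((⟨a₁⁻¹ * b₁, hz1⟩ : Z) : H) := by
        show b₁ = a₁ * (a₁⁻¹ * b₁); group
      have e2 : b₂ = a₂ * ((⟨a₂⁻¹ * b₂, hz2⟩ : Z) : H) := by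
        show b₂ = a₂ * (a₂⁻¹ * b₂); group
      rw [e1, e2, step1 hZ K hzl a₁ (a₂ * ((⟨a₂⁻¹ * b₂, hz2⟩ : Z) : H)) ⟨a₁⁻¹ * b₁, hz1⟩,
        step2 hZ K hzr a₁ a₂ ⟨a₂⁻¹ * b₂, hz2⟩])

lemma fG_mk (hZ : Z ≤ Subgroup.center H) (K : Subgroup (TensorSquare H)) [K.Normal]
    (hzl : ∀ (w : Z) (c : H), tElem (w : H) c ∈ K)
    (hzr : ∀ (c : H) (w : Z), tElem c (w : H) ∈ K) (a b : H) :
    fG hZ K hzl hzr (QuotientGroup.mk a) (QuotientGroup.mk b)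
      = QuotientGroup.mk' K (tElem a b) := rfl

/-- The splitting map `G ⊗ G → (H ⊗ H) ⧸ K`. -/
def sG (hZ : Z ≤ Subgroup.center H) (K : Subgroup (TensorSquare H)) [K.Normal]
    (hzl : ∀ (w : Z) (c : H), tElem (w : H) c ∈ K)
    (hzr : ∀ (c : H) (w : Z), tElem c (w : H) ∈ K) :
    TensorSquare (H ⧸ Z) →* TensorSquare H ⧸ K :=
  liftQ (tensorRels (H ⧸ Z)) (fun p => fG hZ K hzl hzr p.1 p.2)
    (by
      rintro r (⟨g, g', h, rfl⟩ | ⟨g, h, h', rfl⟩)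
      · obtain ⟨a, rfl⟩ := QuotientGroup.mk_surjective g
        obtain ⟨b, rfl⟩ := QuotientGroup.mk_surjective g'
        obtain ⟨c, rfl⟩ := QuotientGroup.mk_surjective h
        simp only [map_mul, map_inv, FreeGroup.lift_apply_of, mul_inv_eq_one,
          ← QuotientGroup.mk_mul, ← QuotientGroup.mk_inv]
        rw [fG_mk, fG_mk, fG_mk, ← map_mul]
        exact congrArg _ (tElem_rel1 a b c)
      · obtain ⟨a, rfl⟩ := QuotientGroup.mk_surjective g
        obtain ⟨b, rfl⟩ := QuotientGroup.mk_surjective h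
        obtain ⟨c, rfl⟩ := QuotientGroup.mk_surjective h'
        simp only [map_mul, map_inv, FreeGroup.lift_apply_of, mul_inv_eq_one,
          ← QuotientGroup.mk_mul, ← QuotientGroup.mk_inv]
        rw [fG_mk, fG_mk, fG_mk, ← map_mul]
        exact congrArg _ (tElem_rel2 a b c))

lemma sG_piT (hZ : Z ≤ Subgroup.center H) (K : Subgroup (TensorSquare H)) [K.Normal]
    (hzl : ∀ (w : Z) (c : H), tElem (w : H) c ∈ K)
    (hzr : ∀ (c : H) (w : Z), tElem c (w : H) ∈ K) (x : TensorSquare H) :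
    sG hZ K hzl hzr (piT Z x) = QuotientGroup.mk' K x := by
  refine quot_mem_of_gen
    (K := MonoidHom.eqLocus ((sG hZ K hzl hzr).comp (piT Z)) (QuotientGroup.mk' K)) ?_ x
  rintro ⟨a, b⟩
  show sG hZ K hzl hzr (piT Z (tElem a b)) = QuotientGroup.mk' K (tElem a b)
  rw [piT_tElem]
  have h1 : sG hZ K hzl hzr (tElem (QuotientGroup.mk a : H ⧸ Z) (QuotientGroup.mk b))
      = fG hZ K hzl hzr (QuotientGroup.mk a) (QuotientGroup.mk b) :=
    liftQ_of _ _ _ ((QuotientGroup.mk a : H ⧸ Z), (QuotientGroup.mk b : H ⧸ Z))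
  rw [h1, fG_mk]

lemma ker_le_K (hZ : Z ≤ Subgroup.center H) (K : Subgroup (TensorSquare H)) [K.Normal]
    (hzl : ∀ (w : Z) (c : H), tElem (w : H) c ∈ K)
    (hzr : ∀ (c : H) (w : Z), tElem c (w : H) ∈ K) : (piT Z).ker ≤ K := by
  intro x hx
  rw [MonoidHom.mem_ker] at hx
  have h := sG_piT hZ K hzl hzr x
  rw [hx, map_one] at h
  exact (QuotientGroup.eq_one_iff x).mp h.symm

end Splitting

/-- Brown–Loday: for a central extension `1 → Z → H → G → 1` there is an exact sequence
`(Z ⊗ H) × (H ⊗ Z) → H ⊗ H → G ⊗ G → 1` whose first map has central image. -/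
theorem tensorSquare_central_extension (H : Type*) [Group H] (Z : Subgroup H)
    (hZ : Z ≤ Subgroup.center H) [Z.Normal] :
    ∃ (l : (TensorZH hZ × TensorHZ hZ) →* TensorSquare H)
      (π : TensorSquare H →* TensorSquare (H ⧸ Z)),
      (∀ (z : Z) (h : H), l (tElemZH hZ z h, 1) = tElem (z : H) h) ∧
      (∀ (h : H) (z : Z), l (1, tElemHZ hZ h z) = tElem h (z : H)) ∧
      (∀ a b : H, π (tElem a b) =
        tElem (QuotientGroup.mk a : H ⧸ Z) (QuotientGroup.mk b)) ∧
      Function.Surjective π ∧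
      l.range ≤ Subgroup.center (TensorSquare H) ∧
      l.range = π.ker := by
  have hcomm : ∀ (m : TensorZH hZ) (n : TensorHZ hZ), Commute (lZH hZ m) (lHZ hZ n) :=
    fun m n => Subgroup.mem_center_iff.mp (lHZ_range_center hZ ⟨n, rfl⟩) (lZH hZ m)
  refine ⟨(lZH hZ).noncommCoprod (lHZ hZ) hcomm, piT Z, ?_, ?_, ?_, ?_, ?_, ?_⟩
  · intro z h
    simp [MonoidHom.noncommCoprod_apply, lZH_tElem]
  · intro h z
    simp [MonoidHom.noncommCoprod_apply, lHZ_tElem]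
  · intro a b
    exact piT_tElem a b
  · intro y
    have hy : y ∈ (piT Z).range := by
      refine quot_mem_of_gen (K := (piT Z).range) ?_ y
      rintro ⟨g, h⟩
      obtain ⟨a, rfl⟩ := QuotientGroup.mk_surjective g
      obtain ⟨b, rfl⟩ := QuotientGroup.mk_surjective h
      exact ⟨tElem a b, piT_tElem a b⟩
    exact hy
  · rintro _ ⟨p, rfl⟩
    rw [MonoidHom.noncommCoprod_apply]
    exact Subgroup.mul_mem _ (lZH_range_center hZ ⟨p.1, rfl⟩) (lHZ_range_center hZ ⟨p.2, rfl⟩)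
  · set l := (lZH hZ).noncommCoprod (lHZ hZ) hcomm with hldef
    have hcent : l.range ≤ Subgroup.center (TensorSquare H) := by
      rintro _ ⟨p, rfl⟩
      rw [hldef, MonoidHom.noncommCoprod_apply]
      exact Subgroup.mul_mem _ (lZH_range_center hZ ⟨p.1, rfl⟩) (lHZ_range_center hZ ⟨p.2, rfl⟩)
    haveI hnorm : l.range.Normal := by
      constructor
      intro x hx g
      rw [Subgroup.mem_center_iff.mp (hcent hx) g, mul_inv_cancel_right]
      exact hx
    have hzl : ∀ (w : Z) (c : H), tElem (w : H) c ∈ l.range := by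
      intro w c
      refine ⟨(tElemZH hZ w c, 1), ?_⟩
      simp [hldef, MonoidHom.noncommCoprod_apply, lZH_tElem]
    have hzr : ∀ (c : H) (w : Z), tElem c (w : H) ∈ l.range := by
      intro c w
      refine ⟨(1, tElemHZ hZ c w), ?_⟩
      simp [hldef, MonoidHom.noncommCoprod_apply, lHZ_tElem]
    refine le_antisymm ?_ (ker_le_K hZ l.range hzl hzr)
    rintro _ ⟨p, rfl⟩
    rw [MonoidHom.mem_ker, hldef, MonoidHom.noncommCoprod_apply, map_mul]
    have h1 : piT Z (lZH hZ p.1) = 1 := by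
      have : p.1 ∈ ((piT Z).comp (lZH hZ)).ker := by
        refine quot_mem_of_gen (K := ((piT Z).comp (lZH hZ)).ker) ?_ p.1
        rintro ⟨z, h⟩
        show piT Z (lZH hZ (tElemZH hZ z h)) = 1
        rw [lZH_tElem, piT_tElem]
        rw [show (QuotientGroup.mk (z : H) : H ⧸ Z) = 1 from
          (QuotientGroup.eq_one_iff _).mpr z.2, tElem_one_left]
      exact this
    have h2 : piT Z (lHZ hZ p.2) = 1 := by
      have : p.2 ∈ ((piT Z).comp (lHZ hZ)).ker := by
        refine quot_mem_of_gen (K := ((piT Z).comp (lHZ hZ)).ker) ?_ p.2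
        rintro ⟨h, z⟩
        show piT Z (lHZ hZ (tElemHZ hZ h z)) = 1
        rw [lHZ_tElem, piT_tElem]
        rw [show (QuotientGroup.mk (z : H) : H ⧸ Z) = 1 from
          (QuotientGroup.eq_one_iff _).mpr z.2, tElem_one_right]
      exact this
    rw [h1, h2, one_mul]
end

section
/- Let G be a finite nonabelian p-group of order p^n with derived subgroup of order p such that the abelianization G/G' is not elementary abelian. Then the order of the nonabelian tensor square G ⊗ G is strictly less than p^((n-1)²+2). -/
namespace TensorAux

variable {G : Type*} [Group G]

theorem rel1 (g g' h : G) :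
    tElem (g * g') h = tElem (g*g'*g⁻¹) (g*h*g⁻¹) * tElem g h := by
  have hmem : (FreeGroup.of (g * g', h) *
      (FreeGroup.of (g*g'*g⁻¹, g*h*g⁻¹) * FreeGroup.of (g, h))⁻¹ : FreeGroup (G×G))
      ∈ Subgroup.normalClosure (tensorRels G) :=
    Subgroup.subset_normalClosure (Or.inl ⟨g, g', h, rfl⟩)
  have h1 := (QuotientGroup.eq_one_iff _).mpr hmem
  rw [QuotientGroup.mk_mul, QuotientGroup.mk_inv, QuotientGroup.mk_mul, mul_inv_eq_one] at h1
  exact h1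

theorem rel2 (g h h' : G) :
    tElem g (h * h') = tElem g h * tElem (h*g*h⁻¹) (h*h'*h⁻¹) := by
  have hmem : (FreeGroup.of (g, h * h') *
      (FreeGroup.of (g, h) * FreeGroup.of (h*g*h⁻¹, h*h'*h⁻¹))⁻¹ : FreeGroup (G×G))
      ∈ Subgroup.normalClosure (tensorRels G) :=
    Subgroup.subset_normalClosure (Or.inr ⟨g, h, h', rfl⟩)
  have h1 := (QuotientGroup.eq_one_iff _).mpr hmem
  rw [QuotientGroup.mk_mul, QuotientGroup.mk_inv, QuotientGroup.mk_mul, mul_inv_eq_one] at h1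
  exact h1

theorem t_one_left (h : G) : tElem (1:G) h = 1 := by
  have := rel1 (1:G) 1 h
  simp only [mul_one, one_mul, inv_one] at this
  exact (right_eq_mul.mp this)

theorem t_one_right (g : G) : tElem g (1:G) = 1 := by
  have := rel2 g (1:G) 1
  simp only [mul_one, one_mul, inv_one] at this
  exact (left_eq_mul.mp this)

theorem star (g h x y : G) :
    tElem ((g*h)*x*(g*h)⁻¹) ((g*h)*y*(g*h)⁻¹) * tElem g h
      = tElem g h * tElem ((h*g)*x*(h*g)⁻¹) ((h*g)*y*(h*g)⁻¹) := by
  -- expand tElem (g*x) (h*y) two ways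
  have wayA : tElem (g*x) (h*y) =
      tElem (g*x*g⁻¹) (g*h*g⁻¹) *
        (tElem ((g*h)*x*(g*h)⁻¹) ((g*h)*y*(g*h)⁻¹) *
          (tElem g h * tElem (h*g*h⁻¹) (h*y*h⁻¹))) := by
    rw [rel1 g x (h*y), rel2 g h y]
    have e1 : g*(h*y)*g⁻¹ = (g*h*g⁻¹) * (g*y*g⁻¹) := by group
    rw [e1, rel2 (g*x*g⁻¹) (g*h*g⁻¹) (g*y*g⁻¹)]
    have e2 : (g*h*g⁻¹)*(g*x*g⁻¹)*(g*h*g⁻¹)⁻¹ = (g*h)*x*(g*h)⁻¹ := by group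
    have e3 : (g*h*g⁻¹)*(g*y*g⁻¹)*(g*h*g⁻¹)⁻¹ = (g*h)*y*(g*h)⁻¹ := by group
    rw [e2, e3, mul_assoc]
  have wayB : tElem (g*x) (h*y) =
      tElem (g*x*g⁻¹) (g*h*g⁻¹) *
        (tElem g h *
          (tElem ((h*g)*x*(h*g)⁻¹) ((h*g)*y*(h*g)⁻¹) * tElem (h*g*h⁻¹) (h*y*h⁻¹))) := by
    rw [rel2 (g*x) h y, rel1 g x h]
    have e1 : h*(g*x)*h⁻¹ = (h*g*h⁻¹) * (h*x*h⁻¹) := by group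
    rw [e1, rel1 (h*g*h⁻¹) (h*x*h⁻¹) (h*y*h⁻¹)]
    have e2 : (h*g*h⁻¹)*(h*x*h⁻¹)*(h*g*h⁻¹)⁻¹ = (h*g)*x*(h*g)⁻¹ := by group
    have e3 : (h*g*h⁻¹)*(h*y*h⁻¹)*(h*g*h⁻¹)⁻¹ = (h*g)*y*(h*g)⁻¹ := by group
    rw [e2, e3, mul_assoc, mul_assoc]
  have := wayA.symm.trans wayB
  have h2 := mul_left_cancel this
  rw [← mul_assoc, ← mul_assoc] at h2
  exact mul_right_cancel h2

end TensorAux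

namespace TensorAux

variable {G : Type*} [Group G]

variable (hZ : ∀ z ∈ commutator G, ∀ g : G, Commute z g)

/-- commutators are in the commutator subgroup -/
theorem comm_mem (g h : G) : g*h*g⁻¹*h⁻¹ ∈ commutator G := by
  have := Subgroup.commutator_mem_commutator (Subgroup.mem_top g) (Subgroup.mem_top h)
  rw [← commutator_def] at this
  simpa [commutatorElement_def, mul_assoc] using this

include hZ

theorem conj_eq (z : G) (hz : z ∈ commutator G) (x : G) : z * x * z⁻¹ = x := by
  rw [(hZ z hz x).eq]; group

theorem gen_comm (g h x y : G) : Commute (tElem g h) (tElem x y) := by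
  have hs := star g h ((h*g)⁻¹*x*(h*g)) ((h*g)⁻¹*y*(h*g))
  have k := comm_mem g h
  have e1 : (g*h)*((h*g)⁻¹*x*(h*g))*(g*h)⁻¹ = (g*h*g⁻¹*h⁻¹) * x * (g*h*g⁻¹*h⁻¹)⁻¹ := by group
  have e2 : (g*h)*((h*g)⁻¹*y*(h*g))*(g*h)⁻¹ = (g*h*g⁻¹*h⁻¹) * y * (g*h*g⁻¹*h⁻¹)⁻¹ := by group
  have e3 : (h*g)*((h*g)⁻¹*x*(h*g))*(h*g)⁻¹ = x := by group
  have e4 : (h*g)*((h*g)⁻¹*y*(h*g))*(h*g)⁻¹ = y := by group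
  rw [e1, e2, e3, e4, conj_eq hZ _ k x, conj_eq hZ _ k y] at hs
  exact (Commute.eq hs).symm

theorem t_comm : ∀ a b : TensorSquare G, a * b = b * a := by
  have key : ∀ (g h : G) (b : TensorSquare G), Commute (tElem g h) b := by
    intro g h b
    refine QuotientGroup.induction_on b (fun w => ?_)
    refine FreeGroup.induction_on (C := fun w => Commute (tElem g h) (QuotientGroup.mk w))
      w (Commute.one_right _) (fun x => gen_comm hZ g h x.1 x.2)
      (fun x hx => ?_) (fun x y hx hy => ?_)
    · simp only [QuotientGroup.mk_inv]; exact Commute.inv_right hx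
    · simp only [QuotientGroup.mk_mul]; exact Commute.mul_right hx hy
  intro a b
  suffices h : Commute a b from h.eq
  refine QuotientGroup.induction_on a (fun w => ?_)
  refine FreeGroup.induction_on (C := fun w => Commute (QuotientGroup.mk w) b)
    w (Commute.one_left _) (fun x => key x.1 x.2 b)
    (fun x hx => ?_) (fun x y hx hy => ?_)
  · simp only [QuotientGroup.mk_inv]; exact Commute.inv_left hx
  · simp only [QuotientGroup.mk_mul]; exact Commute.mul_left hx hy

theorem t_left_comm : ∀ a b c : TensorSquare G, a * (b * c) = b * (a * c) := by
  intro a b c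
  rw [← mul_assoc, t_comm hZ a b, mul_assoc]

theorem zleft {z : G} (hz : z ∈ commutator G) (g h : G) :
    tElem (z*g) h = tElem g h * tElem z h := by
  have := rel1 z g h
  rwa [conj_eq hZ z hz g, conj_eq hZ z hz h] at this

theorem zright {z : G} (hz : z ∈ commutator G) (g h : G) :
    tElem g (z*h) = tElem g z * tElem g h := by
  have := rel2 g z h
  rwa [conj_eq hZ z hz g, conj_eq hZ z hz h] at this

theorem zleft_pow {z : G} (hz : z ∈ commutator G) (g : G) (k : ℕ) :
    tElem (z^k) g = (tElem z g)^k := by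
  induction k with
  | zero => simpa using t_one_left g
  | succ m ih =>
    rw [pow_succ, pow_succ, ← ih]
    have : z ^ m * z = z * z ^ m := (Commute.self_pow z m).symm.eq
    rw [this, zleft hZ hz, t_comm hZ]

theorem zright_pow {z : G} (hz : z ∈ commutator G) (g : G) (k : ℕ) :
    tElem g (z^k) = (tElem g z)^k := by
  induction k with
  | zero => simpa using t_one_right g
  | succ m ih =>
    rw [pow_succ, pow_succ, ← ih]
    have : z ^ m * z = z * z ^ m := (Commute.self_pow z m).symm.eq
    rw [this, zright hZ hz, t_comm hZ]

variable {K : Subgroup (TensorSquare G)}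
variable (hK1 : ∀ z ∈ commutator G, ∀ g : G, tElem z g ∈ K)
variable (hK2 : ∀ z ∈ commutator G, ∀ g : G, tElem g z ∈ K)

include hK1 hK2

theorem mul_mod_left (g g' h : G) :
    ∃ k ∈ K, tElem (g*g') h = tElem g h * tElem g' h * k := by
  have hr := rel1 g g' h
  have hz1 : (g*g'*g⁻¹*g'⁻¹) ∈ commutator G := comm_mem g g'
  have hz2 : (g*h*g⁻¹*h⁻¹) ∈ commutator G := comm_mem g h
  have e1 : g*g'*g⁻¹ = (g*g'*g⁻¹*g'⁻¹) * g' := by group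
  have e2 : g*h*g⁻¹ = (g*h*g⁻¹*h⁻¹) * h := by group
  rw [e1, e2, zleft hZ hz1, zright hZ hz2] at hr
  refine ⟨tElem g' (g*h*g⁻¹*h⁻¹) * tElem ((g*g'*g⁻¹*g'⁻¹)) ((g*h*g⁻¹*h⁻¹)*h), ?_, ?_⟩
  · exact K.mul_mem (hK2 _ hz2 g') (hK1 _ hz1 _)
  · rw [hr]
    simp only [t_comm hZ, t_left_comm hZ, mul_assoc]

theorem mul_mod_right (g h h' : G) :
    ∃ k ∈ K, tElem g (h*h') = tElem g h * tElem g h' * k := by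
  have hr := rel2 g h h'
  have hz1 : (h*g*h⁻¹*g⁻¹) ∈ commutator G := comm_mem h g
  have hz2 : (h*h'*h⁻¹*h'⁻¹) ∈ commutator G := comm_mem h h'
  have e1 : h*g*h⁻¹ = (h*g*h⁻¹*g⁻¹) * g := by group
  have e2 : h*h'*h⁻¹ = (h*h'*h⁻¹*h'⁻¹) * h' := by group
  rw [e1, e2, zleft hZ hz1, zright hZ hz2] at hr
  refine ⟨tElem g (h*h'*h⁻¹*h'⁻¹) * tElem ((h*g*h⁻¹*g⁻¹)) ((h*h'*h⁻¹*h'⁻¹)*h'), ?_, ?_⟩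
  · exact K.mul_mem (hK2 _ hz2 g) (hK1 _ hz1 _)
  · rw [hr]
    simp only [t_comm hZ, t_left_comm hZ, mul_assoc]

theorem pow_mod_left (g h : G) (a : ℕ) :
    ∃ k ∈ K, tElem (g^a) h = (tElem g h)^a * k := by
  induction a with
  | zero => exact ⟨1, K.one_mem, by simpa using t_one_left h⟩
  | succ m ih =>
    obtain ⟨k, hk, hk2⟩ := ih
    obtain ⟨k', hk', hk'2⟩ := mul_mod_left hZ hK1 hK2 g (g^m) h
    refine ⟨k * k', K.mul_mem hk hk', ?_⟩
    have : g ^ (m+1) = g * g ^ m := by rw [pow_succ, (Commute.self_pow g m).symm.eq]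
    rw [this, hk'2, hk2, pow_succ]
    simp only [t_comm hZ, t_left_comm hZ, mul_assoc]

theorem pow_mod_right (g h : G) (a : ℕ) :
    ∃ k ∈ K, tElem g (h^a) = (tElem g h)^a * k := by
  induction a with
  | zero => exact ⟨1, K.one_mem, by simpa using t_one_right g⟩
  | succ m ih =>
    obtain ⟨k, hk, hk2⟩ := ih
    obtain ⟨k', hk', hk'2⟩ := mul_mod_right hZ hK1 hK2 g h (h^m)
    refine ⟨k * k', K.mul_mem hk hk', ?_⟩
    have : h ^ (m+1) = h * h ^ m := by rw [pow_succ, (Commute.self_pow h m).symm.eq]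
    rw [this, hk'2, hk2, pow_succ]
    simp only [t_comm hZ, t_left_comm hZ, mul_assoc]

theorem inv_mod_left (g h : G) :
    ∃ k ∈ K, tElem g⁻¹ h = (tElem g h)⁻¹ * k := by
  obtain ⟨k, hk, hk2⟩ := mul_mod_left hZ hK1 hK2 g g⁻¹ h
  rw [mul_inv_cancel, t_one_left] at hk2
  refine ⟨k⁻¹, K.inv_mem hk, ?_⟩
  have h1 : tElem g h * tElem g⁻¹ h * k = 1 := hk2.symm
  calc tElem g⁻¹ h = (tElem g h)⁻¹ * (tElem g h * tElem g⁻¹ h * k) * k⁻¹ := by group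
    _ = (tElem g h)⁻¹ * 1 * k⁻¹ := by rw [h1]
    _ = (tElem g h)⁻¹ * k⁻¹ := by group

theorem inv_mod_right (g h : G) :
    ∃ k ∈ K, tElem g h⁻¹ = (tElem g h)⁻¹ * k := by
  obtain ⟨k, hk, hk2⟩ := mul_mod_right hZ hK1 hK2 g h h⁻¹
  rw [mul_inv_cancel, t_one_right] at hk2
  refine ⟨k⁻¹, K.inv_mem hk, ?_⟩
  have h1 : tElem g h * tElem g h⁻¹ * k = 1 := hk2.symm
  calc tElem g h⁻¹ = (tElem g h)⁻¹ * (tElem g h * tElem g h⁻¹ * k) * k⁻¹ := by group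
    _ = (tElem g h)⁻¹ * 1 * k⁻¹ := by rw [h1]
    _ = (tElem g h)⁻¹ * k⁻¹ := by group

end TensorAux

namespace TensorAux

/-- An abelian group generated by finitely many elements of bounded orders is small. -/
theorem card_closure_le {T : Type*} [Group T] (hc : ∀ a b : T, a * b = b * a)
    {ι : Type} [Fintype ι] (S : ι → T) (m : ι → ℕ) (hm : ∀ i, 0 < m i)
    (hS : ∀ i, S i ^ m i = 1) :
    Nat.card (Subgroup.closure (Set.range S)) ≤ ∏ i, m i := by
  classical
  letI : CommGroup T := { (inferInstance : Group T) with mul_comm := hc }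
  haveI : ∀ i, NeZero (m i) := fun i => ⟨(hm i).ne'⟩
  set F : Multiplicative (∀ i, ZMod (m i)) →* T :=
    MonoidHom.mk' (fun a => ∏ i, S i ^ (Multiplicative.toAdd a i).val) (by
      intro a b
      rw [← Finset.prod_mul_distrib]
      refine Finset.prod_congr rfl (fun i _ => ?_)
      have hdvd : orderOf (S i) ∣ m i := orderOf_dvd_of_pow_eq_one (hS i)
      have : (Multiplicative.toAdd (a * b) i).val
          = ((Multiplicative.toAdd a i).val + (Multiplicative.toAdd b i).val) % m i := by
        exact ZMod.val_add _ _
      rw [this, ← pow_add]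
      exact pow_eq_pow_iff_modEq.mpr ((Nat.mod_modEq _ _).of_dvd hdvd)) with hF
  have hle : Subgroup.closure (Set.range S) ≤ F.range := by
    rw [Subgroup.closure_le]
    rintro x ⟨i, rfl⟩
    rcases eq_or_lt_of_le (show 1 ≤ m i from hm i) with h1 | h1
    · -- m i = 1, so S i = 1
      have hone : S i = 1 := by
        have := hS i; rw [← h1, pow_one] at this; exact this
      exact ⟨1, by simp [hF, hone]⟩
    · refine ⟨Multiplicative.ofAdd (Pi.single i (1 : ZMod (m i))), ?_⟩
      rw [hF]
      show (∏ j, S j ^ ((Pi.single i (1 : ZMod (m i)) : ∀ j, ZMod (m j)) j).val) = S i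
      rw [Finset.prod_eq_single i ?_ (by simp)]
      · rw [Pi.single_eq_same, ZMod.val_one_eq_one_mod, Nat.mod_eq_of_lt h1, pow_one]
      · intro j _ hj
        rw [Pi.single_eq_of_ne hj, ZMod.val_zero, pow_zero]
  haveI : Finite (F.range) := Set.finite_range F |>.to_subtype
  have h2 : Nat.card (Subgroup.closure (Set.range S)) ≤ Nat.card F.range :=
    Nat.card_le_card_of_injective (Subgroup.inclusion hle) (Subgroup.inclusion_injective hle)
  have h3 : Nat.card F.range ≤ Nat.card (Multiplicative (∀ i, ZMod (m i))) :=
    Nat.card_le_card_of_surjective F.rangeRestrict F.rangeRestrict_surjective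
  have h4 : Nat.card (Multiplicative (∀ i, ZMod (m i))) = ∏ i, m i := by
    rw [Nat.card_congr (Multiplicative.toAdd (α := ∀ i, ZMod (m i)))]
    rw [Nat.card_pi]
    exact Finset.prod_congr rfl fun i _ => Nat.card_zmod (m i)
  omega

end TensorAux

theorem arith {ι : Type} [Fintype ι] [DecidableEq ι] (e : ι → ℕ) (he : ∀ i, 1 ≤ e i)
    (k : ι) (hk : 2 ≤ e k) :
    (∑ ij : ι × ι, min (e ij.1) (e ij.2)) + 2 * Fintype.card ι ≤ (∑ i, e i)^2 := by
  have row : ∀ i, (∑ j, min (e i) (e j)) + ((if i = k then Fintype.card ι else 0) + 1)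
      ≤ ∑ j, e i * e j := by
    intro i
    by_cases hik : i = k
    · subst hik
      rw [if_pos rfl]
      have hlt : ∑ j, (min (e i) (e j) + 1) < ∑ j, e i * e j := by
        refine Finset.sum_lt_sum (fun j _ => ?_) ⟨i, Finset.mem_univ i, ?_⟩
        · have h1 : min (e i) (e j) ≤ e j := min_le_right _ _
          have h2 : e j + 1 ≤ e i * e j := by nlinarith [he j]
          omega
        · have : min (e i) (e i) = e i := min_self _
          nlinarith
      rw [Finset.sum_add_distrib, Finset.sum_const, Finset.card_univ, smul_eq_mul,
        mul_one] at hlt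
      omega
    · simp only [if_neg hik]
      have hlt : ∑ j, min (e i) (e j) < ∑ j, e i * e j := by
        refine Finset.sum_lt_sum (fun j _ => ?_) ⟨k, Finset.mem_univ k, ?_⟩
        · have h1 : min (e i) (e j) ≤ e j := min_le_right _ _
          nlinarith [he i, he j]
        · have h1 : min (e i) (e k) ≤ e i := min_le_left _ _
          nlinarith [he i]
      omega
  have total := Finset.sum_le_sum (fun i (_ : i ∈ Finset.univ) => row i)
  rw [Finset.sum_add_distrib, Finset.sum_add_distrib, Finset.sum_const,
    Finset.sum_ite_eq' Finset.univ k (fun _ => Fintype.card ι)] at total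
  simp only [Finset.mem_univ, if_pos, Finset.card_univ, smul_eq_mul, mul_one] at total
  have e1 : (∑ ij : ι × ι, min (e ij.1) (e ij.2)) = ∑ i, ∑ j, min (e i) (e j) :=
    Fintype.sum_prod_type (f := fun ij : ι × ι => min (e ij.1) (e ij.2))
  have e2 : (∑ i, e i)^2 = ∑ i, ∑ j, e i * e j := by
    rw [sq, Finset.sum_mul_sum]
  omega

namespace TensorAux

theorem commutator_gen (p : ℕ) (hp : p.Prime) (G : Type) [Group G] [Finite G]
    (hG : IsPGroup p G) (hd : Nat.card (commutator G) = p) :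
    ∃ c : G, c ∈ commutator G ∧ c ^ p = 1 ∧ (∀ z ∈ commutator G, ∃ k : ℕ, z = c ^ k) ∧
      (∀ z ∈ commutator G, ∀ g : G, Commute z g) := by
  haveI : Fact p.Prime := ⟨hp⟩
  letI : MulAction G ↥(commutator G) := MulAction.compHom ↥(commutator G) (MulAut.conjNormal (H := commutator G))
  have hsmul : ∀ (g : G) (x : ↥(commutator G)), g • x = MulAut.conjNormal g x :=
    fun g x => rfl
  have h1 : (1 : ↥(commutator G)) ∈ MulAction.fixedPoints G ↥(commutator G) := by
    intro g; rw [hsmul, map_one]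
  obtain ⟨b, hbf, hb1⟩ := hG.exists_fixed_point_of_prime_dvd_card_of_fixed_point
    ↥(commutator G) (by rw [hd]) h1
  have hbc : ∀ g : G, g * (b : G) * g⁻¹ = (b : G) := by
    intro g
    have := hbf g
    rw [hsmul] at this
    have := congrArg (Subtype.val) this
    rwa [MulAut.conjNormal_apply] at this
  have hcomm : ∀ g : G, Commute (b : G) g := by
    intro g
    have h := hbc g
    have h2 : g * (b : G) = (b : G) * g := by
      calc g * (b : G) = (g * (b : G) * g⁻¹) * g := by group
        _ = (b : G) * g := by rw [h]
    exact h2.symm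
  have horder : orderOf b = p := by
    have hdvd : orderOf b ∣ p := hd ▸ orderOf_dvd_natCard b
    rcases (hp.eq_one_or_self_of_dvd _ hdvd) with h | h
    · exact absurd (orderOf_eq_one_iff.mp h) (Ne.symm hb1)
    · exact h
  have htop : Subgroup.zpowers b = ⊤ := by
    apply Subgroup.eq_top_of_card_eq
    rw [Nat.card_zpowers, horder, hd]
  refine ⟨(b : G), b.2, ?_, ?_, ?_⟩
  · have : b ^ p = 1 := by rw [← horder]; exact pow_orderOf_eq_one b
    have := congrArg (Subtype.val) this
    simpa using this
  · intro z hz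
    have : (⟨z, hz⟩ : ↥(commutator G)) ∈ Subgroup.zpowers b := htop ▸ Subgroup.mem_top _
    rw [← mem_powers_iff_mem_zpowers] at this
    obtain ⟨k, hk⟩ := this
    exact ⟨k, by simpa using (congrArg Subtype.val hk).symm⟩
  · intro z hz g
    have : (⟨z, hz⟩ : ↥(commutator G)) ∈ Subgroup.zpowers b := htop ▸ Subgroup.mem_top _
    rw [← mem_powers_iff_mem_zpowers] at this
    obtain ⟨k, hk⟩ := this
    have hzk : z = (b : G) ^ k := by simpa using (congrArg Subtype.val hk).symm
    rw [hzk]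
    exact (hcomm g).pow_left k

end TensorAux

namespace TensorAux

theorem ab_structure (p n : ℕ) (hp : p.Prime) (G : Type) [Group G] [Finite G]
    (hcard : Nat.card G = p ^ n) (hd : Nat.card (commutator G) = p)
    (hne : ¬ ∀ x : Abelianization G, x ≠ 1 → orderOf x = p) :
    ∃ (ι : Type) (_ : Fintype ι) (_ : DecidableEq ι) (e : ι → ℕ) (xs : ι → G) (k : ι),
      (∀ i, 1 ≤ e i) ∧ 2 ≤ e k ∧ (∑ i, e i) = n - 1 ∧
      (∀ i, xs i ^ (p ^ e i) ∈ commutator G) ∧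
      Subgroup.closure (Set.range xs ∪ (commutator G : Set G)) = ⊤ := by
  classical
  have hp1 := hp.one_lt
  -- card of abelianization
  have hcardq : Nat.card G = Nat.card (Abelianization G) * p := by
    rw [Subgroup.card_eq_card_quotient_mul_card_subgroup (commutator G), hd]; rfl
  have hn1 : 1 ≤ n := by
    by_contra h
    push_neg at h
    interval_cases n
    rw [pow_zero] at hcard
    rw [hcard] at hcardq
    have hdvd1 : p ∣ 1 := Dvd.intro_left _ hcardq.symm
    have := Nat.le_of_dvd one_pos hdvd1
    omega
  have cardA : Nat.card (Abelianization G) = p ^ (n - 1) := by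
    have h2 : p ^ (n-1) * p = Nat.card (Abelianization G) * p := by
      rw [← hcardq, hcard, ← pow_succ]
      congr 1
      omega
    exact (Nat.eq_of_mul_eq_mul_right hp.pos h2).symm
  -- structure theorem
  obtain ⟨ι, hfin, nn, hnn, ⟨eqv⟩⟩ :=
    CommGroup.equiv_prod_multiplicative_zmod_of_finite (Abelianization G)
  have cardPi : Nat.card (Abelianization G) = ∏ i, nn i := by
    rw [Nat.card_congr eqv.toEquiv, Nat.card_pi]
    refine Finset.prod_congr rfl fun i _ => ?_
    rw [Nat.card_congr (Multiplicative.toAdd (α := ZMod (nn i))), Nat.card_zmod]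
  have hdvd : ∀ i, nn i ∣ p ^ (n - 1) := by
    intro i
    rw [← cardA, cardPi]
    exact Finset.dvd_prod_of_mem nn (Finset.mem_univ i)
  choose e he hpe using fun i => (Nat.dvd_prime_pow hp).mp (hdvd i)
  have he1 : ∀ i, 1 ≤ e i := by
    intro i
    rcases Nat.eq_zero_or_pos (e i) with h | h
    · have := hnn i; rw [hpe i, h, pow_zero] at this; omega
    · exact h
  have hsum : (∑ i, e i) = n - 1 := by
    have : p ^ (∑ i, e i) = p ^ (n - 1) := by
      rw [← Finset.prod_pow_eq_pow_sum, ← cardA, cardPi]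
      exact Finset.prod_congr rfl fun i _ => (hpe i).symm
    exact Nat.pow_right_injective hp.two_le this
  -- existence of index with e k ≥ 2
  have hk : ∃ k, 2 ≤ e k := by
    by_contra h
    push_neg at h
    apply hne
    have hxp : ∀ x : Abelianization G, x ^ p = 1 := by
      intro x
      have : eqv (x ^ p) = 1 := by
        rw [map_pow]
        funext j
        show (eqv x j) ^ p = (1 : Multiplicative (ZMod (nn j)))
        have hnnj : nn j = p := by
          have h1 := he1 j; have h2 := h j
          have : e j = 1 := by omega
          rw [hpe j, this, pow_one]
        have : Multiplicative.toAdd ((eqv x j) ^ p) = (0 : ZMod (nn j)) := by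
          rw [toAdd_pow, nsmul_eq_mul]
          rw [show ((p : ZMod (nn j))) = 0 by rw [hnnj]; exact ZMod.natCast_self p]
          rw [zero_mul]
        calc (eqv x j) ^ p = Multiplicative.ofAdd (Multiplicative.toAdd ((eqv x j)^p)) := rfl
          _ = Multiplicative.ofAdd (0 : ZMod (nn j)) := by rw [this]
          _ = 1 := rfl
      have := congrArg eqv.symm this
      rwa [MulEquiv.symm_apply_apply, map_one] at this
    intro x hx
    have h1 : orderOf x ∣ p := orderOf_dvd_of_pow_eq_one (hxp x)
    rcases hp.eq_one_or_self_of_dvd _ h1 with h2 | h2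
    · exact absurd (orderOf_eq_one_iff.mp h2) hx
    · exact h2
  obtain ⟨k, hk2⟩ := hk
  -- lifts
  have hsurj : Function.Surjective (Abelianization.of (G := G)) := fun x =>
    QuotientGroup.induction_on x fun g => ⟨g, rfl⟩
  set χ : ι → (∀ i, Multiplicative (ZMod (nn i))) :=
    fun i => Pi.mulSingle i (Multiplicative.ofAdd (1 : ZMod (nn i))) with hχ
  choose xs hxs using fun i => hsurj (eqv.symm (χ i))
  haveI : ∀ i, NeZero (nn i) := fun i => ⟨by have := hnn i; omega⟩
  have hker : ∀ g : G, Abelianization.of g = 1 → g ∈ commutator G := by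
    intro g hg
    exact (QuotientGroup.eq_one_iff g).mp hg
  have hxs_pow : ∀ i, xs i ^ (p ^ e i) ∈ commutator G := by
    intro i
    apply hker
    rw [map_pow, hxs i, ← map_pow, ← hpe i]
    have : χ i ^ nn i = 1 := by
      rw [hχ]
      rw [← Pi.mulSingle_pow]
      rw [show (Multiplicative.ofAdd (1 : ZMod (nn i))) ^ nn i = 1 by
        rw [show (1 : Multiplicative (ZMod (nn i))) = Multiplicative.ofAdd (0 : ZMod (nn i)) from rfl]
        rw [← ofAdd_nsmul]
        congr 1
        rw [nsmul_eq_mul, mul_one, ZMod.natCast_self]]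
      exact Pi.mulSingle_one i
    rw [this, map_one]
  -- generation
  have hgen : Subgroup.closure (Set.range xs ∪ (commutator G : Set G)) = ⊤ := by
    rw [eq_top_iff]
    intro g _
    set H := Subgroup.closure (Set.range xs ∪ (commutator G : Set G)) with hH
    set a := eqv (Abelianization.of g) with ha
    have hsingle : ∀ i, χ i ^ (Multiplicative.toAdd (a i)).val = Pi.mulSingle i (a i) := by
      intro i
      have hχi : χ i = Pi.mulSingle i (Multiplicative.ofAdd (1 : ZMod (nn i))) := rfl
      rw [hχi, ← Pi.mulSingle_pow]
      rw [show (Multiplicative.ofAdd (1 : ZMod (nn i))) ^ (Multiplicative.toAdd (a i)).val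
        = Multiplicative.ofAdd (((Multiplicative.toAdd (a i)).val : ℕ) • (1 : ZMod (nn i)))
        from (ofAdd_nsmul _ _).symm]
      rw [nsmul_eq_mul, mul_one]
      exact congrArg (Pi.mulSingle i) (congrArg Multiplicative.ofAdd
        (ZMod.natCast_rightInverse (Multiplicative.toAdd (a i))))
    have hofg : Abelianization.of g ∈ Subgroup.map (Abelianization.of (G := G)) H := by
      have hmem1 : ∀ i, eqv.symm (Pi.mulSingle i (a i))
          ∈ Subgroup.map (Abelianization.of (G := G)) H := by
        intro i
        rw [← hsingle i, map_pow]
        refine Subgroup.pow_mem _ ?_ _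
        rw [← hxs i]
        exact Subgroup.mem_map_of_mem _ (Subgroup.subset_closure (Or.inl ⟨i, rfl⟩))
      have : Abelianization.of g = ∏ i, eqv.symm (Pi.mulSingle i (a i)) := by
        rw [← map_prod, Finset.univ_prod_mulSingle, ha, MulEquiv.symm_apply_apply]
      rw [this]
      exact Subgroup.prod_mem _ fun i _ => hmem1 i
    obtain ⟨w, hwH, hofw⟩ := hofg
    have hmem : g * w⁻¹ ∈ commutator G := by
      apply hker
      rw [map_mul, map_inv, hofw]
      group
    have hgw : g = (g * w⁻¹) * w := by group
    rw [hgw]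
    exact H.mul_mem (Subgroup.subset_closure (Or.inr hmem)) hwH
  exact ⟨ι, hfin, inferInstance, e, xs, k, he1, hk2, hsum, hxs_pow, hgen⟩

end TensorAux

/-- If `G` is a nonabelian `p`-group of order `p ^ n` with `|G'| = p` and `G/G'` not
elementary abelian, then `|G ⊗ G| < p ^ ((n-1)^2 + 2)`. -/
theorem card_tensorSquare_lt_of_ab_not_elementary (p n : ℕ) (hp : p.Prime)
    (G : Type) [Group G] [Finite G] (hcard : Nat.card G = p ^ n)
    (hnab : ¬ ∀ a b : G, a * b = b * a) (hd : Nat.card (commutator G) = p)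
    (hne : ¬ ∀ x : Abelianization G, x ≠ 1 → orderOf x = p) :
    Nat.card (TensorSquare G) < p ^ ((n - 1) ^ 2 + 2) := by
  classical
  obtain ⟨c, hcN, hcp, hcgen, hZ⟩ :=
    TensorAux.commutator_gen p hp G (IsPGroup.of_card hcard) hd
  obtain ⟨ι, hfin, hdec, e, xs, k, he1, hk2, hsum, hxs_pow, hgen⟩ :=
    TensorAux.ab_structure p n hp G hcard hd hne
  have conj' : ∀ (g z : G), z ∈ commutator G → g * z * g⁻¹ = z := fun g z hz => by
    rw [← (hZ z hz g).eq, mul_inv_cancel_right]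
  -- the subgroup C of "central tensors"
  set Sc : (ι ⊕ ι) ⊕ Unit → TensorSquare G :=
    Sum.elim (Sum.elim (fun i => tElem c (xs i)) (fun i => tElem (xs i) c))
      (fun _ => tElem c c) with hSc
  set C : Subgroup (TensorSquare G) := Subgroup.closure (Set.range Sc) with hC
  have hCc : tElem c c ∈ C := Subgroup.subset_closure ⟨Sum.inr (), rfl⟩
  have hCcx : ∀ i, tElem c (xs i) ∈ C := fun i =>
    Subgroup.subset_closure ⟨Sum.inl (Sum.inl i), rfl⟩
  have hCxc : ∀ i, tElem (xs i) c ∈ C := fun i =>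
    Subgroup.subset_closure ⟨Sum.inl (Sum.inr i), rfl⟩
  have hCzc : ∀ z ∈ commutator G, tElem c z ∈ C ∧ tElem z c ∈ C := by
    intro z hz
    obtain ⟨kk, rfl⟩ := hcgen z hz
    constructor
    · rw [TensorAux.zright_pow hZ hcN c kk]
      exact C.pow_mem hCc kk
    · rw [TensorAux.zleft_pow hZ hcN c kk]
      exact C.pow_mem hCc kk
  have hTc : ∀ g : G, tElem c g ∈ C ∧ tElem g c ∈ C := by
    intro g
    have hgtop : g ∈ Subgroup.closure (Set.range xs ∪ (commutator G : Set G)) := by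
      rw [hgen]; exact Subgroup.mem_top g
    refine Subgroup.closure_induction ?_ ?_ ?_ ?_ hgtop
    · rintro x (⟨i, rfl⟩ | hx)
      · exact ⟨hCcx i, hCxc i⟩
      · exact hCzc x hx
    · rw [TensorAux.t_one_right, TensorAux.t_one_left]
      exact ⟨C.one_mem, C.one_mem⟩
    · intro x y hx hy ihx ihy
      have e1 : x * c * x⁻¹ = c := conj' x c hcN
      have e2 : x * y * x⁻¹ = (x*y*x⁻¹*y⁻¹) * y := by group
      constructor
      · have hr := TensorAux.rel2 c x y
        rw [e1, e2, TensorAux.zright hZ (TensorAux.comm_mem x y) c y] at hr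
        rw [hr]
        exact C.mul_mem ihx.1 (C.mul_mem (hCzc _ (TensorAux.comm_mem x y)).1 ihy.1)
      · have hr := TensorAux.rel1 x y c
        rw [e1, e2, TensorAux.zleft hZ (TensorAux.comm_mem x y) y c] at hr
        rw [hr]
        exact C.mul_mem (C.mul_mem ihy.2 (hCzc _ (TensorAux.comm_mem x y)).2) ihx.2
    · intro x hx ihx
      have e1 : x * c * x⁻¹ = c := conj' x c hcN
      have e2 : x * x⁻¹ * x⁻¹ = x⁻¹ := by group
      constructor
      · have hr := TensorAux.rel2 c x x⁻¹
        rw [e1, e2, mul_inv_cancel, TensorAux.t_one_right] at hr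
        rw [← inv_eq_of_mul_eq_one_right hr.symm]
        exact C.inv_mem ihx.1
      · have hr := TensorAux.rel1 x x⁻¹ c
        rw [e1, e2, mul_inv_cancel, TensorAux.t_one_left] at hr
        rw [← inv_eq_of_mul_eq_one_left hr.symm]
        exact C.inv_mem ihx.2
  have hC1 : ∀ z ∈ commutator G, ∀ g : G, tElem z g ∈ C := by
    intro z hz g
    obtain ⟨kk, rfl⟩ := hcgen z hz
    rw [TensorAux.zleft_pow hZ hcN g kk]
    exact C.pow_mem (hTc g).1 kk
  have hC2 : ∀ z ∈ commutator G, ∀ g : G, tElem g z ∈ C := by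
    intro z hz g
    obtain ⟨kk, rfl⟩ := hcgen z hz
    rw [TensorAux.zright_pow hZ hcN g kk]
    exact C.pow_mem (hTc g).2 kk
  -- the subgroup H generated by all basic tensors: it is everything
  set Sh : (ι × ι) ⊕ ((ι ⊕ ι) ⊕ Unit) → TensorSquare G :=
    Sum.elim (fun ij => tElem (xs ij.1) (xs ij.2)) Sc with hSh
  set H : Subgroup (TensorSquare G) := Subgroup.closure (Set.range Sh) with hHdef
  have hCH : C ≤ H := Subgroup.closure_mono (by rintro x ⟨u, rfl⟩; exact ⟨Sum.inr u, rfl⟩)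
  have hth : ∀ g h : G, tElem g h ∈ H := by
    intro g
    have hgtop : g ∈ Subgroup.closure (Set.range xs ∪ (commutator G : Set G)) := by
      rw [hgen]; exact Subgroup.mem_top g
    refine Subgroup.closure_induction
      (p := fun g _ => ∀ h : G, tElem g h ∈ H) ?_ ?_ ?_ ?_ hgtop
    · rintro x (⟨i, rfl⟩ | hx)
      · intro h
        have hhtop : h ∈ Subgroup.closure (Set.range xs ∪ (commutator G : Set G)) := by
          rw [hgen]; exact Subgroup.mem_top h
        refine Subgroup.closure_induction
          (p := fun hh _ => tElem (xs i) hh ∈ H) ?_ ?_ ?_ ?_ hhtop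
        · rintro y (⟨j, rfl⟩ | hy)
          · exact Subgroup.subset_closure ⟨Sum.inl (i, j), rfl⟩
          · exact hCH (hC2 y hy (xs i))
        · show tElem (xs i) (1:G) ∈ H
          rw [TensorAux.t_one_right]; exact H.one_mem
        · intro y y' hy hy' ihy ihy'
          obtain ⟨kk, hkk, hkk2⟩ := TensorAux.mul_mod_right hZ hC1 hC2 (xs i) y y'
          rw [hkk2]; exact H.mul_mem (H.mul_mem ihy ihy') (hCH hkk)
        · intro y hy ihy
          obtain ⟨kk, hkk, hkk2⟩ := TensorAux.inv_mod_right hZ hC1 hC2 (xs i) y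
          rw [hkk2]; exact H.mul_mem (H.inv_mem ihy) (hCH hkk)
      · exact fun h => hCH (hC1 x hx h)
    · intro h; rw [TensorAux.t_one_left]; exact H.one_mem
    · intro x y hx hy ihx ihy h
      obtain ⟨kk, hkk, hkk2⟩ := TensorAux.mul_mod_left hZ hC1 hC2 x y h
      rw [hkk2]; exact H.mul_mem (H.mul_mem (ihx h) (ihy h)) (hCH hkk)
    · intro x hx ihx h
      obtain ⟨kk, hkk, hkk2⟩ := TensorAux.inv_mod_left hZ hC1 hC2 x h
      rw [hkk2]; exact H.mul_mem (H.inv_mem (ihx h)) (hCH hkk)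
  have hHtop : ∀ a : TensorSquare G, a ∈ H := by
    intro a
    refine QuotientGroup.induction_on a fun w => ?_
    refine FreeGroup.induction_on
      (C := fun w => (QuotientGroup.mk w : TensorSquare G) ∈ H) w ?_ ?_ ?_ ?_
    · exact H.one_mem
    · exact fun x => hth x.1 x.2
    · intro x hx; simp only [QuotientGroup.mk_inv]; exact H.inv_mem hx
    · intro x y hx hy; simp only [QuotientGroup.mk_mul]; exact H.mul_mem hx hy
  have hcomm := TensorAux.t_comm hZ
  -- bound on |C|
  have hCcard : Nat.card C ≤ p ^ (2 * Fintype.card ι + 1) := by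
    have hords : ∀ u : (ι ⊕ ι) ⊕ Unit, Sc u ^ p = 1 := by
      rintro ((i | i) | u)
      · show (tElem c (xs i)) ^ p = 1
        rw [← TensorAux.zleft_pow hZ hcN (xs i) p, hcp, TensorAux.t_one_left]
      · show (tElem (xs i) c) ^ p = 1
        rw [← TensorAux.zright_pow hZ hcN (xs i) p, hcp, TensorAux.t_one_right]
      · show (tElem c c) ^ p = 1
        rw [← TensorAux.zleft_pow hZ hcN c p, hcp, TensorAux.t_one_left]
    have hb := TensorAux.card_closure_le hcomm Sc (fun _ => p) (fun _ => hp.pos) hords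
    calc Nat.card C ≤ ∏ _u : (ι ⊕ ι) ⊕ Unit, p := hb
      _ = p ^ (2 * Fintype.card ι + 1) := by
        rw [Finset.prod_const, Finset.card_univ]
        congr 1
        rw [Fintype.card_sum, Fintype.card_sum, Fintype.card_unit]
        omega
  haveI hCn : C.Normal := ⟨fun x hx g => by rw [hcomm g x, mul_inv_cancel_right]; exact hx⟩
  have hcommQ : ∀ a b : TensorSquare G ⧸ C, a * b = b * a := by
    intro a b
    refine QuotientGroup.induction_on a fun x => ?_
    refine QuotientGroup.induction_on b fun y => ?_
    rw [← QuotientGroup.mk_mul, hcomm x y, QuotientGroup.mk_mul]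
  set s : ι × ι → TensorSquare G ⧸ C :=
    fun ij => QuotientGroup.mk (tElem (xs ij.1) (xs ij.2)) with hs
  have hstop : Subgroup.closure (Set.range s) = ⊤ := by
    rw [eq_top_iff]
    intro a _
    refine QuotientGroup.induction_on a fun x => ?_
    have hle : Subgroup.map (QuotientGroup.mk' C) H ≤ Subgroup.closure (Set.range s) := by
      rw [hHdef, MonoidHom.map_closure, Subgroup.closure_le]
      rintro y ⟨x', ⟨u, rfl⟩, rfl⟩
      rcases u with ij | v
      · exact Subgroup.subset_closure ⟨ij, rfl⟩
      · have hv : Sh (Sum.inr v) ∈ C := Subgroup.subset_closure ⟨v, rfl⟩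
        have h1 : (QuotientGroup.mk' C) (Sh (Sum.inr v)) = 1 :=
          (QuotientGroup.eq_one_iff _).mpr hv
        rw [h1]
        exact (Subgroup.closure (Set.range s)).one_mem
    exact hle ⟨x, hHtop x, rfl⟩
  have hsord : ∀ ij : ι × ι, s ij ^ (p ^ min (e ij.1) (e ij.2)) = 1 := by
    rintro ⟨i, j⟩
    have key : ∀ q : ℕ, (tElem (xs i) (xs j)) ^ q ∈ C → s (i, j) ^ q = 1 := by
      intro q hq
      show (QuotientGroup.mk (tElem (xs i) (xs j)) : TensorSquare G ⧸ C) ^ q = 1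
      rw [← QuotientGroup.mk_pow]
      exact (QuotientGroup.eq_one_iff _).mpr hq
    rcases le_total (e i) (e j) with hij | hij
    · rw [min_eq_left hij]
      obtain ⟨kk, hkk, hkk2⟩ := TensorAux.pow_mod_left hZ hC1 hC2 (xs i) (xs j) (p ^ e i)
      apply key
      have hmem : tElem (xs i ^ p ^ e i) (xs j) ∈ C := hC1 _ (hxs_pow i) _
      rw [hkk2] at hmem
      have h3 := C.mul_mem hmem (C.inv_mem hkk)
      rwa [mul_inv_cancel_right] at h3
    · rw [min_eq_right hij]
      obtain ⟨kk, hkk, hkk2⟩ := TensorAux.pow_mod_right hZ hC1 hC2 (xs i) (xs j) (p ^ e j)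
      apply key
      have hmem : tElem (xs i) (xs j ^ p ^ e j) ∈ C := hC2 _ (hxs_pow j) _
      rw [hkk2] at hmem
      have h3 := C.mul_mem hmem (C.inv_mem hkk)
      rwa [mul_inv_cancel_right] at h3
  have hQcard : Nat.card (TensorSquare G ⧸ C)
      ≤ p ^ (∑ ij : ι × ι, min (e ij.1) (e ij.2)) := by
    have hb := TensorAux.card_closure_le hcommQ s (fun ij => p ^ min (e ij.1) (e ij.2))
      (fun ij => pow_pos hp.pos _) hsord
    rw [hstop] at hb
    calc Nat.card (TensorSquare G ⧸ C) = Nat.card (⊤ : Subgroup (TensorSquare G ⧸ C)) :=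
          (Nat.card_congr Subgroup.topEquiv.toEquiv).symm
      _ ≤ ∏ ij : ι × ι, p ^ min (e ij.1) (e ij.2) := hb
      _ = p ^ (∑ ij : ι × ι, min (e ij.1) (e ij.2)) :=
          Finset.prod_pow_eq_pow_sum _ _ _
  have htotal : Nat.card (TensorSquare G) = Nat.card (TensorSquare G ⧸ C) * Nat.card C :=
    Subgroup.card_eq_card_quotient_mul_card_subgroup C
  have harith := arith e he1 k hk2
  rw [hsum] at harith
  calc Nat.card (TensorSquare G) = Nat.card (TensorSquare G ⧸ C) * Nat.card C := htotal
    _ ≤ p ^ (∑ ij : ι × ι, min (e ij.1) (e ij.2)) * p ^ (2 * Fintype.card ι + 1) :=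
        Nat.mul_le_mul hQcard hCcard
    _ = p ^ (∑ ij : ι × ι, min (e ij.1) (e ij.2) + (2 * Fintype.card ι + 1)) :=
        (pow_add p _ _).symm
    _ ≤ p ^ ((n - 1) ^ 2 + 1) := Nat.pow_le_pow_right hp.pos (by omega)
    _ < p ^ ((n - 1) ^ 2 + 2) := Nat.pow_lt_pow_right hp.one_lt (by omega)
end

section
/- Let G be a finite nonabelian p-group of order p^n with |G'| = p. Then the order of the nonabelian tensor square satisfies |G ⊗ G| ≤ p^((n-1)²+2). -/
namespace TsAux
variable {G : Type*} [Group G]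

lemma mk_eq_of_rel {a b : FreeGroup (G × G)} (h : a * b⁻¹ ∈ tensorRels G) :
    (QuotientGroup.mk a : TensorSquare G) = QuotientGroup.mk b := by
  apply QuotientGroup.eq.mpr
  have h1 : a * b⁻¹ ∈ Subgroup.normalClosure (tensorRels G) :=
    Subgroup.subset_normalClosure h
  have h2 := (Subgroup.normalClosure_normal (s := tensorRels G)).conj_mem _
    ((Subgroup.normalClosure (tensorRels G)).inv_mem h1) a⁻¹
  simpa [mul_assoc] using h2

lemma rel1 (g g' h : G) :
    tElem (g * g') h = tElem (g * g' * g⁻¹) (g * h * g⁻¹) * tElem g h := by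
  have : (QuotientGroup.mk (FreeGroup.of (g * g', h)) : TensorSquare G)
      = QuotientGroup.mk (FreeGroup.of (g * g' * g⁻¹, g * h * g⁻¹) * FreeGroup.of (g, h)) :=
    mk_eq_of_rel (Or.inl ⟨g, g', h, rfl⟩)
  simpa [tElem] using this

lemma rel2 (g h h' : G) :
    tElem g (h * h') = tElem g h * tElem (h * g * h⁻¹) (h * h' * h⁻¹) := by
  have : (QuotientGroup.mk (FreeGroup.of (g, h * h')) : TensorSquare G)
      = QuotientGroup.mk (FreeGroup.of (g, h) * FreeGroup.of (h * g * h⁻¹, h * h' * h⁻¹)) :=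
    mk_eq_of_rel (Or.inr ⟨g, h, h', rfl⟩)
  simpa [tElem] using this

lemma one_t (h : G) : tElem (1 : G) h = 1 := by
  have := rel1 (1 : G) 1 h
  simp at this
  exact this

lemma t_one (g : G) : tElem g (1 : G) = 1 := by
  have := rel2 g (1 : G) 1
  simp at this
  exact this


section Class2
variable {c : G} (hcen : ∀ w : G, c * w = w * c)
  (hpow : ∀ x y : G, ∃ i : ℤ, x * y * x⁻¹ * y⁻¹ = c ^ i)

include hcen

lemma zcen (i : ℤ) (w : G) : c ^ i * w = w * c ^ i :=
  Commute.zpow_left (hcen w) i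

lemma tA (i : ℤ) (x h : G) : tElem (c ^ i * x) h = tElem x h * tElem (c ^ i) h := by
  have h1 := rel1 (c ^ i) x h
  rwa [show c ^ i * x * (c ^ i)⁻¹ = x by
        rw [zcen hcen i x]; group,
      show c ^ i * h * (c ^ i)⁻¹ = h by
        rw [zcen hcen i h]; group] at h1

lemma tB (i : ℤ) (g y : G) : tElem g (c ^ i * y) = tElem g (c ^ i) * tElem g y := by
  have h1 := rel2 g (c ^ i) y
  rwa [show c ^ i * g * (c ^ i)⁻¹ = g by rw [zcen hcen i g]; group,
      show c ^ i * y * (c ^ i)⁻¹ = y by rw [zcen hcen i y]; group] at h1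

lemma tAzpow (i : ℤ) (h : G) : tElem (c ^ i) h = tElem c h ^ i := by
  induction i using Int.induction_on with
  | zero => simpa using one_t (G := G) h
  | succ k ih =>
      have := tA hcen 1 (c ^ (k : ℤ)) h
      rw [zpow_one, ← zpow_one_add c (k : ℤ)] at this
      rw [show ((k : ℤ) + 1) = 1 + (k : ℤ) by ring, this, ih]
      rw [zpow_add, zpow_one, zpow_natCast]; group
  | pred k ih =>
      have := tA hcen 1 (c ^ (-(k : ℤ) - 1)) h
      rw [zpow_one, ← zpow_one_add c (-(k : ℤ) - 1)] at this
      rw [show (1 : ℤ) + (-(k : ℤ) - 1) = -(k : ℤ) by ring] at this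
      have h2 : tElem (c ^ (-(k : ℤ) - 1)) h = tElem (c ^ (-(k:ℤ))) h * (tElem c h)⁻¹ := by
        rw [this]; group
      rw [h2, ih]; group

lemma tBzpow (i : ℤ) (g : G) : tElem g (c ^ i) = tElem g c ^ i := by
  induction i using Int.induction_on with
  | zero => simpa using t_one (G := G) g
  | succ k ih =>
      have := tB hcen 1 g (c ^ (k : ℤ))
      rw [zpow_one, ← zpow_one_add c (k : ℤ)] at this
      rw [show ((k : ℤ) + 1) = 1 + (k : ℤ) by ring, this, ih]
      rw [zpow_add, zpow_one, zpow_natCast]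
  | pred k ih =>
      have := tB hcen 1 g (c ^ (-(k : ℤ) - 1))
      rw [zpow_one, ← zpow_one_add c (-(k : ℤ) - 1)] at this
      rw [show (1 : ℤ) + (-(k : ℤ) - 1) = -(k : ℤ) by ring] at this
      have h2 : tElem g (c ^ (-(k : ℤ) - 1)) = (tElem g c)⁻¹ * tElem g (c ^ (-(k:ℤ))) :=
        eq_inv_mul_of_mul_eq this.symm
      rw [h2, ih]; group


include hpow in
lemma conj2 (u v x : G) : (u*v)*x*(u*v)⁻¹ = (v*u)*x*(v*u)⁻¹ := by
  obtain ⟨i, hi⟩ := hpow u v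
  have huv : u*v = c^i * (v*u) := by rw [← hi]; group
  calc (u*v)*x*(u*v)⁻¹ = c^i * ((v*u)*x*(v*u)⁻¹) * (c^i)⁻¹ := by rw [huv]; group
    _ = (v*u)*x*(v*u)⁻¹ * c^i * (c^i)⁻¹ := by rw [zcen hcen i]
    _ = (v*u)*x*(v*u)⁻¹ := by group

include hpow in
lemma comm_core (g h x y : G) :
    tElem ((g*h)*x*(g*h)⁻¹) ((g*h)*y*(g*h)⁻¹) * tElem g h
      = tElem g h * tElem ((g*h)*x*(g*h)⁻¹) ((g*h)*y*(g*h)⁻¹) := by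
  have tcongr : ∀ a a' b b' : G, a = a' → b = b' → tElem a b = tElem a' b' := by
    intro a a' b b' h1 h2; rw [h1, h2]
  have way1 : tElem (g*x) (h*y)
      = tElem (g*x*g⁻¹) (g*h*g⁻¹)
        * tElem ((g*h)*x*(g*h)⁻¹) ((g*h)*y*(g*h)⁻¹)
        * (tElem g h * tElem (h*g*h⁻¹) (h*y*h⁻¹)) := by
    rw [rel1 g x (h*y), rel2 g h y,
      tcongr (g*x*g⁻¹) (g*x*g⁻¹) (g*(h*y)*g⁻¹) ((g*h*g⁻¹)*(g*y*g⁻¹)) rfl (by group),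
      rel2 (g*x*g⁻¹) (g*h*g⁻¹) (g*y*g⁻¹),
      tcongr ((g*h*g⁻¹)*(g*x*g⁻¹)*(g*h*g⁻¹)⁻¹) ((g*h)*x*(g*h)⁻¹)
             ((g*h*g⁻¹)*(g*y*g⁻¹)*(g*h*g⁻¹)⁻¹) ((g*h)*y*(g*h)⁻¹) (by group) (by group),
      mul_assoc]
  have way2 : tElem (g*x) (h*y)
      = tElem (g*x*g⁻¹) (g*h*g⁻¹)
        * (tElem g h
           * (tElem ((g*h)*x*(g*h)⁻¹) ((g*h)*y*(g*h)⁻¹) * tElem (h*g*h⁻¹) (h*y*h⁻¹))) := by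
    rw [rel2 (g*x) h y, rel1 g x h,
      tcongr (h*(g*x)*h⁻¹) ((h*g*h⁻¹)*(h*x*h⁻¹)) (h*y*h⁻¹) (h*y*h⁻¹) (by group) rfl,
      rel1 (h*g*h⁻¹) (h*x*h⁻¹) (h*y*h⁻¹),
      tcongr ((h*g*h⁻¹)*(h*x*h⁻¹)*(h*g*h⁻¹)⁻¹) ((g*h)*x*(g*h)⁻¹)
             ((h*g*h⁻¹)*(h*y*h⁻¹)*(h*g*h⁻¹)⁻¹) ((g*h)*y*(g*h)⁻¹)
             (by rw [show (h*g*h⁻¹)*(h*x*h⁻¹)*(h*g*h⁻¹)⁻¹ = (h*g)*x*(h*g)⁻¹ by group];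
                 exact conj2 hcen hpow h g x)
             (by rw [show (h*g*h⁻¹)*(h*y*h⁻¹)*(h*g*h⁻¹)⁻¹ = (h*g)*y*(h*g)⁻¹ by group];
                 exact conj2 hcen hpow h g y),
      mul_assoc, mul_assoc]
  have e := way1.symm.trans way2
  rw [mul_assoc] at e
  have e2 := mul_left_cancel e
  rw [← mul_assoc, ← mul_assoc] at e2
  exact mul_right_cancel e2

include hpow in
lemma comm_gen (g h a b : G) :
    tElem a b * tElem g h = tElem g h * tElem a b := by
  have := comm_core hcen hpow g h ((g*h)⁻¹*a*(g*h)) ((g*h)⁻¹*b*(g*h))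
  rwa [show (g*h)*((g*h)⁻¹*a*(g*h))*(g*h)⁻¹ = a by group,
       show (g*h)*((g*h)⁻¹*b*(g*h))*(g*h)⁻¹ = b by group] at this

include hpow in
lemma comm_all (s t : TensorSquare G) : s * t = t * s := by
  have gen : ∀ u : TensorSquare G,
      u ∈ Subgroup.closure (Set.range fun q : G × G => tElem q.1 q.2) := by
    intro u
    obtain ⟨w, rfl⟩ := QuotientGroup.mk_surjective u
    induction w using FreeGroup.induction_on with
    | C1 => exact one_mem _
    | of q => exact Subgroup.subset_closure ⟨q, rfl⟩
    | inv_of q ih => rw [QuotientGroup.mk_inv]; exact inv_mem ih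
    | mul w1 w2 ih1 ih2 => rw [QuotientGroup.mk_mul]; exact mul_mem ih1 ih2
  have key : ∀ u ∈ Subgroup.closure (Set.range fun q : G × G => tElem q.1 q.2),
      ∀ v ∈ Subgroup.closure (Set.range fun q : G × G => tElem q.1 q.2), u * v = v * u := by
    intro u hu v hv
    induction hu, hv using Subgroup.closure_induction₂ with
    | mem a b ha hb =>
        obtain ⟨qa, rfl⟩ := ha; obtain ⟨qb, rfl⟩ := hb
        exact comm_gen hcen hpow qb.1 qb.2 qa.1 qa.2
    | one_left b hb => simp
    | one_right a ha => simp
    | mul_left a b z _ _ _ h1 h2 =>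
        rw [mul_assoc, h2, ← mul_assoc, h1, mul_assoc]
    | mul_right a b z _ _ _ h1 h2 =>
        rw [← mul_assoc, h1, mul_assoc, h2, ← mul_assoc]
    | inv_left a b _ _ h1 => exact Commute.inv_left h1
    | inv_right a b _ _ h1 => exact Commute.inv_right h1
  exact key s (gen s) t (gen t)

include hpow in
lemma commGroupTS : ∀ x y : TensorSquare G, x * y = y * x := comm_all hcen hpow

omit hcen hpow

private lemma abel1' {V : Type*} [AddCommGroup V] {A B C : V}
    (h : B + C + A = A + (-C) + B + C) : C = 0 := by
  have h2 : C - 0 = (B + C + A) - (A + (-C) + B + C) := by abel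
  rw [h] at h2
  simpa using h2

private lemma abel1 {V : Type*} [CommGroup V] (A B C : V)
    (h : B * C * A = A * C⁻¹ * B * C) : C = 1 :=
  abel1' (V := Additive V) (A := Additive.ofMul A) (B := Additive.ofMul B)
    (C := Additive.ofMul C) h

lemma tcongr {a a' b b' : G} (h1 : a = a') (h2 : b = b') : tElem a b = tElem a' b' := by
  rw [h1, h2]

include hcen hpow

variable {a b : G} (hab : a * b * a⁻¹ * b⁻¹ = c)

include hab in
lemma tLemA (y : G) (hy : ∀ w : G, y * w = w * y) : tElem c y = 1 := by
  letI : CommGroup (TensorSquare G) :=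
    { (inferInstance : Group (TensorSquare G)) with mul_comm := commGroupTS hcen hpow }
  have e1 : tElem (a*b) y = tElem b y * tElem c y * tElem a y := by
    rw [rel1 a b y, tcongr (show a*b*a⁻¹ = c^(1:ℤ)*b by rw [zpow_one, ← hab]; group)
          (show a*y*a⁻¹ = y by rw [← hy a]; group),
        tA hcen 1 b y, zpow_one]
  have e2 : tElem (a*b) y = tElem a y * (tElem c y)⁻¹ * tElem b y * tElem c y := by
    have hab2 : a*b = c^(1:ℤ)*(b*a) := by rw [zpow_one, ← hab]; group
    rw [hab2, tA hcen 1 (b*a) y, rel1 b a y,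
        tcongr (show b*a*b⁻¹ = c^(-1:ℤ)*a by rw [← hab]; group)
          (show b*y*b⁻¹ = y by rw [← hy b]; group),
        tA hcen (-1) a y, tAzpow hcen (-1) y, zpow_one, zpow_neg_one]
  exact abel1 (tElem a y) (tElem b y) (tElem c y) (e1.symm.trans e2)

omit hcen hpow in
private lemma abel2' {V : Type*} [AddCommGroup V] {A B C Ab Ba : V}
    (h : Ba + B + C + A = Ab + A + (-C) + B + C) : C = Ab + (-Ba) := by
  have h2 : C - (Ab + (-Ba)) = (Ba + B + C + A) - (Ab + A + (-C) + B + C) := by abel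
  rw [h] at h2
  exact sub_eq_zero.mp (by simpa using h2)

omit hcen hpow in
private lemma abel2 {V : Type*} [CommGroup V] (A B C Ab Ba : V)
    (h : Ba * B * C * A = Ab * A * C⁻¹ * B * C) : C = Ab * Ba⁻¹ :=
  abel2' (V := Additive V) (A := Additive.ofMul A) (B := Additive.ofMul B)
    (C := Additive.ofMul C) (Ab := Additive.ofMul Ab) (Ba := Additive.ofMul Ba) h

omit hcen hpow in
private lemma abel3' {V : Type*} [AddCommGroup V] {A B C D E : V}
    (h : A + (C + B + D) = C + (B + (-C + A + E))) : C = E + (-D) := by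
  have h2 : C - (E + (-D)) = (A + (C + B + D)) - (C + (B + (-C + A + E))) := by abel
  rw [h] at h2
  exact sub_eq_zero.mp (by simpa using h2)

omit hcen hpow in
private lemma abel3 {V : Type*} [CommGroup V] (A B C D E : V)
    (h : A * (C * B * D) = C * (B * (C⁻¹ * A * E))) : C = E * D⁻¹ :=
  abel3' (V := Additive V) (A := Additive.ofMul A) (B := Additive.ofMul B)
    (C := Additive.ofMul C) (D := Additive.ofMul D) (E := Additive.ofMul E) h

include hab in
lemma tzz (i j : ℤ) : tElem (c ^ i) (c ^ j) = 1 := by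
  rw [tAzpow hcen i, tLemA hcen hpow hab (c ^ j) (fun w => zcen hcen j w), one_zpow]

include hab in
lemma tcy (y : G) :
    tElem c y ∈ Subgroup.closure {tElem a c, tElem b c} := by
  letI : CommGroup (TensorSquare G) :=
    { (inferInstance : Group (TensorSquare G)) with mul_comm := commGroupTS hcen hpow }
  obtain ⟨α, hα⟩ := hpow a y
  obtain ⟨β, hβ⟩ := hpow b y
  have hay : a*y*a⁻¹ = c^α * y := by rw [← hα]; group
  have hby : b*y*b⁻¹ = c^β * y := by rw [← hβ]; group
  have e1 : tElem (a*b) y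
      = tElem b (c^α) * tElem b y * tElem c y * tElem a y := by
    rw [rel1 a b y, tcongr (show a*b*a⁻¹ = c^(1:ℤ)*b by rw [zpow_one, ← hab]; group) hay,
        tA hcen 1 b (c^α * y), tB hcen α b y, tB hcen α (c^(1:ℤ)) y,
        tzz hcen hpow hab 1 α, one_mul, zpow_one]
  have e2 : tElem (a*b) y
      = tElem a (c^β) * tElem a y * (tElem c y)⁻¹ * tElem b y * tElem c y := by
    have hab2 : a*b = c^(1:ℤ)*(b*a) := by rw [zpow_one, ← hab]; group
    rw [hab2, tA hcen 1 (b*a) y, rel1 b a y,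
        tcongr (show b*a*b⁻¹ = c^(-1:ℤ)*a by rw [← hab]; group) hby,
        tA hcen (-1) a (c^β * y), tB hcen β a y, tB hcen β (c^(-1:ℤ)) y,
        tzz hcen hpow hab (-1) β, one_mul, tAzpow hcen (-1) y, zpow_one, zpow_neg_one]
  have key := abel2 (tElem a y) (tElem b y) (tElem c y) (tElem a (c^β)) (tElem b (c^α))
    (e1.symm.trans e2)
  rw [key, tBzpow hcen β a, tBzpow hcen α b]
  exact mul_mem (zpow_mem (Subgroup.subset_closure (by simp)) β)
    (inv_mem (zpow_mem (Subgroup.subset_closure (by simp)) α))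

include hab in
lemma tyc (y : G) :
    tElem y c ∈ Subgroup.closure {tElem a c, tElem b c} := by
  letI : CommGroup (TensorSquare G) :=
    { (inferInstance : Group (TensorSquare G)) with mul_comm := commGroupTS hcen hpow }
  obtain ⟨α, hα⟩ := hpow a y
  obtain ⟨β, hβ⟩ := hpow b y
  have hay : a*y*a⁻¹ = c^α * y := by rw [← hα]; group
  have hby : b*y*b⁻¹ = c^β * y := by rw [← hβ]; group
  have e1 : tElem y (a*b)
      = tElem y a * (tElem y c * tElem y b * tElem (c^α) b) := by
    rw [rel2 y a b, tcongr hay (show a*b*a⁻¹ = c^(1:ℤ)*b by rw [zpow_one, ← hab]; group),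
        tA hcen α y (c^(1:ℤ)*b), tB hcen 1 y b, tB hcen 1 (c^α) b,
        tzz hcen hpow hab α 1, one_mul, zpow_one]
  have e2 : tElem y (a*b)
      = tElem y c * (tElem y b * ((tElem y c)⁻¹ * tElem y a * tElem (c^β) a)) := by
    have hab2 : a*b = c^(1:ℤ)*(b*a) := by rw [zpow_one, ← hab]; group
    rw [hab2, tB hcen 1 y (b*a), rel2 y b a,
        tcongr hby (show b*a*b⁻¹ = c^(-1:ℤ)*a by rw [← hab]; group),
        tA hcen β y (c^(-1:ℤ)*a), tB hcen (-1) y a, tB hcen (-1) (c^β) a,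
        tzz hcen hpow hab β (-1), one_mul, tBzpow hcen (-1) y, zpow_one, zpow_neg_one]
  have key := abel3 (tElem y a) (tElem y b) (tElem y c) (tElem (c^α) b) (tElem (c^β) a)
    (e1.symm.trans e2)
  rw [key, tAzpow hcen β a, tAzpow hcen α b]
  exact mul_mem (zpow_mem (tcy hcen hpow hab a) β)
    (inv_mem (zpow_mem (tcy hcen hpow hab b) α))

include hab in
lemma mem1 (i : ℤ) (y : G) :
    tElem (c ^ i) y ∈ Subgroup.closure {tElem a c, tElem b c} := by
  rw [tAzpow hcen i]
  exact zpow_mem (tcy hcen hpow hab y) i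

include hab in
lemma mem2 (i : ℤ) (g : G) :
    tElem g (c ^ i) ∈ Subgroup.closure {tElem a c, tElem b c} := by
  rw [tBzpow hcen i]
  exact zpow_mem (tyc hcen hpow hab g) i

include hab in
lemma trel1' (g g' h : G) : ∃ i j : ℤ,
    tElem (g*g') h = tElem g' (c^j) * tElem g' h * tElem (c^i) h * tElem g h := by
  obtain ⟨i, hi⟩ := hpow g g'
  obtain ⟨j, hj⟩ := hpow g h
  refine ⟨i, j, ?_⟩
  rw [rel1 g g' h,
      tcongr (show g*g'*g⁻¹ = c^i * g' by rw [← hi]; group)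
             (show g*h*g⁻¹ = c^j * h by rw [← hj]; group),
      tA hcen i g' (c^j*h), tB hcen j g' h, tB hcen j (c^i) h,
      tzz hcen hpow hab i j, one_mul]

include hab in
lemma trel2' (g h h' : G) : ∃ i j : ℤ,
    tElem g (h*h') = tElem g h * (tElem g (c^j) * tElem g h' * tElem (c^i) h') := by
  obtain ⟨i, hi⟩ := hpow h g
  obtain ⟨j, hj⟩ := hpow h h'
  refine ⟨i, j, ?_⟩
  rw [rel2 g h h',
      tcongr (show h*g*h⁻¹ = c^i * g by rw [← hi]; group)
             (show h*h'*h⁻¹ = c^j * h' by rw [← hj]; group),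
      tA hcen i g (c^j*h'), tB hcen j g h', tB hcen j (c^i) h',
      tzz hcen hpow hab i j, one_mul]

end Class2

lemma central_of_card_prime {p n : ℕ} (hp : p.Prime) [Finite G] (hpn : Nat.card G = p ^ n)
    (N : Subgroup G) [N.Normal] (hN : Nat.card N = p) :
    ∀ z ∈ N, ∀ w : G, z * w = w * z := by
  haveI : Fact p.Prime := ⟨hp⟩
  have hG : IsPGroup p G := IsPGroup.of_card hpn
  have hC : IsPGroup p (ConjAct G) := hG.of_equiv ConjAct.toConjAct
  have hmod := hC.card_modEq_card_fixedPoints (α := N)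
  rw [hN] at hmod
  have h1 : (1 : N) ∈ MulAction.fixedPoints (ConjAct G) N := by
    intro g
    ext
    rw [ConjAct.Subgroup.val_conj_smul]
    simp
  have hpos : 0 < Nat.card (MulAction.fixedPoints (ConjAct G) N) :=
    Nat.card_pos_iff.mpr ⟨⟨⟨1, h1⟩⟩, Set.Finite.to_subtype (Set.toFinite _)⟩
  have hdvd : p ∣ Nat.card (MulAction.fixedPoints (ConjAct G) N) := by
    have h0 : (p : ℕ) ≡ 0 [MOD p] := (Nat.modEq_zero_iff_dvd).mpr dvd_rfl
    exact (Nat.modEq_zero_iff_dvd).mp ((hmod.symm.trans h0))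
  have hle : Nat.card (MulAction.fixedPoints (ConjAct G) N) ≤ p := by
    rw [← hN]
    exact Nat.card_le_card_of_injective _ Subtype.val_injective
  have hcardeq : Nat.card (MulAction.fixedPoints (ConjAct G) N) = p :=
    le_antisymm hle (Nat.le_of_dvd hpos hdvd)
  have huniv : MulAction.fixedPoints (ConjAct G) N = Set.univ := by
    apply Set.eq_of_subset_of_ncard_le (Set.subset_univ _)
    rw [Set.ncard_univ, ← Nat.card_coe_set_eq, hcardeq, hN]
  intro z hz w
  have hfix : (ConjAct.toConjAct w) • (⟨z, hz⟩ : N) = ⟨z, hz⟩ := by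
    have : (⟨z, hz⟩ : N) ∈ MulAction.fixedPoints (ConjAct G) N := by
      rw [huniv]; trivial
    exact this _
  have h2 : w * z * w⁻¹ = z := by
    have := congrArg Subtype.val hfix
    rw [ConjAct.Subgroup.val_conj_smul, ConjAct.smul_def, ConjAct.ofConjAct_toConjAct] at this
    exact this
  calc z * w = (w * z * w⁻¹) * w := by rw [h2]
    _ = w * z := by group

lemma gen_aux [Finite G] {p n : ℕ} (hp : p.Prime) (hcard : Nat.card G = p ^ n) :
    ∀ d : ℕ, ∀ H : Subgroup G, p ^ n ≤ Nat.card H * p ^ d →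
      ∃ s : Finset G, s.card ≤ d ∧ Subgroup.closure ↑s ⊔ H = ⊤ := by
  classical
  intro d
  induction d with
  | zero =>
      intro H hH
      refine ⟨∅, le_rfl, ?_⟩
      have h1 : Nat.card G ≤ Nat.card H := by simpa [hcard] using hH
      have h2 : H = ⊤ := Subgroup.eq_top_of_le_card _ h1
      simp [h2]
  | succ d ih =>
      intro H hH
      by_cases htop : H = ⊤
      · exact ⟨∅, by simp, by simp [htop]⟩
      · obtain ⟨x, hx⟩ : ∃ x : G, x ∉ H := by
          by_contra hcon; push_neg at hcon
          exact htop ((Subgroup.eq_top_iff' H).mpr hcon)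
        set H' := H ⊔ Subgroup.zpowers x with hH'
        have hle : H ≤ H' := le_sup_left
        have hdvd : Nat.card H ∣ Nat.card H' := Subgroup.card_dvd_of_le hle
        have hne : Nat.card H' ≠ Nat.card H := by
          intro he
          have heq : H = H' := Subgroup.eq_of_le_of_card_ge hle (le_of_eq he)
          apply hx
          rw [heq, hH']
          exact (le_sup_right : Subgroup.zpowers x ≤ H ⊔ Subgroup.zpowers x) (Subgroup.mem_zpowers x)
        have hdvd2 : Nat.card H' ∣ p ^ n := hcard ▸ Subgroup.card_subgroup_dvd_card H'
        obtain ⟨kk, hkkle, hkk⟩ := (Nat.dvd_prime_pow hp).mp hdvd2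
        obtain ⟨ll, hllle, hll⟩ := (Nat.dvd_prime_pow hp).mp (hdvd.trans hdvd2)
        have hlt : ll < kk := by
          by_contra hge
          push_neg at hge
          exact hne (Nat.dvd_antisymm (hkk ▸ hll ▸ pow_dvd_pow p hge) hdvd)
        have hkey : Nat.card H * p ≤ Nat.card H' := by
          rw [hkk, hll, ← pow_succ]
          exact pow_le_pow_right₀ hp.one_lt.le hlt
        obtain ⟨s, hs1, hs2⟩ := ih H' (by
          calc p ^ n ≤ Nat.card H * p ^ (d + 1) := hH
            _ = Nat.card H * p * p ^ d := by ring
            _ ≤ Nat.card H' * p ^ d := Nat.mul_le_mul_right _ hkey)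
        refine ⟨insert x s, (Finset.card_insert_le x s).trans (by omega), ?_⟩
        rw [eq_top_iff, ← hs2]
        apply sup_le
        · exact (Subgroup.closure_mono (Finset.coe_subset.mpr (Finset.subset_insert x s))).trans le_sup_left
        · apply sup_le
          · exact le_sup_right
          · exact (Subgroup.zpowers_le.mpr
              (Subgroup.subset_closure (Finset.mem_coe.mpr (Finset.mem_insert_self x s)))).trans
              le_sup_left

lemma gen_mem (t : TensorSquare G) :
    t ∈ Subgroup.closure (Set.range fun q : G × G => tElem q.1 q.2) := by
  obtain ⟨w, rfl⟩ := QuotientGroup.mk_surjective t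
  induction w using FreeGroup.induction_on with
  | C1 => exact one_mem _
  | of q => exact Subgroup.subset_closure ⟨q, rfl⟩
  | inv_of q ih => rw [QuotientGroup.mk_inv]; exact inv_mem ih
  | mul w1 w2 ih1 ih2 => rw [QuotientGroup.mk_mul]; exact mul_mem ih1 ih2

end TsAux


/-- If `G` is a nonabelian `p`-group of order `p ^ n` with `|G'| = p`, then
`|G ⊗ G| ≤ p ^ ((n-1)^2 + 2)`. -/
theorem card_tensorSquare_le (p n : ℕ) (hp : p.Prime)
    (G : Type) [Group G] [Finite G] (hcard : Nat.card G = p ^ n)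
    (hnab : ¬ ∀ a b : G, a * b = b * a) (hd : Nat.card (commutator G) = p) :
    Nat.card (TensorSquare G) ≤ p ^ ((n - 1) ^ 2 + 2) := by
  classical
  haveI : Fact p.Prime := ⟨hp⟩
  push_neg at hnab
  obtain ⟨a, b, hab0⟩ := hnab
  have hcomm_mem : ∀ x y : G, x*y*x⁻¹*y⁻¹ ∈ commutator G := by
    intro x y
    open commutatorElement in
    have h1 : ⁅x, y⁆ ∈ commutator G := by
      rw [commutator_def]
      exact Subgroup.commutator_mem_commutator (Subgroup.mem_top x) (Subgroup.mem_top y)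
    simpa [commutatorElement_def] using h1
  set c : G := a*b*a⁻¹*b⁻¹ with hc
  have hk_ne : c ≠ 1 := by
    intro h
    apply hab0
    have h2 : a*b = (a*b*a⁻¹*b⁻¹) * (b*a) := by group
    rw [← hc, h] at h2; simpa using h2
  have hk_mem : c ∈ commutator G := hcomm_mem a b
  have hzk : Subgroup.zpowers c = commutator G := by
    have hle : Subgroup.zpowers c ≤ commutator G := Subgroup.zpowers_le.mpr hk_mem
    have hdvd : Nat.card (Subgroup.zpowers c) ∣ p := hd ▸ Subgroup.card_dvd_of_le hle
    have h1 : Nat.card (Subgroup.zpowers c) ≠ 1 := by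
      rw [Nat.card_zpowers]
      exact fun h => hk_ne (orderOf_eq_one_iff.mp h)
    have hcz : Nat.card (Subgroup.zpowers c) = p :=
      (hp.eq_one_or_self_of_dvd _ hdvd).resolve_left h1
    exact Subgroup.eq_of_le_of_card_ge hle (le_of_eq (hd.trans hcz.symm))
  have hordc : orderOf c = p := by rw [← Nat.card_zpowers, hzk, hd]
  have hcen : ∀ w : G, c * w = w * c := fun w =>
    TsAux.central_of_card_prime hp hcard (commutator G) hd c hk_mem w
  have hpow : ∀ x y : G, ∃ i : ℤ, x*y*x⁻¹*y⁻¹ = c ^ i := by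
    intro x y
    have hm : x*y*x⁻¹*y⁻¹ ∈ Subgroup.zpowers c := hzk ▸ hcomm_mem x y
    obtain ⟨i, hi⟩ := Subgroup.mem_zpowers_iff.mp hm
    exact ⟨i, hi.symm⟩
  have hab : a*b*a⁻¹*b⁻¹ = c := rfl
  have hcp : c ^ p = 1 := by rw [← hordc]; exact pow_orderOf_eq_one c
  have hp2 : 2 ≤ p := hp.two_le
  have hn2 : 2 ≤ n := by
    by_contra hcon
    push_neg at hcon
    apply hab0
    interval_cases n
    · have h1 : Nat.card G = 1 := by simpa using hcard
      haveI := (Nat.card_eq_one_iff_unique.mp h1).1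
      exact Subsingleton.elim _ _
    · haveI : IsCyclic G := isCyclic_of_prime_card (by simpa using hcard)
      letI := IsCyclic.commGroup (α := G)
      exact mul_comm a b
  letI : CommGroup (TensorSquare G) :=
    { (inferInstance : Group (TensorSquare G)) with mul_comm := TsAux.commGroupTS hcen hpow }
  set u : TensorSquare G := tElem a c with hu
  set v : TensorSquare G := tElem b c with hv
  set N' : Subgroup (TensorSquare G) := Subgroup.closure {u, v} with hN'
  have hupow : ∀ x : G, (tElem x c) ^ p = 1 := by
    intro x
    have h1 : (tElem x c) ^ ((p : ℕ) : ℤ) = tElem x (c ^ ((p : ℕ) : ℤ)) :=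
      (TsAux.tBzpow hcen ((p : ℕ) : ℤ) x).symm
    rw [zpow_natCast, zpow_natCast, hcp, TsAux.t_one] at h1
    exact h1
  have hNle : Nat.card N' ≤ p ^ 2 := by
    set f : Fin p × Fin p → TensorSquare G := fun ij => u ^ (ij.1 : ℕ) * v ^ (ij.2 : ℕ) with hf
    have hsub : (N' : Set (TensorSquare G)) ⊆ Set.range f := by
      intro t ht
      have ht' : t ∈ Subgroup.closure ({u, v} : Set (TensorSquare G)) := ht
      clear ht
      induction ht' using Subgroup.closure_induction with
      | mem x hx =>
          rcases hx with rfl | hx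
          · exact ⟨(⟨1, by omega⟩, ⟨0, by omega⟩), by simp [hf]⟩
          · rw [Set.mem_singleton_iff] at hx
            subst hx
            exact ⟨(⟨0, by omega⟩, ⟨1, by omega⟩), by simp [hf]⟩
      | one => exact ⟨(⟨0, by omega⟩, ⟨0, by omega⟩), by simp [hf]⟩
      | mul x y hx hy ihx ihy =>
          obtain ⟨⟨i1, j1⟩, rfl⟩ := ihx
          obtain ⟨⟨i2, j2⟩, rfl⟩ := ihy
          refine ⟨(⟨((i1 : ℕ) + (i2 : ℕ)) % p, Nat.mod_lt _ hp.pos⟩,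
                  ⟨((j1 : ℕ) + (j2 : ℕ)) % p, Nat.mod_lt _ hp.pos⟩), ?_⟩
          show u ^ (((i1 : ℕ) + (i2 : ℕ)) % p) * v ^ (((j1 : ℕ) + (j2 : ℕ)) % p) = _
          rw [← pow_eq_pow_mod _ (hupow a), ← pow_eq_pow_mod _ (hupow b),
            pow_add, pow_add, mul_mul_mul_comm]
      | inv x hx ihx =>
          obtain ⟨⟨i1, j1⟩, rfl⟩ := ihx
          refine ⟨(⟨(p - (i1 : ℕ)) % p, Nat.mod_lt _ hp.pos⟩,
                  ⟨(p - (j1 : ℕ)) % p, Nat.mod_lt _ hp.pos⟩), ?_⟩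
          show u ^ ((p - (i1 : ℕ)) % p) * v ^ ((p - (j1 : ℕ)) % p) = _
          rw [← pow_eq_pow_mod _ (hupow a), ← pow_eq_pow_mod _ (hupow b)]
          have e1 : u ^ (p - (i1 : ℕ)) = (u ^ (i1 : ℕ))⁻¹ := by
            apply eq_inv_of_mul_eq_one_left
            rw [← pow_add, Nat.sub_add_cancel (le_of_lt i1.isLt), hupow a]
          have e2 : v ^ (p - (j1 : ℕ)) = (v ^ (j1 : ℕ))⁻¹ := by
            apply eq_inv_of_mul_eq_one_left
            rw [← pow_add, Nat.sub_add_cancel (le_of_lt j1.isLt), hupow b]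
          rw [e1, e2, mul_inv]
    have h1 : Nat.card N' ≤ Nat.card (Set.range f) :=
      Nat.card_mono (Set.finite_range f) hsub
    have h2 : Nat.card (Set.range f) ≤ Nat.card (Fin p × Fin p) :=
      Nat.card_le_card_of_surjective (Set.rangeFactorization f) Set.rangeFactorization_surjective
    have h3 : Nat.card (Fin p × Fin p) = p ^ 2 := by simp [Nat.card_prod, sq]
    omega
  set Z : Subgroup G := Subgroup.zpowers c with hZ
  haveI hZn : Z.Normal := by
    constructor
    intro m hm g
    obtain ⟨i, rfl⟩ := Subgroup.mem_zpowers_iff.mp hm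
    have h1 : g * c ^ i * g⁻¹ = c ^ i := by rw [← TsAux.zcen hcen i g]; group
    rw [h1]
    exact Subgroup.zpow_mem Z (Subgroup.mem_zpowers c) i
  have hZcard : Nat.card Z = p := by rw [hZ, Nat.card_zpowers, hordc]
  have hQZcard : Nat.card (G ⧸ Z) = p ^ (n - 1) := by
    have h1 := Subgroup.card_eq_card_quotient_mul_card_subgroup Z
    rw [hcard, hZcard] at h1
    apply Nat.eq_of_mul_eq_mul_right hp.pos
    rw [← h1, ← pow_succ]
    congr 1
    omega
  haveI hN'n : N'.Normal := inferInstance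
  set π : TensorSquare G →* TensorSquare G ⧸ N' := QuotientGroup.mk' N' with hπ
  have hπ1 : ∀ w ∈ N', π w = 1 := fun w hw => (QuotientGroup.eq_one_iff w).mpr hw
  have hmul2 : ∀ g h h' : G, π (tElem g (h*h')) = π (tElem g h) * π (tElem g h') := by
    intro g h h'
    obtain ⟨i, j, he⟩ := TsAux.trel2' hcen hpow hab g h h'
    rw [he, map_mul, map_mul, map_mul, hπ1 _ (TsAux.mem2 hcen hpow hab j g),
        hπ1 _ (TsAux.mem1 hcen hpow hab i h'), one_mul, mul_one]
  have hmul1 : ∀ g g' h : G, π (tElem (g*g') h) = π (tElem g h) * π (tElem g' h) := by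
    intro g g' h
    obtain ⟨i, j, he⟩ := TsAux.trel1' hcen hpow hab g g' h
    rw [he, map_mul, map_mul, map_mul, hπ1 _ (TsAux.mem2 hcen hpow hab j g'),
        hπ1 _ (TsAux.mem1 hcen hpow hab i h), one_mul, mul_one]
    exact mul_comm _ _
  obtain ⟨s, hscard, hstop⟩ := TsAux.gen_aux hp hcard (n - 1) Z (by
    calc p ^ n = p * p ^ (n - 1) := by rw [← pow_succ']; congr 1; omega
      _ ≤ Nat.card Z * p ^ (n - 1) := by rw [hZcard])
  set ψ : G → (G →* TensorSquare G ⧸ N') :=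
    fun x => MonoidHom.mk' (fun h => π (tElem x h)) (hmul2 x) with hψ
  have hψZ : ∀ x : G, ∀ z ∈ Z, ψ x z = 1 := by
    intro x z hz
    obtain ⟨i, rfl⟩ := Subgroup.mem_zpowers_iff.mp hz
    exact hπ1 _ (TsAux.mem2 hcen hpow hab i x)
  set ψq : G → (G ⧸ Z →* TensorSquare G ⧸ N') :=
    fun x => QuotientGroup.lift Z (ψ x) (hψZ x) with hψq
  set Ψ : (↥s → G ⧸ Z) →* (TensorSquare G ⧸ N') :=
    { toFun := fun f => ∏ x : ↥s, ψq x (f x)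
      map_one' := by simp
      map_mul' := by
        intro f g
        rw [← Finset.prod_mul_distrib]
        exact Finset.prod_congr rfl fun x _ => by rw [Pi.mul_apply, map_mul] } with hΨ
  have hΨapp : ∀ f : ↥s → G ⧸ Z, Ψ f = ∏ x : ↥s, ψq x (f x) := fun f => rfl
  have hsurj : Function.Surjective Ψ := by
    intro q
    have key : ∀ t : TensorSquare G, π t ∈ Ψ.range := by
      intro t
      refine Subgroup.closure_induction ?_ ?_ ?_ ?_ (TsAux.gen_mem t)
      · rintro x ⟨⟨g0, h0⟩, rfl⟩
        set φ : G →* TensorSquare G ⧸ N' :=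
          MonoidHom.mk' (fun g => π (tElem g h0)) (fun g g' => hmul1 g g' h0) with hφ
        have hK : Subgroup.closure (↑s : Set G) ⊔ Z ≤ Subgroup.comap φ Ψ.range := by
          apply sup_le
          · rw [Subgroup.closure_le]
            intro x hx
            refine Subgroup.mem_comap.mpr ⟨Pi.mulSingle (⟨x, hx⟩ : ↥s) ((QuotientGroup.mk h0 : G ⧸ Z)), ?_⟩
            rw [hΨapp, Fintype.prod_eq_single (⟨x, hx⟩ : ↥s)
              (fun y hy => by rw [Pi.mulSingle_eq_of_ne hy, map_one])]
            rw [Pi.mulSingle_eq_same]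
            rfl
          · intro z hz
            obtain ⟨i, rfl⟩ := Subgroup.mem_zpowers_iff.mp hz
            refine Subgroup.mem_comap.mpr ?_
            have h1 : φ (c ^ i) = 1 := hπ1 _ (TsAux.mem1 hcen hpow hab i h0)
            rw [h1]
            exact one_mem _
        have hmem : g0 ∈ Subgroup.closure (↑s : Set G) ⊔ Z := by rw [hstop]; trivial
        exact Subgroup.mem_comap.mp (hK hmem)
      · rw [map_one]; exact one_mem _
      · intro x y _ _ hx hy; rw [map_mul]; exact mul_mem hx hy
      · intro x _ hx; rw [map_inv]; exact inv_mem hx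
    obtain ⟨t, rfl⟩ := QuotientGroup.mk'_surjective N' q
    obtain ⟨f, hf⟩ := key t
    exact ⟨f, hf⟩
  have hQle : Nat.card (TensorSquare G ⧸ N') ≤ (p ^ (n - 1)) ^ s.card := by
    have h1 := Nat.card_le_card_of_surjective Ψ hsurj
    have h2 : Nat.card (↥s → G ⧸ Z) = (p ^ (n - 1)) ^ s.card := by
      rw [Nat.card_pi]
      simp [hQZcard, Finset.prod_const, Fintype.card_coe]
    omega
  have htot : Nat.card (TensorSquare G) =
      Nat.card (TensorSquare G ⧸ N') * Nat.card N' :=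
    Subgroup.card_eq_card_quotient_mul_card_subgroup N'
  calc Nat.card (TensorSquare G)
      = Nat.card (TensorSquare G ⧸ N') * Nat.card N' := htot
    _ ≤ (p ^ (n - 1)) ^ s.card * p ^ 2 := Nat.mul_le_mul hQle hNle
    _ ≤ (p ^ (n - 1)) ^ (n - 1) * p ^ 2 := by
        apply Nat.mul_le_mul_right
        exact Nat.pow_le_pow_right (Nat.one_le_iff_ne_zero.mpr (by positivity)) hscard
    _ = p ^ ((n - 1) ^ 2 + 2) := by rw [← pow_mul, ← pow_add, sq]
end
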